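/- arXiv:2206.06189 — 10 statements merged into one kernel-verified Lean document; each statement's English description precedes it below -/
import Mathlib

section
/- For every θ ∈ ℝ, ∫_ℝ e^{iθy} q(1,e^y) e^y dy = (c/α)·(Γ(α−iθ)·Γ(1+iθ)/Γ(α))·∫_{(0,∞)} u^{iθ} φ(du). -/
open MeasureTheory Set

lemma exp_image_univ : Real.exp '' univ = Ioi (0:ℝ) := by
  rw [image_univ, Real.range_exp]

lemma integral_comp_exp' (g : ℝ → ℂ) :
    ∫ x in Ioi (0:ℝ), g x = ∫ y : ℝ, Real.exp y • g (Real.exp y) := by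
  rw [← exp_image_univ,
    integral_image_eq_integral_abs_deriv_smul MeasurableSet.univ
      (fun x _ => (Real.hasDerivAt_exp x).hasDerivWithinAt)
      (Real.exp_injective.injOn) g,
    Measure.restrict_univ]
  congr 1; ext y; rw [abs_of_pos (Real.exp_pos y)]

lemma integrableOn_exp_comp_iff (g : ℝ → ℂ) :
    IntegrableOn g (Ioi (0:ℝ)) ↔ Integrable (fun y : ℝ => Real.exp y • g (Real.exp y)) := by
  rw [← exp_image_univ,
    integrableOn_image_iff_integrableOn_abs_deriv_smul MeasurableSet.univ
      (fun x _ => (Real.hasDerivAt_exp x).hasDerivWithinAt)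
      (Real.exp_injective.injOn) g]
  unfold IntegrableOn
  rw [Measure.restrict_univ]
  constructor <;> intro h <;> [skip; skip] <;>
  · apply h.congr; filter_upwards with y; rw [abs_of_pos (Real.exp_pos y)]

lemma cpow_pos_eq_exp {r : ℝ} (hr : 0 < r) (w : ℂ) :
    (r : ℂ) ^ w = Complex.exp (w * (Real.log r : ℂ)) := by
  rw [Complex.cpow_def_of_ne_zero (by exact_mod_cast hr.ne'), Complex.ofReal_log hr.le, mul_comm]

lemma frac_image : (fun u : ℝ => u / (1 + u)) '' Ioi 0 = Ioo (0:ℝ) 1 := by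
  ext x
  constructor
  · rintro ⟨u, hu, rfl⟩
    have hu' : (0:ℝ) < u := hu
    have h1 : (0:ℝ) < 1 + u := by linarith
    exact ⟨by positivity, by rw [div_lt_one h1]; linarith⟩
  · rintro ⟨hx0, hx1⟩
    have h1 : (0:ℝ) < 1 - x := by linarith
    refine ⟨x / (1 - x), div_pos hx0 h1, ?_⟩
    field_simp
    ring

lemma frac_injOn : InjOn (fun u : ℝ => u / (1 + u)) (Ioi 0) := by
  intro u hu v hv h
  have hu' : (0:ℝ) < 1 + u := by simp at hu; linarith
  have hv' : (0:ℝ) < 1 + v := by simp at hv; linarith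
  field_simp at h
  linarith

lemma frac_deriv {u : ℝ} (hu : u ∈ Ioi (0:ℝ)) :
    HasDerivWithinAt (fun u : ℝ => u / (1 + u)) (((1+u)^2)⁻¹) (Ioi 0) u := by
  have h1 : (0:ℝ) < 1 + u := by simp at hu; linarith
  have := ((hasDerivAt_id u).div ((hasDerivAt_id u).const_add 1) h1.ne').hasDerivWithinAt
    (s := Ioi 0)
  convert this using 1
  · rfl
  · rfl
  · rfl
  simp only [id]
  ring

lemma beta_Ioi (α : ℝ) (hα : 0 < α) (z : ℂ) (hz : z.re = 0) :
    ∫ u in Ioi (0:ℝ), Complex.exp (z * (Real.log u : ℂ)) * (((1+u) ^ (-1-α) : ℝ) : ℂ)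
      = Complex.Gamma (1+z) * Complex.Gamma ((α:ℂ) - z) / Complex.Gamma ((α:ℂ)+1) := by
  have h1re : 0 < (1+z).re := by simp [hz]
  have h2re : 0 < ((α:ℂ)-z).re := by simp [hz, hα]
  have hB := Complex.Gamma_mul_Gamma_eq_betaIntegral h1re h2re
  have hsum : 1 + z + ((α:ℂ) - z) = (α:ℂ) + 1 := by ring
  rw [hsum] at hB
  have key : Complex.betaIntegral (1+z) ((α:ℂ)-z)
      = ∫ u in Ioi (0:ℝ), Complex.exp (z * (Real.log u : ℂ)) * (((1+u) ^ (-1-α) : ℝ) : ℂ) := by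
    rw [Complex.betaIntegral, intervalIntegral.integral_of_le zero_le_one,
      integral_Ioc_eq_integral_Ioo, ← frac_image,
      integral_image_eq_integral_abs_deriv_smul measurableSet_Ioi (fun u hu => frac_deriv hu)
        frac_injOn]
    refine setIntegral_congr_fun measurableSet_Ioi (fun u hu => ?_)
    have hu : (0:ℝ) < u := hu
    have h1 : (0:ℝ) < 1 + u := by linarith
    have hw : (0:ℝ) < u / (1+u) := div_pos hu h1
    have hC : (1 + (u:ℂ)) ≠ 0 := by
      have := h1.ne'
      exact_mod_cast this
    have h1w : (1 : ℂ) - ((u/(1+u) : ℝ) : ℂ) = (((1+u)⁻¹ : ℝ) : ℂ) := by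
      push_cast
      field_simp
      ring
    rw [add_sub_cancel_left, cpow_pos_eq_exp hw, h1w, cpow_pos_eq_exp (inv_pos.2 h1),
      Real.log_div hu.ne' h1.ne', Real.log_inv]
    have hpre : |((1+u)^2)⁻¹| = Real.exp (-(2 * Real.log (1+u))) := by
      rw [abs_of_pos (by positivity), Real.exp_neg,
        show (2:ℝ) * Real.log (1+u) = Real.log ((1+u)^2) by rw [Real.log_pow]; push_cast; ring,
        Real.exp_log (by positivity)]
    have hrpow : ((1+u) : ℝ) ^ (-1-α) = Real.exp (Real.log (1+u) * (-1-α)) :=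
      Real.rpow_def_of_pos h1 _
    rw [hpre, hrpow, Complex.real_smul, Complex.ofReal_exp, Complex.ofReal_exp,
      ← Complex.exp_add, ← Complex.exp_add, ← Complex.exp_add]
    congr 1
    push_cast
    ring
  rw [key] at hB
  have hne : Complex.Gamma ((α:ℂ)+1) ≠ 0 :=
    Complex.Gamma_ne_zero_of_re_pos (by simp; linarith)
  rw [eq_div_iff hne]
  rw [hB]
  ring

lemma rpow_one_add_integrable (α : ℝ) (hα : 0 < α) :
    IntegrableOn (fun u : ℝ => (1+u) ^ (-1-α)) (Ioi (0:ℝ)) := by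
  have h := integrableOn_Ioi_rpow_of_lt (a := -1-α) (by linarith) (c := 1) one_pos
  have himg : (fun x : ℝ => 1 + x) '' Ioi 0 = Ioi (1:ℝ) := by
    rw [image_const_add_Ioi, add_zero]
  rw [← himg, integrableOn_image_iff_integrableOn_abs_deriv_smul (f' := fun _ => (1:ℝ))
    measurableSet_Ioi
    (fun x _ => ((hasDerivAt_id' (𝕜 := ℝ) x).const_add 1).hasDerivWithinAt)
    (fun x _ y _ h => by simpa using h)] at h
  simpa using h

lemma norm_base (α : ℝ) {z : ℂ} (hz : z.re = 0) (u : ℝ) (hu : (0:ℝ) < u) :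
    ‖Complex.exp (z * (Real.log u : ℂ)) * (((1+u) ^ (-1-α) : ℝ) : ℂ)‖ = (1+u) ^ (-1-α) := by
  have h1 : (0:ℝ) < 1 + u := by linarith
  rw [norm_mul, Complex.norm_exp, Complex.norm_real, Real.norm_eq_abs,
    abs_of_nonneg (Real.rpow_nonneg h1.le _)]
  simp [Complex.mul_re, hz]

lemma base_integrable (α : ℝ) (hα : 0 < α) (z : ℂ) (hz : z.re = 0) :
    IntegrableOn (fun u : ℝ => Complex.exp (z * (Real.log u : ℂ)) * (((1+u) ^ (-1-α) : ℝ) : ℂ))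
      (Ioi (0:ℝ)) := by
  refine Integrable.mono' (rpow_one_add_integrable α hα) ?_ ?_
  · apply Measurable.aestronglyMeasurable
    exact (Complex.measurable_exp.comp (measurable_const.mul
      (Complex.measurable_ofReal.comp Real.measurable_log))).mul
      (Complex.measurable_ofReal.comp (by fun_prop))
  · filter_upwards [self_mem_ae_restrict (measurableSet_Ioi : MeasurableSet (Ioi (0:ℝ)))]
      with u hu
    rw [norm_base α hz u hu]

lemma inner_integral (α : ℝ) {t : ℝ} (ht : 0 < t) (z : ℂ) :
    ∫ y : ℝ, Complex.exp (z * (y:ℂ)) *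
        (((1 + Real.exp y / t) ^ (-1-α) / t * Real.exp y : ℝ) : ℂ)
      = Complex.exp (z * (Real.log t : ℂ)) *
        ∫ u in Ioi (0:ℝ), Complex.exp (z * (Real.log u : ℂ)) * (((1+u) ^ (-1-α) : ℝ) : ℂ) := by
  set g : ℝ → ℂ := fun x => Complex.exp (z * (Real.log x : ℂ)) * (((1 + x/t) ^ (-1-α) / t : ℝ) : ℂ)
    with hg
  have htC : (t:ℂ) ≠ 0 := by exact_mod_cast ht.ne'
  have stepA : (∫ y : ℝ, Complex.exp (z * (y:ℂ)) *
      (((1 + Real.exp y / t) ^ (-1-α) / t * Real.exp y : ℝ) : ℂ)) = ∫ x in Ioi (0:ℝ), g x := by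
    rw [integral_comp_exp' g]
    refine integral_congr_ae (Filter.Eventually.of_forall fun y => ?_)
    simp only [hg, Real.log_exp, Complex.real_smul, Complex.ofReal_mul]
    ring
  have stepB : (∫ x in Ioi (0:ℝ), g x) = t • ∫ u in Ioi (0:ℝ), g (t * u) := by
    rw [integral_comp_mul_left_Ioi g 0 ht, mul_zero, smul_smul, mul_inv_cancel₀ ht.ne', one_smul]
  have stepC : (∫ u in Ioi (0:ℝ), g (t * u))
      = (Complex.exp (z * (Real.log t : ℂ)) * ((t⁻¹ : ℝ) : ℂ)) *
        ∫ u in Ioi (0:ℝ), Complex.exp (z * (Real.log u : ℂ)) * (((1+u) ^ (-1-α) : ℝ) : ℂ) := by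
    rw [← integral_const_mul]
    refine setIntegral_congr_fun measurableSet_Ioi fun u hu => ?_
    have hu : (0:ℝ) < u := hu
    simp only [hg]
    rw [mul_div_cancel_left₀ _ ht.ne', Real.log_mul ht.ne' hu.ne', div_eq_mul_inv,
      Complex.ofReal_mul, Complex.ofReal_inv, Complex.ofReal_add, mul_add, Complex.exp_add]
    ring
  rw [stepA, stepB, stepC, Complex.real_smul, Complex.ofReal_inv]
  rw [← mul_assoc, ← mul_assoc]
  congr 1
  rw [mul_comm ((t:ℂ)) _, mul_assoc, mul_inv_cancel₀ htC, mul_one]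

lemma norm_exp_im {z : ℂ} (hz : z.re = 0) (r : ℝ) : ‖Complex.exp (z * (r:ℂ))‖ = 1 := by
  rw [Complex.norm_exp]
  simp [Complex.mul_re, hz]

lemma g_integrable (α : ℝ) (hα : 0 < α) {t : ℝ} (ht : 0 < t) {z : ℂ} (hz : z.re = 0) :
    IntegrableOn (fun x : ℝ => Complex.exp (z * (Real.log x : ℂ)) *
      (((1 + x/t) ^ (-1-α) / t : ℝ) : ℂ)) (Ioi (0:ℝ)) := by
  have hbound : IntegrableOn (fun x : ℝ => (1 + x/t) ^ (-1-α) / t) (Ioi (0:ℝ)) := by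
    have h := (integrableOn_Ioi_comp_mul_left_iff (fun u : ℝ => (1+u) ^ (-1-α)) 0
      (inv_pos.2 ht)).2
    rw [mul_zero] at h
    have h2 := (h (rpow_one_add_integrable α hα)).div_const t
    have : (fun x : ℝ => (1 + t⁻¹ * x) ^ (-1-α) / t) = fun x : ℝ => (1 + x/t) ^ (-1-α) / t := by
      funext x; rw [inv_mul_eq_div]
    rwa [this] at h2
  refine Integrable.mono' hbound ?_ ?_
  · apply Measurable.aestronglyMeasurable
    exact (Complex.measurable_exp.comp (measurable_const.mul
      (Complex.measurable_ofReal.comp Real.measurable_log))).mul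
      (Complex.measurable_ofReal.comp (by fun_prop))
  · filter_upwards [self_mem_ae_restrict (measurableSet_Ioi : MeasurableSet (Ioi (0:ℝ)))]
      with x hx
    have hx : (0:ℝ) < x := hx
    have h1 : (0:ℝ) < 1 + x/t := by
      have := div_pos hx ht; linarith
    rw [norm_mul, norm_exp_im hz, one_mul, Complex.norm_real, Real.norm_eq_abs,
      abs_of_nonneg (by positivity)]

lemma inner_integrable (α : ℝ) (hα : 0 < α) {t : ℝ} (ht : 0 < t) {z : ℂ} (hz : z.re = 0) :
    Integrable (fun y : ℝ => Complex.exp (z * (y:ℂ)) *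
      (((1 + Real.exp y / t) ^ (-1-α) / t * Real.exp y : ℝ) : ℂ)) := by
  have h := (integrableOn_exp_comp_iff
    (fun x : ℝ => Complex.exp (z * (Real.log x : ℂ)) * (((1 + x/t) ^ (-1-α) / t : ℝ) : ℂ))).mp
    (g_integrable α hα ht hz)
  refine h.congr (Filter.Eventually.of_forall fun y => ?_)
  simp only [Real.log_exp, Complex.real_smul, Complex.ofReal_mul]
  ring

lemma real_value (α : ℝ) {t : ℝ} (ht : 0 < t) :
    ∫ y : ℝ, (1 + Real.exp y / t) ^ (-1-α) / t * Real.exp y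
      = ∫ u in Ioi (0:ℝ), (1+u) ^ (-1-α) := by
  have h := inner_integral α ht 0
  simp only [zero_mul, Complex.exp_zero, one_mul] at h
  have e1 : (∫ y : ℝ, (((1 + Real.exp y / t) ^ (-1-α) / t * Real.exp y : ℝ) : ℂ))
      = ((∫ y : ℝ, (1 + Real.exp y / t) ^ (-1-α) / t * Real.exp y : ℝ) : ℂ) := integral_ofReal
  have e2 : (∫ u in Ioi (0:ℝ), (((1+u) ^ (-1-α) : ℝ) : ℂ))
      = ((∫ u in Ioi (0:ℝ), (1+u) ^ (-1-α) : ℝ) : ℂ) := integral_ofReal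
  rw [e1, e2] at h
  exact_mod_cast h

lemma norm_f (α : ℝ) {t : ℝ} (ht : 0 < t) {z : ℂ} (hz : z.re = 0) (y : ℝ) :
    ‖Complex.exp (z*(y:ℂ)) * (((1 + Real.exp y / t) ^ (-1-α) / t * Real.exp y : ℝ) : ℂ)‖
      = (1 + Real.exp y / t) ^ (-1-α) / t * Real.exp y := by
  have h1 : (0:ℝ) < 1 + Real.exp y / t := by
    have := div_pos (Real.exp_pos y) ht; linarith
  rw [norm_mul, norm_exp_im hz, one_mul, Complex.norm_real, Real.norm_eq_abs,
    abs_of_nonneg (by positivity)]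

lemma fubini_integrable (α : ℝ) (hα : 0 < α) (φ : Measure ℝ) [IsProbabilityMeasure φ]
    {z : ℂ} (hz : z.re = 0) :
    Integrable (Function.uncurry fun y t : ℝ => Complex.exp (z * (y:ℂ)) *
        (((1 + Real.exp y / t) ^ (-1-α) / t * Real.exp y : ℝ) : ℂ))
      (volume.prod (φ.restrict (Ioi 0))) := by
  have hmeas : Measurable (Function.uncurry fun y t : ℝ => Complex.exp (z * (y:ℂ)) *
      (((1 + Real.exp y / t) ^ (-1-α) / t * Real.exp y : ℝ) : ℂ)) := by
    apply Measurable.mul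
    · exact Complex.measurable_exp.comp (measurable_const.mul
        (Complex.measurable_ofReal.comp measurable_fst))
    · exact Complex.measurable_ofReal.comp (by fun_prop)
  refine ⟨hmeas.aestronglyMeasurable, ?_⟩
  rw [hasFiniteIntegral_iff_norm, lintegral_prod_symm _ hmeas.norm.ennreal_ofReal.aemeasurable]
  have key : ∀ t ∈ Ioi (0:ℝ),
      (∫⁻ y : ℝ, ENNReal.ofReal ‖Complex.exp (z * (y:ℂ)) *
        (((1 + Real.exp y / t) ^ (-1-α) / t * Real.exp y : ℝ) : ℂ)‖)
      = ENNReal.ofReal (∫ u in Ioi (0:ℝ), (1+u) ^ (-1-α)) := by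
    intro t ht
    have hint : Integrable (fun y : ℝ => (1 + Real.exp y / t) ^ (-1-α) / t * Real.exp y) := by
      refine ((inner_integrable α hα ht hz).norm).congr
        (Filter.Eventually.of_forall fun y => ?_)
      exact norm_f α ht hz y
    have hnn : 0 ≤ᵐ[volume] fun y : ℝ => (1 + Real.exp y / t) ^ (-1-α) / t * Real.exp y := by
      filter_upwards with y
      have ht' : (0:ℝ) < t := ht
      have h1 : (0:ℝ) < 1 + Real.exp y / t := by
        have := div_pos (Real.exp_pos y) ht'; linarith
      exact mul_nonneg (div_nonneg (Real.rpow_nonneg h1.le _) ht'.le) (Real.exp_pos y).le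
    calc (∫⁻ y : ℝ, ENNReal.ofReal ‖Complex.exp (z * (y:ℂ)) *
          (((1 + Real.exp y / t) ^ (-1-α) / t * Real.exp y : ℝ) : ℂ)‖)
        = ∫⁻ y : ℝ, ENNReal.ofReal ((1 + Real.exp y / t) ^ (-1-α) / t * Real.exp y) := by
          congr with y; rw [norm_f α ht hz y]
      _ = ENNReal.ofReal (∫ y : ℝ, (1 + Real.exp y / t) ^ (-1-α) / t * Real.exp y) :=
          (ofReal_integral_eq_lintegral_ofReal hint hnn).symm
      _ = ENNReal.ofReal (∫ u in Ioi (0:ℝ), (1+u) ^ (-1-α)) := by rw [real_value α ht]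
  simp only [Function.uncurry]
  rw [setLIntegral_congr_fun measurableSet_Ioi key, setLIntegral_const]
  exact ENNReal.mul_lt_top ENNReal.ofReal_lt_top (measure_lt_top φ _)

/-- Fourier transform of the Lévy density `π(y) = q(1, e^y) e^y`:
`∫_ℝ e^{iθy} q(1,e^y) e^y dy = (c/α) (Γ(α-iθ)Γ(1+iθ)/Γ(α)) ∫ u^{iθ} φ(du)`. -/
theorem fourier_transform_of_pi
    (α c : ℝ) (hα : α ∈ Set.Ioo (0 : ℝ) 2) (hc : 0 < c)
    (φ : Measure ℝ) [IsProbabilityMeasure φ] (hφ : φ (Set.Iic 0) = 0)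
    (q : ℝ → ℝ → ℝ)
    (hq : ∀ x y : ℝ, q x y = c * ∫ t in Set.Ioi (0 : ℝ), (x + y / t) ^ (-1 - α) / t ∂φ)
    (θ : ℝ) :
    ∫ y : ℝ, Complex.exp (Complex.I * (θ : ℂ) * (y : ℂ)) *
        Complex.ofReal (q 1 (Real.exp y) * Real.exp y)
      = ((c / α : ℝ) : ℂ) *
          (Complex.Gamma ((α : ℂ) - Complex.I * (θ : ℂ)) *
            Complex.Gamma (1 + Complex.I * (θ : ℂ)) / Complex.Gamma (α : ℂ)) *
          ∫ u in Set.Ioi (0 : ℝ), Complex.exp (Complex.I * (θ : ℂ) * (Real.log u : ℂ)) ∂φ := by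
  obtain ⟨hα0, -⟩ := hα
  set z : ℂ := Complex.I * (θ:ℂ) with hzdef
  have hz : z.re = 0 := by simp [hzdef]
  have hαC : ((α:ℂ)) ≠ 0 := by exact_mod_cast hα0.ne'
  have step1 : ∀ y : ℝ, Complex.exp (z * (y:ℂ)) *
      Complex.ofReal (q 1 (Real.exp y) * Real.exp y)
      = (c:ℂ) * ∫ t in Ioi (0:ℝ),
          Complex.exp (z * (y:ℂ)) *
            (((1 + Real.exp y / t) ^ (-1-α) / t * Real.exp y : ℝ) : ℂ) ∂φ := by
    intro y
    have hsplit : (∫ t in Ioi (0:ℝ),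
        Complex.exp (z * (y:ℂ)) *
          (((1 + Real.exp y / t) ^ (-1-α) / t * Real.exp y : ℝ) : ℂ) ∂φ)
        = (Complex.exp (z*(y:ℂ)) * ((Real.exp y : ℝ):ℂ)) *
          ∫ t in Ioi (0:ℝ), (((1 + Real.exp y / t) ^ (-1-α) / t : ℝ):ℂ) ∂φ := by
      rw [← integral_const_mul]
      refine setIntegral_congr_fun measurableSet_Ioi fun t ht => ?_
      rw [Complex.ofReal_mul]
      ring
    have eOf : (∫ t in Ioi (0:ℝ), (((1 + Real.exp y / t) ^ (-1-α) / t : ℝ):ℂ) ∂φ)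
        = ((∫ t in Ioi (0:ℝ), (1 + Real.exp y / t) ^ (-1-α) / t ∂φ : ℝ):ℂ) := integral_ofReal
    rw [hq 1 (Real.exp y), hsplit, eOf]
    have h1 : ∀ t : ℝ, (1:ℝ) + Real.exp y / t = 1 + Real.exp y / t := fun _ => rfl
    push_cast
    ring
  calc (∫ y : ℝ, Complex.exp (z * (y:ℂ)) * Complex.ofReal (q 1 (Real.exp y) * Real.exp y))
      = ∫ y : ℝ, (c:ℂ) * ∫ t in Ioi (0:ℝ),
          Complex.exp (z * (y:ℂ)) *
            (((1 + Real.exp y / t) ^ (-1-α) / t * Real.exp y : ℝ) : ℂ) ∂φ :=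
        integral_congr_ae (Filter.Eventually.of_forall step1)
    _ = (c:ℂ) * ∫ y : ℝ, ∫ t in Ioi (0:ℝ),
          Complex.exp (z * (y:ℂ)) *
            (((1 + Real.exp y / t) ^ (-1-α) / t * Real.exp y : ℝ) : ℂ) ∂φ :=
        integral_const_mul _ _
    _ = (c:ℂ) * ∫ t in Ioi (0:ℝ), (∫ y : ℝ,
          Complex.exp (z * (y:ℂ)) *
            (((1 + Real.exp y / t) ^ (-1-α) / t * Real.exp y : ℝ) : ℂ)) ∂φ := by
        rw [integral_integral_swap (fubini_integrable α hα0 φ hz)]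
    _ = (c:ℂ) * ∫ t in Ioi (0:ℝ), Complex.exp (z * (Real.log t : ℂ)) *
          (∫ u in Ioi (0:ℝ), Complex.exp (z * (Real.log u : ℂ)) *
            (((1+u) ^ (-1-α) : ℝ) : ℂ)) ∂φ := by
        refine congrArg _ (setIntegral_congr_fun measurableSet_Ioi fun t ht => ?_)
        exact inner_integral α ht z
    _ = (c:ℂ) * ((∫ t in Ioi (0:ℝ), Complex.exp (z * (Real.log t : ℂ)) ∂φ) *
          (∫ u in Ioi (0:ℝ), Complex.exp (z * (Real.log u : ℂ)) *
            (((1+u) ^ (-1-α) : ℝ) : ℂ))) := by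
        rw [integral_mul_const]
    _ = ((c / α : ℝ) : ℂ) *
          (Complex.Gamma ((α : ℂ) - z) * Complex.Gamma (1 + z) / Complex.Gamma (α : ℂ)) *
          ∫ u in Set.Ioi (0 : ℝ), Complex.exp (z * (Real.log u : ℂ)) ∂φ := by
        rw [beta_Ioi α hα0 z hz, Complex.Gamma_add_one _ hαC]
        have hΓ : Complex.Gamma (α:ℂ) ≠ 0 :=
          Complex.Gamma_ne_zero_of_re_pos (by simpa using hα0)
        push_cast
        field_simp
end

section
/- Suppose φ has density φ_{β,γ}(t) = (Γ(γ)/(Γ(β)Γ(γ−β)))·t^{β−1}(1+t)^{−γ} with respect to Lebesgue measure on (0,∞), where 0 < β < γ. Then for every θ ∈ ℝ, ∫_ℝ e^{iθy} q(1,e^y) e^y dy = (c/α)·(Γ(α−iθ)Γ(1+iθ)/Γ(α))·(Γ(β+iθ)Γ(γ−β−iθ)/(Γ(β)Γ(γ−β))). -/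
open MeasureTheory Set
open scoped ENNReal NNReal


lemma aux_integrableOn_rpow_mul {p q : ℝ} (hp : -1 < p) (hpq : p + q < -1) :
    IntegrableOn (fun s : ℝ => s ^ p * (1 + s) ^ q) (Ioi (0:ℝ)) := by
  have hmeas : Measurable fun s : ℝ => s ^ p * (1 + s) ^ q := by fun_prop
  set C : ℝ := max 1 (2 ^ q) with hC
  have hC1 : (1:ℝ) ≤ C := le_max_left _ _
  have hC0 : (0:ℝ) ≤ C := le_trans zero_le_one hC1
  have h1 : IntegrableOn (fun s : ℝ => s ^ p * (1 + s) ^ q) (Ioc (0:ℝ) 1) := by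
    have hg : IntegrableOn (fun s : ℝ => C * s ^ p) (Ioc (0:ℝ) 1) :=
      ((intervalIntegral.intervalIntegrable_rpow' hp (a := 0) (b := 1)).1).const_mul C
    refine Integrable.mono' hg (hmeas.aestronglyMeasurable) ?_
    rw [ae_restrict_iff' measurableSet_Ioc]
    filter_upwards with s hs
    have hs0 : 0 < s := hs.1
    have hb : (1 + s) ^ q ≤ C := by
      rcases le_or_gt 0 q with hq | hq
      · refine le_trans (Real.rpow_le_rpow (by linarith) (by linarith [hs.2]) hq) (le_max_right _ _)
      · exact le_trans (Real.rpow_le_one_of_one_le_of_nonpos (by linarith) hq.le) hC1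
    rw [Real.norm_eq_abs, abs_of_nonneg (by positivity)]
    calc s ^ p * (1 + s) ^ q ≤ s ^ p * C :=
          mul_le_mul_of_nonneg_left hb (Real.rpow_nonneg hs0.le p)
      _ = C * s ^ p := mul_comm _ _
  have h2 : IntegrableOn (fun s : ℝ => s ^ p * (1 + s) ^ q) (Ioi (1:ℝ)) := by
    have hg : IntegrableOn (fun s : ℝ => C * s ^ (p + q)) (Ioi (1:ℝ)) :=
      (integrableOn_Ioi_rpow_of_lt hpq one_pos).const_mul C
    refine Integrable.mono' hg (hmeas.aestronglyMeasurable) ?_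
    rw [ae_restrict_iff' measurableSet_Ioi]
    filter_upwards with s hs
    have hs0 : (0:ℝ) < s := lt_trans one_pos hs
    have hb : (1 + s) ^ q ≤ C * s ^ q := by
      rcases le_or_gt 0 q with hq | hq
      · calc (1 + s) ^ q ≤ (2 * s) ^ q :=
              Real.rpow_le_rpow (by linarith) (by linarith) hq
          _ = 2 ^ q * s ^ q := Real.mul_rpow (by norm_num) hs0.le
          _ ≤ C * s ^ q :=
              mul_le_mul_of_nonneg_right (le_max_right _ _) (Real.rpow_nonneg hs0.le q)
      · calc (1 + s) ^ q ≤ s ^ q := Real.rpow_le_rpow_of_nonpos hs0 (by linarith) hq.le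
          _ = 1 * s ^ q := (one_mul _).symm
          _ ≤ C * s ^ q :=
              mul_le_mul_of_nonneg_right hC1 (Real.rpow_nonneg hs0.le q)
    rw [Real.norm_eq_abs, abs_of_nonneg (by positivity)]
    calc s ^ p * (1 + s) ^ q ≤ s ^ p * (C * s ^ q) :=
          mul_le_mul_of_nonneg_left hb (Real.rpow_nonneg hs0.le p)
      _ = C * (s ^ p * s ^ q) := by ring
      _ = C * s ^ (p + q) := by rw [← Real.rpow_add hs0]
  have := h1.union h2
  rwa [Ioc_union_Ioi_eq_Ioi zero_le_one] at this

section subst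
variable {E : Type*} [NormedAddCommGroup E] [NormedSpace ℝ E]

lemma aux_integral_comp_exp (g : ℝ → E) :
    ∫ x in Ioi (0:ℝ), g x = ∫ y : ℝ, Real.exp y • g (Real.exp y) := by
  have h := integral_image_eq_integral_abs_deriv_smul MeasurableSet.univ
      (fun x _ => (Real.hasDerivAt_exp x).hasDerivWithinAt) Real.exp_injective.injOn g
  rw [Set.image_univ, Real.range_exp] at h
  rw [h, Measure.restrict_univ]
  congr 1
  ext y
  rw [abs_of_pos (Real.exp_pos y)]

lemma aux_integrable_comp_exp (g : ℝ → E) :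
    IntegrableOn g (Ioi (0:ℝ)) ↔ Integrable (fun y => Real.exp y • g (Real.exp y)) := by
  have h := integrableOn_image_iff_integrableOn_abs_deriv_smul MeasurableSet.univ
      (fun x _ => (Real.hasDerivAt_exp x).hasDerivWithinAt) Real.exp_injective.injOn g
  rw [Set.image_univ, Real.range_exp] at h
  rw [h]
  simp only [IntegrableOn, Measure.restrict_univ, Real.abs_exp]

lemma aux_integral_comp_mul (g : ℝ → E) {t : ℝ} (ht : 0 < t) :
    ∫ x in Ioi (0:ℝ), g x = t • ∫ s in Ioi (0:ℝ), g (t * s) := by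
  rw [integral_comp_mul_left_Ioi g 0 ht, mul_zero, smul_smul,
    mul_inv_cancel₀ ht.ne', one_smul]

lemma aux_integrable_comp_mul (g : ℝ → E) {t : ℝ} (ht : 0 < t) :
    IntegrableOn g (Ioi (0:ℝ)) ↔ IntegrableOn (fun s => g (t * s)) (Ioi (0:ℝ)) := by
  have h := integrableOn_image_iff_integrableOn_abs_deriv_smul (f := fun s => t * s)
      (f' := fun _ => t) measurableSet_Ioi
      (fun x _ => by simpa using ((hasDerivAt_id x).const_mul t).hasDerivWithinAt (s := Ioi 0))
      (fun a _ b _ hab => mul_left_cancel₀ ht.ne' hab) g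
  rw [image_const_mul_Ioi_zero ht] at h
  rw [h, show (fun x => |(fun _ : ℝ => t) x| • g (t * x)) = |t| • (fun x => g (t * x)) from rfl]
  exact integrable_smul_iff (abs_ne_zero.mpr ht.ne') _
end subst

lemma aux_betaIoi {u v : ℂ} (hu : 0 < u.re) (hv : 0 < v.re) :
    ∫ s in Ioi (0:ℝ), (s:ℂ) ^ (u - 1) * ((1 + s : ℝ):ℂ) ^ (-(u + v))
      = Complex.Gamma u * Complex.Gamma v / Complex.Gamma (u + v) := by
  have himg : (fun s : ℝ => s / (1 + s)) '' Ioi 0 = Ioo (0:ℝ) 1 := by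
    ext x
    constructor
    · rintro ⟨s, hs, rfl⟩
      have hs' : (0:ℝ) < s := hs
      have h1 : (0:ℝ) < 1 + s := by linarith
      exact ⟨div_pos hs' h1, by rw [div_lt_one h1]; linarith⟩
    · rintro ⟨hx0, hx1⟩
      refine ⟨x / (1 - x), div_pos hx0 (by linarith), ?_⟩
      have h1 : (1:ℝ) - x ≠ 0 := by linarith
      field_simp
      ring
  have hderiv : ∀ s ∈ Ioi (0:ℝ), HasDerivWithinAt (fun s : ℝ => s / (1 + s))
      (((1 + s) ^ 2)⁻¹) (Ioi 0) s := by
    intro s hs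
    have hs' : (0:ℝ) < s := hs
    have h1 : (1:ℝ) + s ≠ 0 := by positivity
    have h := ((hasDerivAt_id s).div ((hasDerivAt_id s).const_add 1) h1)
    convert h.hasDerivWithinAt using 1
    · rfl
    · rfl
    · rfl
    · simp only [id]; ring
  have hinj : InjOn (fun s : ℝ => s / (1 + s)) (Ioi 0) := by
    intro a ha b hb hab
    have ha' : (0:ℝ) < a := ha
    have hb' : (0:ℝ) < b := hb
    have h1 : (1:ℝ) + a ≠ 0 := by positivity
    have h2 : (1:ℝ) + b ≠ 0 := by positivity
    field_simp at hab
    linarith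
  have key := integral_image_eq_integral_abs_deriv_smul measurableSet_Ioi hderiv hinj
      (fun x : ℝ => (x:ℂ) ^ (u - 1) * ((1 - x : ℝ):ℂ) ^ (v - 1))
  rw [himg] at key
  have hbeta : Complex.betaIntegral u v
      = ∫ x in Ioo (0:ℝ) 1, (x:ℂ) ^ (u-1) * ((1 - x:ℝ):ℂ) ^ (v-1) := by
    rw [Complex.betaIntegral, intervalIntegral.integral_of_le zero_le_one,
      MeasureTheory.integral_Ioc_eq_integral_Ioo]
    congr 1
    ext x
    push_cast
    ring_nf
  have hpt : ∀ s ∈ Ioi (0:ℝ),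
      |((1 + s) ^ 2)⁻¹| • ((((s / (1 + s)):ℝ):ℂ) ^ (u - 1) *
        ((1 - s / (1 + s) : ℝ):ℂ) ^ (v - 1))
      = (s:ℂ) ^ (u - 1) * ((1 + s : ℝ):ℂ) ^ (-(u + v)) := by
    intro s hs
    have hs' : (0:ℝ) < s := hs
    have hw : (0:ℝ) < 1 + s := by linarith
    have hwC : ((1 + s : ℝ):ℂ) ≠ 0 := by
      simp only [ne_eq, Complex.ofReal_eq_zero]
      positivity
    have harg : ((1 + s : ℝ):ℂ).arg ≠ Real.pi := by
      rw [Complex.arg_ofReal_of_nonneg hw.le]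
      exact (Real.pi_ne_zero).symm
    have hinvpow : ∀ w : ℂ, ((((1 + s)⁻¹ : ℝ)):ℂ) ^ w = ((1 + s : ℝ):ℂ) ^ (-w) := by
      intro w
      rw [Complex.ofReal_inv, Complex.inv_cpow _ _ harg, ← Complex.cpow_neg]
    have h2 : ((1:ℝ) - s / (1 + s)) = (1 + s)⁻¹ := by field_simp; ring
    have h3 : (s / (1 + s) : ℝ) = s * (1 + s)⁻¹ := div_eq_mul_inv _ _
    rw [h2, h3, Complex.ofReal_mul, Complex.mul_cpow_ofReal_nonneg hs'.le (by positivity), hinvpow, hinvpow]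
    have habs : |((1 + s) ^ 2)⁻¹| = ((1 + s) ^ 2)⁻¹ := abs_of_pos (by positivity)
    rw [habs]
    have hsmul : (((1 + s) ^ 2)⁻¹ : ℝ) • ((s:ℂ) ^ (u - 1) * ((1 + s : ℝ):ℂ) ^ (-(u-1)) *
          ((1 + s : ℝ):ℂ) ^ (-(v-1)))
        = ((((1 + s) ^ 2)⁻¹ : ℝ) : ℂ) * ((s:ℂ) ^ (u - 1) * ((1 + s : ℝ):ℂ) ^ (-(u-1)) *
          ((1 + s : ℝ):ℂ) ^ (-(v-1))) := by
      rw [Complex.real_smul]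
    rw [hsmul]
    have hw2 : ((((1 + s) ^ 2)⁻¹ : ℝ) : ℂ) = ((1 + s : ℝ):ℂ) ^ (-(2:ℂ)) := by
      push_cast
      rw [Complex.cpow_neg, show ((2:ℂ)) = ((2:ℕ):ℂ) by norm_num, Complex.cpow_natCast]
    rw [hw2, show -(u + v) = (-(2:ℂ)) + (-(u-1)) + (-(v-1)) by ring,
      Complex.cpow_add _ _ hwC, Complex.cpow_add _ _ hwC]
    ring
  have hsub : ∫ s in Ioi (0:ℝ), (s:ℂ) ^ (u - 1) * ((1 + s : ℝ):ℂ) ^ (-(u + v))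
      = Complex.betaIntegral u v := by
    rw [hbeta, key]
    exact (setIntegral_congr_fun measurableSet_Ioi (fun s hs => (hpt s hs))).symm
  have hΓ : Complex.Gamma (u + v) ≠ 0 :=
    Complex.Gamma_ne_zero_of_re_pos (by rw [Complex.add_re]; linarith)
  rw [hsub, eq_div_iff hΓ, mul_comm, ← Complex.Gamma_mul_Gamma_eq_betaIntegral hu hv]

/-- Fourier transform of `π(y) = q(1,e^y) e^y` when `φ` has the polynomially decaying density
`φ_{β,γ}(t) = (Γ(γ)/(Γ(β)Γ(γ-β))) t^{β-1} (1+t)^{-γ}`. -/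
theorem fourier_transform_of_pi_polynomial_phi
    (α c β γ : ℝ) (hα : α ∈ Set.Ioo (0 : ℝ) 2) (hc : 0 < c)
    (hβ : 0 < β) (hβγ : β < γ)
    (φ : Measure ℝ)
    (hφ : φ = (volume.restrict (Set.Ioi (0 : ℝ))).withDensity
        (fun t => ENNReal.ofReal
          ((Real.Gamma γ / (Real.Gamma β * Real.Gamma (γ - β))) * t ^ (β - 1) * (1 + t) ^ (-γ))))
    (q : ℝ → ℝ → ℝ)
    (hq : ∀ x y : ℝ, q x y = c * ∫ t in Set.Ioi (0 : ℝ), (x + y / t) ^ (-1 - α) / t ∂φ)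
    (θ : ℝ) :
    ∫ y : ℝ, Complex.exp (Complex.I * (θ : ℂ) * (y : ℂ)) *
        Complex.ofReal (q 1 (Real.exp y) * Real.exp y)
      = ((c / α : ℝ) : ℂ) *
          (Complex.Gamma ((α : ℂ) - Complex.I * (θ : ℂ)) *
            Complex.Gamma (1 + Complex.I * (θ : ℂ)) / Complex.Gamma (α : ℂ)) *
          (Complex.Gamma ((β : ℂ) + Complex.I * (θ : ℂ)) *
            Complex.Gamma ((γ : ℂ) - (β : ℂ) - Complex.I * (θ : ℂ)) /
              (Complex.Gamma (β : ℂ) * Complex.Gamma ((γ : ℂ) - (β : ℂ)))) := by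
  obtain ⟨hα0, hα2⟩ := hα
  set K : ℝ := Real.Gamma γ / (Real.Gamma β * Real.Gamma (γ - β)) with hKdef
  have hΓβ : 0 < Real.Gamma β := Real.Gamma_pos_of_pos hβ
  have hΓγβ : 0 < Real.Gamma (γ - β) := Real.Gamma_pos_of_pos (by linarith)
  have hΓγ : 0 < Real.Gamma γ := Real.Gamma_pos_of_pos (by linarith)
  have hK : 0 < K := div_pos hΓγ (mul_pos hΓβ hΓγβ)
  set D : ℝ → ℝ := fun t => K * t ^ (β - 1) * (1 + t) ^ (-γ) with hDdef
  have hDmeas : Measurable D := by fun_prop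
  have hDnn : ∀ t ∈ Set.Ioi (0:ℝ), 0 ≤ D t := by
    intro t ht
    have ht' : (0:ℝ) < t := ht
    have : (0:ℝ) < 1 + t := by linarith
    positivity
  -- Step 1: unfold `q` through the density
  have hq1 : ∀ e : ℝ, q 1 e = c * ∫ t in Set.Ioi (0:ℝ), ((1 + e / t) ^ (-1 - α) / t) * D t := by
    intro e
    rw [hq, hφ]
    congr 1
    have hνr : ((volume.restrict (Set.Ioi (0:ℝ))).withDensity
          (fun t => ENNReal.ofReal (D t))).restrict (Set.Ioi 0)
        = (volume.restrict (Set.Ioi (0:ℝ))).withDensity (fun t => ENNReal.ofReal (D t)) := by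
      rw [restrict_withDensity measurableSet_Ioi, Measure.restrict_restrict measurableSet_Ioi,
        Set.inter_self]
    calc ∫ t in Set.Ioi (0:ℝ), (1 + e / t) ^ (-1 - α) / t
          ∂((volume.restrict (Set.Ioi (0:ℝ))).withDensity (fun t => ENNReal.ofReal (D t)))
        = ∫ t, (1 + e / t) ^ (-1 - α) / t
          ∂((volume.restrict (Set.Ioi (0:ℝ))).withDensity
            (fun t => ((D t).toNNReal : ℝ≥0∞))) := by rw [hνr]; rfl
      _ = ∫ t in Set.Ioi (0:ℝ), (D t).toNNReal • ((1 + e / t) ^ (-1 - α) / t) := by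
          rw [integral_withDensity_eq_integral_smul (hDmeas.real_toNNReal) _]
      _ = ∫ t in Set.Ioi (0:ℝ), ((1 + e / t) ^ (-1 - α) / t) * D t := by
          refine setIntegral_congr_fun measurableSet_Ioi (fun t ht => ?_)
          rw [NNReal.smul_def, smul_eq_mul, Real.coe_toNNReal _ (hDnn t ht), mul_comm]
  -- the joint integrand
  set Hc : ℝ → ℝ → ℂ := fun y t => Complex.exp (Complex.I * (θ:ℂ) * (y:ℂ)) *
      ((Real.exp y * ((1 + Real.exp y / t) ^ (-1 - α) / t * D t) : ℝ) : ℂ) with hHcdef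
  -- Step 2: rewrite the integrand for each `y`
  have hstep2 : ∀ y : ℝ, Complex.exp (Complex.I * (θ:ℂ) * (y:ℂ)) *
      Complex.ofReal (q 1 (Real.exp y) * Real.exp y)
      = (c:ℂ) * ∫ t in Set.Ioi (0:ℝ), Hc y t := by
    intro y
    have e1 : ∫ t in Set.Ioi (0:ℝ), Hc y t
        = Complex.exp (Complex.I * (θ:ℂ) * (y:ℂ)) * (((Real.exp y : ℝ) : ℂ) *
            Complex.ofReal (∫ t in Set.Ioi (0:ℝ), (1 + Real.exp y / t) ^ (-1 - α) / t * D t)) := by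
      rw [show Complex.ofReal (∫ t in Set.Ioi (0:ℝ), (1 + Real.exp y / t) ^ (-1 - α) / t * D t)
            = ∫ t in Set.Ioi (0:ℝ), Complex.ofReal ((1 + Real.exp y / t) ^ (-1 - α) / t * D t)
          from integral_ofReal.symm, ← integral_const_mul,
        ← integral_const_mul]
      refine setIntegral_congr_fun measurableSet_Ioi (fun t _ => ?_)
      simp only [hHcdef]
      push_cast
      ring
    rw [e1, hq1 (Real.exp y)]
    push_cast
    ring
  -- base integrability
  have hbase : IntegrableOn (fun s : ℝ => (1 + s) ^ (-1 - α)) (Set.Ioi 0) := by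
    have h := aux_integrableOn_rpow_mul (p := 0) (q := -1 - α) (by norm_num) (by linarith)
    refine h.congr_fun (fun s hs => ?_) measurableSet_Ioi
    simp only [Real.rpow_zero, one_mul]
  set A : ℝ := ∫ s in Set.Ioi (0:ℝ), (1 + s) ^ (-1 - α) with hAdef
  have hcomp : ∀ t : ℝ, 0 < t →
      IntegrableOn (fun u : ℝ => (1 + u / t) ^ (-1 - α)) (Set.Ioi 0) := by
    intro t ht
    rw [aux_integrable_comp_mul _ ht]
    refine hbase.congr_fun (fun s hs => ?_) measurableSet_Ioi
    rw [mul_div_cancel_left₀ _ ht.ne']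
  have hΦint : ∀ t : ℝ, 0 < t →
      Integrable (fun y => Real.exp y * (1 + Real.exp y / t) ^ (-1 - α)) := by
    intro t ht
    have := (aux_integrable_comp_exp (fun u : ℝ => (1 + u / t) ^ (-1 - α))).mp (hcomp t ht)
    simpa [smul_eq_mul] using this
  have hΦval : ∀ t : ℝ, 0 < t →
      ∫ y : ℝ, Real.exp y * (1 + Real.exp y / t) ^ (-1 - α) = t * A := by
    intro t ht
    have h1 : ∫ y : ℝ, Real.exp y • (fun u : ℝ => (1 + u / t) ^ (-1 - α)) (Real.exp y)
        = ∫ u in Set.Ioi (0:ℝ), (1 + u / t) ^ (-1 - α) :=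
      (aux_integral_comp_exp (fun u : ℝ => (1 + u / t) ^ (-1 - α))).symm
    have h2 : ∫ u in Set.Ioi (0:ℝ), (1 + u / t) ^ (-1 - α)
        = t • ∫ s in Set.Ioi (0:ℝ), (1 + (t * s) / t) ^ (-1 - α) :=
      aux_integral_comp_mul _ ht
    have h3 : ∫ s in Set.Ioi (0:ℝ), (1 + (t * s) / t) ^ (-1 - α) = A := by
      rw [hAdef]
      refine setIntegral_congr_fun measurableSet_Ioi (fun s _ => ?_)
      rw [mul_div_cancel_left₀ _ ht.ne']
    calc ∫ y : ℝ, Real.exp y * (1 + Real.exp y / t) ^ (-1 - α)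
        = ∫ y : ℝ, Real.exp y • (fun u : ℝ => (1 + u / t) ^ (-1 - α)) (Real.exp y) := by
          simp [smul_eq_mul]
      _ = t * A := by rw [h1, h2, h3]; simp [smul_eq_mul]
  have hnormexp : ∀ y : ℝ, ‖Complex.exp (Complex.I * (θ:ℂ) * (y:ℂ))‖ = 1 := by
    intro y
    have h0 : (Complex.I * (θ:ℂ) * (y:ℂ)).re = 0 := by simp
    rw [Complex.norm_exp, h0, Real.exp_zero]
  have hHnorm : ∀ t : ℝ, 0 < t → ∀ y : ℝ,
      ‖Hc y t‖ = (Real.exp y * (1 + Real.exp y / t) ^ (-1 - α)) * (D t / t) := by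
    intro t ht y
    have hD := hDnn t (Set.mem_Ioi.mpr ht)
    simp only [hHcdef]
    rw [norm_mul, hnormexp, one_mul, Complex.norm_real, Real.norm_eq_abs,
      abs_of_nonneg (mul_nonneg (Real.exp_pos y).le (mul_nonneg
        (div_nonneg (Real.rpow_nonneg (by positivity) _) ht.le) hD))]
    ring
  have hHmeas : AEStronglyMeasurable (Function.uncurry Hc)
      (volume.prod (volume.restrict (Set.Ioi (0:ℝ)))) := by
    apply Measurable.aestronglyMeasurable
    simp only [hHcdef, Function.uncurry]
    fun_prop
  have hcond1 : ∀ᵐ t ∂(volume.restrict (Set.Ioi (0:ℝ))),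
      Integrable (fun y => Hc y t) := by
    rw [ae_restrict_iff' measurableSet_Ioi]
    filter_upwards with t ht
    have ht'' : (0:ℝ) < t := ht
    have hint : Integrable (fun y : ℝ =>
        ((Real.exp y * (1 + Real.exp y / t) ^ (-1 - α) * (D t / t) : ℝ) : ℂ)) :=
      ((hΦint t ht'').mul_const (D t / t)).ofReal
    have heq : (fun y => Hc y t) = fun y : ℝ => Complex.exp (Complex.I * (θ:ℂ) * (y:ℂ)) *
        ((Real.exp y * (1 + Real.exp y / t) ^ (-1 - α) * (D t / t) : ℝ) : ℂ) := by
      funext y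
      simp only [hHcdef]
      push_cast
      ring
    rw [heq]
    refine Integrable.bdd_mul (c := 1) hint ?_ (Filter.Eventually.of_forall fun y => le_of_eq (hnormexp y))
    exact (Complex.measurable_exp.comp (by fun_prop)).aestronglyMeasurable
  have hcond2 : Integrable (fun t => ∫ y : ℝ, ‖Hc y t‖)
      (volume.restrict (Set.Ioi (0:ℝ))) := by
    have heq : (fun t : ℝ => (A * K) * (t ^ (β - 1) * (1 + t) ^ (-γ)))
        =ᵐ[volume.restrict (Set.Ioi (0:ℝ))] (fun t => ∫ y : ℝ, ‖Hc y t‖) := by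
      rw [Filter.EventuallyEq, ae_restrict_iff' measurableSet_Ioi]
      filter_upwards with t ht
      have ht'' : (0:ℝ) < t := ht
      have h4 : (fun y : ℝ => ‖Hc y t‖) = fun y =>
          (Real.exp y * (1 + Real.exp y / t) ^ (-1 - α)) * (D t / t) :=
        funext (hHnorm t ht'')
      rw [h4, MeasureTheory.integral_mul_const, hΦval t ht'', hDdef]
      field_simp
    refine Integrable.congr ?_ heq
    exact ((aux_integrableOn_rpow_mul (p := β - 1) (q := -γ) (by linarith)
      (by linarith)).const_mul (A * K))
  have hint : Integrable (Function.uncurry Hc)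
      (volume.prod (volume.restrict (Set.Ioi (0:ℝ)))) := by
    rw [integrable_prod_iff' hHmeas]
    exact ⟨hcond1, hcond2⟩
  have hswap : ∫ y : ℝ, ∫ t in Set.Ioi (0:ℝ), Hc y t
      = ∫ t in Set.Ioi (0:ℝ), ∫ y : ℝ, Hc y t := integral_integral_swap hint
  -- the Gamma-parameters
  set u₁ : ℂ := 1 + Complex.I * (θ:ℂ) with hu₁
  set v₁ : ℂ := (α:ℂ) - Complex.I * (θ:ℂ) with hv₁
  set u₂ : ℂ := (β:ℂ) + Complex.I * (θ:ℂ) with hu₂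
  set v₂ : ℂ := (γ:ℂ) - (β:ℂ) - Complex.I * (θ:ℂ) with hv₂
  have hbeta1 := aux_betaIoi (u := u₁) (v := v₁) (by simp [hu₁]) (by simp [hv₁]; exact hα0)
  have hbeta2 := aux_betaIoi (u := u₂) (v := v₂) (by simp [hu₂]; exact hβ)
    (by simp [hv₂]; linarith)
  have hexp : ∀ y : ℝ, ((Real.exp y : ℝ) : ℂ) ^ (Complex.I * (θ:ℂ))
      = Complex.exp (Complex.I * (θ:ℂ) * (y:ℂ)) := by
    intro y
    rw [Complex.cpow_def_of_ne_zero (by exact_mod_cast (Real.exp_pos y).ne')]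
    congr 1
    rw [← Complex.ofReal_log (Real.exp_pos y).le, Real.log_exp]
    ring
  have hinner : ∀ t ∈ Set.Ioi (0:ℝ), (∫ y : ℝ, Hc y t)
      = ((t:ℂ) * ((t:ℂ) ^ (Complex.I * (θ:ℂ)) *
          (Complex.Gamma u₁ * Complex.Gamma v₁ / Complex.Gamma (u₁ + v₁)))) *
        Complex.ofReal (D t / t) := by
    intro t ht
    have ht' : (0:ℝ) < t := ht
    set g : ℝ → ℂ := fun u => ((u:ℝ):ℂ) ^ (Complex.I * (θ:ℂ)) *
        Complex.ofReal ((1 + u / t) ^ (-1 - α)) with hgdef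
    have e1 : (fun y : ℝ => Hc y t)
        = fun y : ℝ => (Real.exp y) • g (Real.exp y) * Complex.ofReal (D t / t) := by
      funext y
      simp only [hHcdef, hgdef]
      rw [hexp y, Complex.real_smul]
      push_cast
      ring
    rw [e1, MeasureTheory.integral_mul_const]
    congr 1
    rw [← aux_integral_comp_exp g, aux_integral_comp_mul g ht']
    have e2 : ∫ s in Set.Ioi (0:ℝ), g (t * s)
        = (t:ℂ) ^ (Complex.I * (θ:ℂ)) * ∫ s in Set.Ioi (0:ℝ),
            ((s:ℝ):ℂ) ^ (u₁ - 1) * ((1 + s : ℝ):ℂ) ^ (-(u₁ + v₁)) := by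
      rw [← integral_const_mul]
      refine setIntegral_congr_fun measurableSet_Ioi (fun s hs => ?_)
      have hs' : (0:ℝ) < s := hs
      simp only [hgdef]
      rw [mul_div_cancel_left₀ _ ht'.ne', Complex.ofReal_mul,
        Complex.mul_cpow_ofReal_nonneg ht'.le hs'.le,
        Complex.ofReal_cpow (by positivity : (0:ℝ) ≤ 1 + s),
        show ((-1 - α : ℝ) : ℂ) = -(u₁ + v₁) by rw [hu₁, hv₁]; push_cast; ring,
        show Complex.I * (θ:ℂ) = u₁ - 1 by rw [hu₁]; ring]
      ring
    rw [e2, hbeta1, Complex.real_smul]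
  -- outer integral
  have houter : ∫ t in Set.Ioi (0:ℝ), ∫ y : ℝ, Hc y t
      = Complex.ofReal K *
        (Complex.Gamma u₁ * Complex.Gamma v₁ / Complex.Gamma (u₁ + v₁)) *
        (Complex.Gamma u₂ * Complex.Gamma v₂ / Complex.Gamma (u₂ + v₂)) := by
    rw [setIntegral_congr_fun measurableSet_Ioi hinner]
    have hpt : Set.EqOn (fun t : ℝ => ((t:ℂ) * ((t:ℂ) ^ (Complex.I * (θ:ℂ)) *
          (Complex.Gamma u₁ * Complex.Gamma v₁ / Complex.Gamma (u₁ + v₁)))) *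
          Complex.ofReal (D t / t))
        (fun t : ℝ => Complex.ofReal K *
          (Complex.Gamma u₁ * Complex.Gamma v₁ / Complex.Gamma (u₁ + v₁)) *
          (((t:ℝ):ℂ) ^ (u₂ - 1) * ((1 + t : ℝ):ℂ) ^ (-(u₂ + v₂))))
        (Set.Ioi (0:ℝ)) := by
      intro t ht
      have ht' : (0:ℝ) < t := ht
      have htC : ((t:ℝ):ℂ) ≠ 0 := by exact_mod_cast ht'.ne'
      have hD : D t / t = K * (t ^ (β - 2) * (1 + t) ^ (-γ)) := by
        rw [hDdef]
        have hh : t ^ (β - 2) = t ^ (β - 1) / t := by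
          rw [show β - 2 = (β - 1) - 1 by ring, Real.rpow_sub_one ht'.ne']
        rw [hh]
        ring
      have hr1 : ((t:ℝ):ℂ) ^ (u₂ - 1)
          = ((t:ℝ):ℂ) * (((t:ℝ):ℂ) ^ (Complex.I * (θ:ℂ)) * ((t:ℝ):ℂ) ^ (((β - 2 : ℝ)):ℂ)) := by
        rw [show ((t:ℝ):ℂ) * (((t:ℝ):ℂ) ^ (Complex.I * (θ:ℂ)) * ((t:ℝ):ℂ) ^ (((β - 2:ℝ)):ℂ))
              = ((t:ℝ):ℂ) ^ (1:ℂ) * (((t:ℝ):ℂ) ^ (Complex.I * (θ:ℂ)) *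
                  ((t:ℝ):ℂ) ^ (((β - 2:ℝ)):ℂ))
            by rw [Complex.cpow_one],
          ← Complex.cpow_add _ _ htC, ← Complex.cpow_add _ _ htC]
        congr 1
        rw [hu₂]
        push_cast
        ring
      have hr2 : ((1 + t : ℝ):ℂ) ^ (-(u₂ + v₂)) = ((1 + t : ℝ):ℂ) ^ (((-γ : ℝ)):ℂ) := by
        congr 1
        rw [hu₂, hv₂]
        push_cast
        ring
      simp only
      rw [hD, hr1, hr2, ← Complex.ofReal_cpow ht'.le,
        ← Complex.ofReal_cpow (by positivity : (0:ℝ) ≤ 1 + t)]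
      push_cast
      ring
    rw [setIntegral_congr_fun measurableSet_Ioi hpt, integral_const_mul, hbeta2]
  -- assemble
  have hαC : ((α:ℝ):ℂ) ≠ 0 := by exact_mod_cast hα0.ne'
  have hG1 : u₁ + v₁ = ((α:ℝ):ℂ) + 1 := by rw [hu₁, hv₁]; ring
  have hG2 : u₂ + v₂ = ((γ:ℝ):ℂ) := by rw [hu₂, hv₂]; ring
  have hΓα : Complex.Gamma ((α:ℝ):ℂ) ≠ 0 :=
    Complex.Gamma_ne_zero_of_re_pos (by simpa using hα0)
  have hΓβC : Complex.Gamma ((β:ℝ):ℂ) = ((Real.Gamma β : ℝ):ℂ) := Complex.Gamma_ofReal β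
  have hΓγβC : Complex.Gamma (((γ:ℝ):ℂ) - ((β:ℝ):ℂ)) = ((Real.Gamma (γ - β) : ℝ):ℂ) := by
    rw [show ((γ:ℝ):ℂ) - ((β:ℝ):ℂ) = (((γ - β : ℝ)):ℂ) by push_cast; ring,
      Complex.Gamma_ofReal]
  calc ∫ y : ℝ, Complex.exp (Complex.I * (θ:ℂ) * (y:ℂ)) *
        Complex.ofReal (q 1 (Real.exp y) * Real.exp y)
      = ∫ y : ℝ, (c:ℂ) * ∫ t in Set.Ioi (0:ℝ), Hc y t := by
        exact integral_congr_ae (Filter.Eventually.of_forall (fun y => hstep2 y))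
    _ = (c:ℂ) * ∫ y : ℝ, ∫ t in Set.Ioi (0:ℝ), Hc y t := integral_const_mul _ _
    _ = (c:ℂ) * ∫ t in Set.Ioi (0:ℝ), ∫ y : ℝ, Hc y t := by rw [hswap]
    _ = (c:ℂ) * (Complex.ofReal K *
          (Complex.Gamma u₁ * Complex.Gamma v₁ / Complex.Gamma (u₁ + v₁)) *
          (Complex.Gamma u₂ * Complex.Gamma v₂ / Complex.Gamma (u₂ + v₂))) := by rw [houter]
    _ = _ := by
        rw [hG1, hG2, Complex.Gamma_add_one _ hαC, Complex.Gamma_ofReal γ, hΓβC, hΓγβC,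
          hKdef]
        have h1 : ((Real.Gamma γ : ℝ):ℂ) ≠ 0 := Complex.ofReal_ne_zero.mpr hΓγ.ne'
        have h2 : ((Real.Gamma β : ℝ):ℂ) ≠ 0 := Complex.ofReal_ne_zero.mpr hΓβ.ne'
        have h3 : ((Real.Gamma (γ - β) : ℝ):ℂ) ≠ 0 := Complex.ofReal_ne_zero.mpr hΓγβ.ne'
        push_cast
        field_simp [hαC, hΓα, h1, h2, h3]
end

section
/- ∫_{{y ∈ ℝ : |y| ≥ 1}} |y| · q(1,e^y) · e^y dy < ∞ if and only if ∫_{(0,∞)} |log u| φ(du) < ∞. (This is the statement that the compound Poisson process with Lévy density π(y) = q(1,e^y)e^y has a first moment precisely when ∫|log u| φ(du) < ∞.) -/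
open MeasureTheory Set

namespace ChiAux

noncomputable def k (α z : ℝ) : ℝ := Real.exp z * (1 + Real.exp z) ^ (-1 - α)

lemma k_nonneg (α z : ℝ) : 0 ≤ k α z :=
  mul_nonneg (Real.exp_pos z).le (Real.rpow_nonneg (by positivity) _)

lemma k_cont (α : ℝ) : Continuous (k α) := by
  refine Real.continuous_exp.mul ?_
  refine (continuous_const.add Real.continuous_exp).rpow_const fun z => Or.inl ?_
  exact ne_of_gt (add_pos one_pos (Real.exp_pos z))

lemma k_meas (α : ℝ) : Measurable (k α) := (k_cont α).measurable

lemma k_le_one {α : ℝ} (hα : 0 < α) (z : ℝ) : k α z ≤ 1 := by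
  have h1 : (0:ℝ) < 1 + Real.exp z := by positivity
  have h2 : (1 + Real.exp z) ^ (-1 - α) ≤ (1 + Real.exp z) ^ (-1 : ℝ) :=
    Real.rpow_le_rpow_of_exponent_le (by nlinarith [Real.exp_pos z]) (by linarith)
  have h3 : (1 + Real.exp z) ^ (-1 : ℝ) = (1 + Real.exp z)⁻¹ := by
    rw [Real.rpow_neg_one]
  calc k α z ≤ Real.exp z * (1 + Real.exp z)⁻¹ := by
        rw [← h3]; exact mul_le_mul_of_nonneg_left h2 (Real.exp_pos z).le
    _ ≤ 1 := by
        rw [mul_inv_le_iff₀ h1]; nlinarith [Real.exp_pos z]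

lemma k_le_exp {α : ℝ} (hα : 0 < α) (z : ℝ) : k α z ≤ Real.exp z := by
  have h2 : (1 + Real.exp z) ^ (-1 - α) ≤ 1 :=
    Real.rpow_le_one_of_one_le_of_nonpos (by nlinarith [Real.exp_pos z]) (by linarith)
  unfold k
  nlinarith [Real.exp_pos z, Real.rpow_nonneg (show (0:ℝ) ≤ 1 + Real.exp z by positivity) (-1-α)]

lemma k_le_exp_neg {α : ℝ} (hα : 0 < α) (z : ℝ) : k α z ≤ Real.exp (-α * z) := by
  have h2 : (1 + Real.exp z) ^ (-1 - α) ≤ (Real.exp z) ^ (-1 - α) :=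
    Real.rpow_le_rpow_of_nonpos (Real.exp_pos z) (by linarith [Real.exp_pos z]) (by linarith)
  have h3 : (Real.exp z) ^ (-1 - α) = Real.exp (z * (-1 - α)) := by
    rw [← Real.exp_mul]
  calc k α z ≤ Real.exp z * Real.exp (z * (-1 - α)) := by
        rw [← h3]; exact mul_le_mul_of_nonneg_left h2 (Real.exp_pos z).le
    _ = Real.exp (-α * z) := by rw [← Real.exp_add]; ring_nf

lemma k_lower {α : ℝ} (hα : 0 < α) {z : ℝ} (hz : z ∈ Set.Icc (-1:ℝ) 1) :
    Real.exp (-1) * (1 + Real.exp 1) ^ (-1 - α) ≤ k α z := by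
  obtain ⟨hz1, hz2⟩ := hz
  have he1 : Real.exp (-1) ≤ Real.exp z := Real.exp_le_exp.2 hz1
  have he2 : Real.exp z ≤ Real.exp 1 := Real.exp_le_exp.2 hz2
  have h2 : (1 + Real.exp 1) ^ (-1 - α) ≤ (1 + Real.exp z) ^ (-1 - α) :=
    Real.rpow_le_rpow_of_nonpos (by positivity) (by linarith) (by linarith)
  unfold k
  exact mul_le_mul he1 h2 (Real.rpow_nonneg (by positivity) _) (Real.exp_pos z).le

lemma integrable_exp_neg_abs' : Integrable (fun z : ℝ => Real.exp (-|z|)) := by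
  rw [← integrableOn_univ, ← Set.Iic_union_Ioi (a := (0:ℝ))]
  refine IntegrableOn.union ?_ ?_
  · refine IntegrableOn.congr_fun (integrableOn_exp_Iic 0) (fun z hz => ?_) measurableSet_Iic
    rw [abs_of_nonpos hz, neg_neg]
  · refine IntegrableOn.congr_fun (exp_neg_integrableOn_Ioi 0 one_pos) (fun z hz => ?_) measurableSet_Ioi
    rw [abs_of_pos hz]; ring_nf

lemma integrable_exp_neg_mul_abs' {β : ℝ} (hβ : 0 < β) :
    Integrable (fun z : ℝ => Real.exp (-(β * |z|))) := by
  have h := integrable_exp_neg_abs'.comp_mul_left' (R := β) hβ.ne'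
  refine h.congr (Filter.Eventually.of_forall fun z => ?_)
  simp only []; rw [abs_mul, abs_of_pos hβ]

lemma integrable_one_add_abs_mul_k {α : ℝ} (hα : 0 < α) :
    Integrable (fun z : ℝ => (1 + |z|) * k α z) := by
  set β := min α 1 / 2 with hβdef
  have hβ : 0 < β := by
    have := lt_min hα one_pos
    positivity
  have hβ2 : β ≤ 1/2 := by
    have := min_le_right α 1
    rw [hβdef]; linarith
  have hβα : β ≤ α/2 := by
    have := min_le_left α 1
    rw [hβdef]; linarith
  set C := 2 + 2/α with hCdef
  have hbound : ∀ z : ℝ, (1 + |z|) * k α z ≤ C * Real.exp (-(β * |z|)) := by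
    intro z
    rcases le_or_gt z 0 with hz | hz
    · have habs : |z| = -z := abs_of_nonpos hz
      have h1 : 1 + |z| ≤ 2 * Real.exp (|z|/2) := by
        have := Real.add_one_le_exp (|z|/2)
        have h0 : 0 ≤ |z| := abs_nonneg z
        nlinarith
      have h2 : k α z ≤ Real.exp z := k_le_exp hα z
      have h3 : (1 + |z|) * k α z ≤ 2 * Real.exp (|z|/2) * Real.exp z := by
        have hk0 := k_nonneg α z
        have h10 : (0:ℝ) ≤ 1 + |z| := by positivity
        nlinarith [Real.exp_pos (|z|/2), Real.exp_pos z]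
      have h4 : 2 * Real.exp (|z|/2) * Real.exp z = 2 * Real.exp (z/2) := by
        rw [mul_assoc, ← Real.exp_add, habs]; ring_nf
      have h5 : Real.exp (z/2) ≤ Real.exp (-(β * |z|)) := by
        apply Real.exp_le_exp.2
        rw [habs]
        nlinarith
      have hC : (2:ℝ) ≤ C := by
        have : 0 < 2/α := by positivity
        rw [hCdef]; linarith
      calc (1 + |z|) * k α z ≤ 2 * Real.exp (z/2) := by rw [← h4]; exact h3
        _ ≤ 2 * Real.exp (-(β * |z|)) := by nlinarith [Real.exp_pos (z/2)]
        _ ≤ C * Real.exp (-(β * |z|)) := by nlinarith [Real.exp_pos (-(β * |z|))]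
    · have habs : |z| = z := abs_of_pos hz
      have h2 : k α z ≤ Real.exp (-α * z) := k_le_exp_neg hα z
      have h1 : 1 + |z| ≤ (1 + 2/α) * Real.exp (α/2 * z) := by
        have he : α/2 * z + 1 ≤ Real.exp (α/2 * z) := Real.add_one_le_exp _
        have he1 : (1:ℝ) ≤ Real.exp (α/2 * z) := by
          rw [show (1:ℝ) = Real.exp 0 by simp]
          apply Real.exp_le_exp.2; positivity
        have hz2 : z ≤ 2/α * Real.exp (α/2 * z) := by
          have h' : α/2 * z ≤ Real.exp (α/2 * z) := by linarith
          have := mul_le_mul_of_nonneg_left h' (by positivity : (0:ℝ) ≤ 2/α)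
          calc z = 2/α * (α/2 * z) := by field_simp
            _ ≤ 2/α * Real.exp (α/2 * z) := this
        rw [habs]
        calc 1 + z ≤ Real.exp (α/2 * z) + 2/α * Real.exp (α/2 * z) := by linarith
          _ = (1 + 2/α) * Real.exp (α/2 * z) := by ring
      have h3 : (1 + |z|) * k α z ≤ (1 + 2/α) * Real.exp (α/2 * z) * Real.exp (-α * z) := by
        have hk0 := k_nonneg α z
        have h10 : (0:ℝ) ≤ 1 + |z| := by positivity
        have h1p : (0:ℝ) < (1 + 2/α) * Real.exp (α/2 * z) := by positivity
        nlinarith [Real.exp_pos (-α * z)]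
      have h4 : (1 + 2/α) * Real.exp (α/2 * z) * Real.exp (-α * z)
          = (1 + 2/α) * Real.exp (-(α/2) * z) := by
        rw [mul_assoc, ← Real.exp_add]; ring_nf
      have h5 : Real.exp (-(α/2) * z) ≤ Real.exp (-(β * |z|)) := by
        apply Real.exp_le_exp.2
        rw [habs]; nlinarith
      have hC : 1 + 2/α ≤ C := by rw [hCdef]; linarith
      calc (1 + |z|) * k α z ≤ (1 + 2/α) * Real.exp (-(α/2) * z) := by rw [← h4]; exact h3
        _ ≤ C * Real.exp (-(β * |z|)) := by
            have e1 := Real.exp_pos (-(α/2) * z)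
            have e2 := Real.exp_pos (-(β * |z|))
            have h0 : (0:ℝ) < 1 + 2/α := by positivity
            nlinarith
  refine Integrable.mono' ((integrable_exp_neg_mul_abs' hβ).const_mul C) ?_
    (Filter.Eventually.of_forall fun z => ?_)
  · exact ((continuous_const.add continuous_abs).mul (k_cont α)).aestronglyMeasurable
  · rw [Real.norm_eq_abs, abs_of_nonneg (mul_nonneg (by positivity) (k_nonneg α z))]
    exact hbound z

lemma lintegral_k_lt_top {α : ℝ} (hα : 0 < α) :
    ∫⁻ z : ℝ, ENNReal.ofReal (k α z) < ⊤ := by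
  refine Integrable.lintegral_lt_top (Integrable.mono' (integrable_one_add_abs_mul_k hα)
    (k_cont α).aestronglyMeasurable (Filter.Eventually.of_forall fun z => ?_))
  rw [Real.norm_eq_abs, abs_of_nonneg (k_nonneg α z)]
  nlinarith [k_nonneg α z, abs_nonneg z]

lemma lintegral_abs_mul_k_lt_top {α : ℝ} (hα : 0 < α) :
    ∫⁻ z : ℝ, ENNReal.ofReal (|z| * k α z) < ⊤ := by
  refine Integrable.lintegral_lt_top (Integrable.mono' (integrable_one_add_abs_mul_k hα)
    (continuous_abs.mul (k_cont α)).aestronglyMeasurable (Filter.Eventually.of_forall fun z => ?_))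
  rw [Real.norm_eq_abs, abs_of_nonneg (mul_nonneg (abs_nonneg z) (k_nonneg α z))]
  nlinarith [k_nonneg α z, abs_nonneg z]


end ChiAux

open ChiAux

/-- The compound Poisson process with Lévy density `π(y) = q(1,e^y) e^y` has a first moment,
i.e. `∫_{|y|≥1} |y| π(y) dy < ∞`, if and only if `∫_(0,∞) |log u| φ(du) < ∞`. -/
theorem chi_has_first_moment_iff
    (α c : ℝ) (hα : α ∈ Set.Ioo (0 : ℝ) 2) (hc : 0 < c)
    (φ : Measure ℝ) [IsProbabilityMeasure φ] (hφ : φ (Set.Iic 0) = 0)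
    (q : ℝ → ℝ → ℝ)
    (hq : ∀ x y : ℝ, q x y = c * ∫ t in Set.Ioi (0 : ℝ), (x + y / t) ^ (-1 - α) / t ∂φ) :
    IntegrableOn (fun y : ℝ => |y| * (q 1 (Real.exp y) * Real.exp y)) {y : ℝ | 1 ≤ |y|} volume
      ↔ IntegrableOn (fun u : ℝ => |Real.log u|) (Set.Ioi 0) φ := by
  obtain ⟨hα0, hα2⟩ := hα
  set S : Set ℝ := {y : ℝ | 1 ≤ |y|} with hSdef
  have hSmeas : MeasurableSet S := measurableSet_le measurable_const measurable_id.abs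
  set φ' : Measure ℝ := φ.restrict (Set.Ioi (0:ℝ)) with hφ'def
  -- Step A : rewrite the integrand
  have hFeq : ∀ y : ℝ, |y| * (q 1 (Real.exp y) * Real.exp y)
      = c * ∫ t, |y| * k α (y - Real.log t) ∂φ' := by
    intro y
    rw [hq 1 (Real.exp y)]
    rw [show |y| * (c * (∫ t, (1 + Real.exp y / t) ^ (-1 - α) / t ∂φ') * Real.exp y)
        = c * ((|y| * Real.exp y) * ∫ t, (1 + Real.exp y / t) ^ (-1 - α) / t ∂φ') from by ring]
    rw [← integral_const_mul]
    congr 1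
    refine integral_congr_ae (ae_restrict_of_forall_mem measurableSet_Ioi fun t ht => ?_)
    unfold ChiAux.k
    simp only []
    rw [Real.exp_sub, Real.exp_log (mem_Ioi.mp ht)]
    ring
  -- constants
  set m₀ : ℝ := Real.exp (-1) * (1 + Real.exp 1) ^ (-1 - α) with hm₀def
  have hm₀ : 0 < m₀ := by
    rw [hm₀def]
    have := Real.rpow_pos_of_pos (show (0:ℝ) < 1 + Real.exp 1 by positivity) (-1-α)
    positivity
  set K0 : ENNReal := ∫⁻ z : ℝ, ENNReal.ofReal (k α z) with hK0def
  set K1 : ENNReal := ∫⁻ z : ℝ, ENNReal.ofReal (|z| * k α z) with hK1def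
  have hK0 : K0 < ⊤ := lintegral_k_lt_top hα0
  have hK1 : K1 < ⊤ := lintegral_abs_mul_k_lt_top hα0
  set E : ENNReal := ENNReal.ofReal m₀ * 2 with hEdef
  have hE0 : E ≠ 0 := by
    rw [hEdef]
    simp [ENNReal.ofReal_pos.2 hm₀, (ENNReal.ofReal_pos.2 hm₀).ne']
  have hEtop : E ≠ ⊤ := by rw [hEdef]; exact ENNReal.mul_ne_top ENNReal.ofReal_ne_top (by norm_num)
  -- measurability
  have hg_meas : Measurable (fun p : ℝ × ℝ => |p.1| * k α (p.1 - Real.log p.2)) :=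
    (measurable_fst.abs).mul ((k_meas α).comp (measurable_fst.sub
      (Real.measurable_log.comp measurable_snd)))
  have hF_meas : Measurable (fun y : ℝ => c * ∫ t, |y| * k α (y - Real.log t) ∂φ') := by
    refine Measurable.const_mul ?_ c
    exact hg_meas.stronglyMeasurable.integral_prod_right'.measurable
  have hF_nonneg : ∀ y : ℝ, 0 ≤ c * ∫ t, |y| * k α (y - Real.log t) ∂φ' := fun y =>
    mul_nonneg hc.le (integral_nonneg fun t => mul_nonneg (abs_nonneg y) (k_nonneg _ _))
  -- integrability in t for each y
  have hInt_y : ∀ y : ℝ, Integrable (fun t => |y| * k α (y - Real.log t)) φ' := by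
    intro y
    refine Integrable.mono' (integrable_const |y|)
      (((k_meas α).comp (measurable_const.sub Real.measurable_log)).const_mul
        |y|).aestronglyMeasurable (Filter.Eventually.of_forall fun t => ?_)
    rw [Real.norm_eq_abs, abs_of_nonneg (mul_nonneg (abs_nonneg y) (k_nonneg _ _))]
    nlinarith [abs_nonneg y, k_nonneg α (y - Real.log t), k_le_one hα0 (y - Real.log t)]
  -- pointwise ofReal
  have hofReal : ∀ y : ℝ, ENNReal.ofReal (c * ∫ t, |y| * k α (y - Real.log t) ∂φ')
      = ENNReal.ofReal c * ∫⁻ t, ENNReal.ofReal (|y| * k α (y - Real.log t)) ∂φ' := by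
    intro y
    rw [ENNReal.ofReal_mul hc.le, ofReal_integral_eq_lintegral_ofReal (hInt_y y)
      (Filter.Eventually.of_forall fun t => mul_nonneg (abs_nonneg y) (k_nonneg _ _))]
  -- the H function
  set H : ℝ → ENNReal := fun t => ∫⁻ y in S, ENNReal.ofReal (|y| * k α (y - Real.log t))
    with hHdef
  -- Step F : LHS iff
  have hL_iff : IntegrableOn (fun y : ℝ => |y| * (q 1 (Real.exp y) * Real.exp y)) S volume ↔
      (∫⁻ y in S, ENNReal.ofReal (c * ∫ t, |y| * k α (y - Real.log t) ∂φ')) < ⊤ := by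
    rw [show (fun y : ℝ => |y| * (q 1 (Real.exp y) * Real.exp y))
        = fun y => c * ∫ t, |y| * k α (y - Real.log t) ∂φ' from funext hFeq]
    constructor
    · exact fun h => h.lintegral_lt_top
    · intro h
      exact ⟨hF_meas.aestronglyMeasurable.restrict,
        (hasFiniteIntegral_iff_ofReal (Filter.Eventually.of_forall hF_nonneg)).2 h⟩
  -- Step G : Tonelli
  have key : (∫⁻ y in S, ENNReal.ofReal (c * ∫ t, |y| * k α (y - Real.log t) ∂φ'))
      = ENNReal.ofReal c * ∫⁻ t, H t ∂φ' := by
    calc (∫⁻ y in S, ENNReal.ofReal (c * ∫ t, |y| * k α (y - Real.log t) ∂φ'))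
        = ∫⁻ y in S, ENNReal.ofReal c *
            ∫⁻ t, ENNReal.ofReal (|y| * k α (y - Real.log t)) ∂φ' :=
          lintegral_congr fun y => hofReal y
      _ = ENNReal.ofReal c * ∫⁻ y in S,
            ∫⁻ t, ENNReal.ofReal (|y| * k α (y - Real.log t)) ∂φ' :=
          lintegral_const_mul' _ _ ENNReal.ofReal_ne_top
      _ = ENNReal.ofReal c * ∫⁻ t, H t ∂φ' := by
          congr 1
          exact lintegral_lintegral_swap (hg_meas.ennreal_ofReal.aemeasurable)
  -- Step H : translation
  have hH_eq : ∀ t : ℝ, H t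
      = ∫⁻ z : ℝ, (if 1 ≤ |z + Real.log t| then
          ENNReal.ofReal (|z + Real.log t| * k α z) else 0) := by
    intro t
    rw [hHdef]
    simp only []
    rw [← lintegral_indicator hSmeas]
    rw [← lintegral_add_right_eq_self
      (fun y => S.indicator (fun y => ENNReal.ofReal (|y| * k α (y - Real.log t))) y)
      (Real.log t)]
    refine lintegral_congr fun z => ?_
    rw [Set.indicator_apply]
    by_cases hzS : z + Real.log t ∈ S
    · have hz1 : 1 ≤ |z + Real.log t| := hzS
      rw [if_pos hzS, if_pos hz1, add_sub_cancel_right]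
    · have hz1 : ¬ (1 ≤ |z + Real.log t|) := hzS
      rw [if_neg hzS, if_neg hz1]
  -- Step I : upper bound
  have hH_upper : ∀ t : ℝ, H t ≤ ENNReal.ofReal |Real.log t| * K0 + K1 := by
    intro t
    rw [hH_eq t, hK0def, hK1def]
    have hpt : ∀ z : ℝ, (if 1 ≤ |z + Real.log t| then
          ENNReal.ofReal (|z + Real.log t| * k α z) else 0)
        ≤ ENNReal.ofReal |Real.log t| * ENNReal.ofReal (k α z)
          + ENNReal.ofReal (|z| * k α z) := by
      intro z
      have hbound : ENNReal.ofReal (|z + Real.log t| * k α z)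
          ≤ ENNReal.ofReal (|Real.log t| * k α z) + ENNReal.ofReal (|z| * k α z) := by
        rw [← ENNReal.ofReal_add (mul_nonneg (abs_nonneg _) (k_nonneg _ _))
          (mul_nonneg (abs_nonneg _) (k_nonneg _ _))]
        apply ENNReal.ofReal_le_ofReal
        have h1 : |z + Real.log t| ≤ |Real.log t| + |z| := by
          calc |z + Real.log t| ≤ |z| + |Real.log t| := abs_add_le _ _
            _ = |Real.log t| + |z| := by ring
        nlinarith [k_nonneg α z]
      rw [ENNReal.ofReal_mul (abs_nonneg (Real.log t))] at hbound
      split_ifs with h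
      · exact hbound
      · exact bot_le
    calc (∫⁻ z : ℝ, (if 1 ≤ |z + Real.log t| then
            ENNReal.ofReal (|z + Real.log t| * k α z) else 0))
        ≤ ∫⁻ z : ℝ, (ENNReal.ofReal |Real.log t| * ENNReal.ofReal (k α z)
            + ENNReal.ofReal (|z| * k α z)) := lintegral_mono hpt
      _ = ENNReal.ofReal |Real.log t| * (∫⁻ z : ℝ, ENNReal.ofReal (k α z))
            + ∫⁻ z : ℝ, ENNReal.ofReal (|z| * k α z) := by
          rw [lintegral_add_right _ (g := fun z : ℝ => ENNReal.ofReal (|z| * k α z)) ((continuous_abs.measurable.mul (k_meas α))).ennreal_ofReal,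
            lintegral_const_mul' _ _ ENNReal.ofReal_ne_top]
  -- Step J : lower bound
  have hH_lower : ∀ t : ℝ, 2 ≤ |Real.log t| →
      ENNReal.ofReal (|Real.log t| - 1) * E ≤ H t := by
    intro t ht
    rw [hH_eq t, hEdef]
    have hstep : ∀ z ∈ Set.Icc (-1:ℝ) 1,
        ENNReal.ofReal ((|Real.log t| - 1) * m₀)
          ≤ (if 1 ≤ |z + Real.log t| then
              ENNReal.ofReal (|z + Real.log t| * k α z) else 0) := by
      intro z hz
      have hz1 : |z| ≤ 1 := abs_le.2 ⟨hz.1, hz.2⟩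
      have habs : |Real.log t| - 1 ≤ |z + Real.log t| := by
        have h2 : |Real.log t| ≤ |z + Real.log t| + |z| := by
          calc |Real.log t| = |z + Real.log t + -z| := by ring_nf
            _ ≤ |z + Real.log t| + |(-z)| := abs_add_le _ _
            _ = |z + Real.log t| + |z| := by rw [abs_neg]
        linarith
      have hcond : 1 ≤ |z + Real.log t| := by linarith
      rw [if_pos hcond]
      apply ENNReal.ofReal_le_ofReal
      have hk := k_lower hα0 hz
      nlinarith [k_nonneg α z, hm₀, abs_nonneg (z + Real.log t)]
    calc ENNReal.ofReal (|Real.log t| - 1) * (ENNReal.ofReal m₀ * 2)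
        = ENNReal.ofReal ((|Real.log t| - 1) * m₀) * volume (Set.Icc (-1:ℝ) 1) := by
          rw [Real.volume_Icc, ENNReal.ofReal_mul (by linarith : (0:ℝ) ≤ |Real.log t| - 1)]
          norm_num [mul_assoc]
      _ = ∫⁻ _ in Set.Icc (-1:ℝ) 1, ENNReal.ofReal ((|Real.log t| - 1) * m₀) :=
          (setLIntegral_const _ _).symm
      _ ≤ ∫⁻ z in Set.Icc (-1:ℝ) 1, (if 1 ≤ |z + Real.log t| then
            ENNReal.ofReal (|z + Real.log t| * k α z) else 0) :=
          setLIntegral_mono' measurableSet_Icc hstep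
      _ ≤ ∫⁻ z : ℝ, (if 1 ≤ |z + Real.log t| then
            ENNReal.ofReal (|z + Real.log t| * k α z) else 0) :=
          setLIntegral_le_lintegral _ _
  -- Step K : RHS iff
  have hR_iff : IntegrableOn (fun u : ℝ => |Real.log u|) (Set.Ioi 0) φ ↔
      (∫⁻ t, ENNReal.ofReal |Real.log t| ∂φ') < ⊤ := by
    constructor
    · exact fun h => h.lintegral_lt_top
    · intro h
      exact ⟨(Real.measurable_log.abs).aestronglyMeasurable,
        (hasFiniteIntegral_iff_ofReal (Filter.Eventually.of_forall fun t => abs_nonneg _)).2 h⟩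
  rw [hL_iff, key, hR_iff]
  have hcne : ENNReal.ofReal c ≠ 0 := (ENNReal.ofReal_pos.2 hc).ne'
  have hmul_iff : ENNReal.ofReal c * (∫⁻ t, H t ∂φ') < ⊤ ↔ (∫⁻ t, H t ∂φ') < ⊤ := by
    rw [ENNReal.mul_lt_top_iff]
    constructor
    · rintro (⟨-, h⟩ | h | h)
      · exact h
      · exact absurd h hcne
      · rw [h]; exact ENNReal.zero_lt_top
    · intro h; exact Or.inl ⟨ENNReal.ofReal_lt_top, h⟩
  rw [hmul_iff]
  have huniv : φ' Set.univ ≤ 1 := by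
    rw [hφ'def, Measure.restrict_apply_univ]
    exact prob_le_one
  constructor
  · -- H integrable ⇒ log integrable
    intro h
    have hpt : ∀ t : ℝ, ENNReal.ofReal |Real.log t| * E ≤ 2 * H t + 2 * E := by
      intro t
      rcases le_or_gt 2 |Real.log t| with ht | ht
      · have h1 := hH_lower t ht
        have h2 : ENNReal.ofReal |Real.log t| ≤ 2 * ENNReal.ofReal (|Real.log t| - 1) := by
          rw [show (2:ENNReal) = ENNReal.ofReal 2 by norm_num,
            ← ENNReal.ofReal_mul (by norm_num : (0:ℝ) ≤ 2)]
          exact ENNReal.ofReal_le_ofReal (by linarith)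
        calc ENNReal.ofReal |Real.log t| * E
            ≤ (2 * ENNReal.ofReal (|Real.log t| - 1)) * E := mul_le_mul_left h2 E
          _ = 2 * (ENNReal.ofReal (|Real.log t| - 1) * E) := by ring
          _ ≤ 2 * H t := mul_le_mul_right h1 2
          _ ≤ 2 * H t + 2 * E := le_self_add
      · have h2 : ENNReal.ofReal |Real.log t| ≤ 2 := by
          rw [show (2:ENNReal) = ENNReal.ofReal 2 by norm_num]
          exact ENNReal.ofReal_le_ofReal ht.le
        calc ENNReal.ofReal |Real.log t| * E ≤ 2 * E := mul_le_mul_left h2 E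
          _ ≤ 2 * H t + 2 * E := le_add_self
    have hint : (∫⁻ t, ENNReal.ofReal |Real.log t| ∂φ') * E
        ≤ 2 * (∫⁻ t, H t ∂φ') + 2 * E * φ' Set.univ := by
      calc (∫⁻ t, ENNReal.ofReal |Real.log t| ∂φ') * E
          = ∫⁻ t, ENNReal.ofReal |Real.log t| * E ∂φ' :=
            (lintegral_mul_const' E _ hEtop).symm
        _ ≤ ∫⁻ t, (2 * H t + 2 * E) ∂φ' := lintegral_mono hpt
        _ = (∫⁻ t, 2 * H t ∂φ') + 2 * E * φ' Set.univ := by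
            rw [lintegral_add_right _ measurable_const, lintegral_const]
        _ = 2 * (∫⁻ t, H t ∂φ') + 2 * E * φ' Set.univ := by
            rw [lintegral_const_mul' _ _ (by norm_num : (2:ENNReal) ≠ ⊤)]
    have hrhs : 2 * (∫⁻ t, H t ∂φ') + 2 * E * φ' Set.univ < ⊤ := by
      refine ENNReal.add_lt_top.2 ⟨?_, ?_⟩
      · exact ENNReal.mul_lt_top (by norm_num) h
      · exact ENNReal.mul_lt_top (ENNReal.mul_lt_top (by norm_num) hEtop.lt_top)
          (lt_of_le_of_lt huniv (by norm_num))
    have hfin := hint.trans_lt hrhs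
    rcases eq_top_or_lt_top (∫⁻ t, ENNReal.ofReal |Real.log t| ∂φ') with htop | hlt
    · rw [htop, ENNReal.top_mul hE0] at hfin
      exact absurd hfin (lt_irrefl ⊤)
    · exact hlt
  · -- log integrable ⇒ H integrable
    intro h
    calc (∫⁻ t, H t ∂φ')
        ≤ ∫⁻ t, (ENNReal.ofReal |Real.log t| * K0 + K1) ∂φ' := lintegral_mono hH_upper
      _ = (∫⁻ t, ENNReal.ofReal |Real.log t| * K0 ∂φ') + K1 * φ' Set.univ := by
          rw [lintegral_add_right _ measurable_const, lintegral_const]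
      _ = (∫⁻ t, ENNReal.ofReal |Real.log t| ∂φ') * K0 + K1 * φ' Set.univ := by
          rw [lintegral_mul_const' K0 _ hK0.ne]
      _ < ⊤ := by
          refine ENNReal.add_lt_top.2 ⟨ENNReal.mul_lt_top h hK0, ?_⟩
          exact ENNReal.mul_lt_top hK1 (lt_of_le_of_lt huniv (by norm_num))
end

section
/- Assume ∫_{(0,∞)} |log u| φ(du) < ∞. Define Ψ̄ : ℝ → ℂ by Ψ̄(θ) = (Γ(α−iθ)·Γ(1+iθ)/π)·( sin(π(αρ̂−iθ)) − sin(παρ̂)·∫_{(0,∞)} u^{iθ} φ(du) ), where sin is the complex sine function. Then Ψ̄ is differentiable at θ = 0 and i·Ψ̄′(0) = Γ(α)·(sin(παρ̂)/π)·( π·cos(παρ̂)/sin(παρ̂) + ∫_{(0,∞)} log u · φ(du) ). -/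
open MeasureTheory Set
open scoped Real

/-- Derivative at zero of the characteristic exponent of the resurrected process:
`i Ψ̄'(0) = Γ(α) (sin(π α ρ̂)/π) (π cot(π α ρ̂) + ∫ log u φ(du))`. -/
theorem derivative_at_zero
    (α ρ : ℝ)
    (hadm : (α ∈ Set.Ioo (0 : ℝ) 1 ∧ ρ ∈ Set.Ioo (0 : ℝ) 1) ∨
      (α ∈ Set.Ioo (1 : ℝ) 2 ∧ ρ ∈ Set.Ioo (1 - 1/α) (1/α)) ∨ (α = 1 ∧ ρ = 1/2))
    (ρh : ℝ) (hρh : ρh = 1 - ρ)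
    (φ : Measure ℝ) [IsProbabilityMeasure φ] (hφ : φ (Set.Iic 0) = 0)
    (hlog : IntegrableOn (fun u : ℝ => |Real.log u|) (Set.Ioi 0) φ)
    (Ψ : ℝ → ℂ)
    (hΨ : ∀ θ : ℝ, Ψ θ =
      (Complex.Gamma ((α : ℂ) - Complex.I * (θ : ℂ)) *
        Complex.Gamma (1 + Complex.I * (θ : ℂ)) / (π : ℂ)) *
      (Complex.sin ((π : ℂ) * (((α * ρh : ℝ) : ℂ) - Complex.I * (θ : ℂ)))
        - Complex.sin ((π : ℂ) * ((α * ρh : ℝ) : ℂ)) *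
            ∫ u in Set.Ioi (0 : ℝ), Complex.exp (Complex.I * (θ : ℂ) * (Real.log u : ℂ)) ∂φ)) :
    ∃ D : ℂ, HasDerivAt Ψ D 0 ∧
      Complex.I * D =
        ((Real.Gamma α * (Real.sin (π * (α * ρh)) / π) *
          (π * Real.cos (π * (α * ρh)) / Real.sin (π * (α * ρh)) +
            ∫ u in Set.Ioi (0 : ℝ), Real.log u ∂φ) : ℝ) : ℂ) := by
  -- basic facts about the parameters
  have hα : 0 < α := by
    rcases hadm with ⟨h1, _⟩ | ⟨h1, _⟩ | ⟨h1, _⟩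
    · exact h1.1
    · linarith [h1.1]
    · simp [h1]
  have hc : 0 < α * ρh ∧ α * ρh < 1 := by
    rcases hadm with ⟨h1, h2⟩ | ⟨h1, h2⟩ | ⟨h1, h2⟩
    · constructor
      · exact mul_pos h1.1 (by rw [hρh]; linarith [h2.2])
      · have : ρh < 1 := by rw [hρh]; linarith [h2.1]
        nlinarith [h1.2, h1.1, hρh]
    · have hα1 : 1 < α := h1.1
      have hρh1 : ρh < 1/α := by rw [hρh]; linarith [h2.1]
      have hρh0 : 1 - 1/α < ρh := by rw [hρh]; linarith [h2.2]
      constructor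
      · have : (0:ℝ) < 1 - 1/α := by
          have : 1/α < 1 := by rw [div_lt_one (by linarith)]; linarith
          linarith
        exact mul_pos (by linarith) (by linarith)
      · calc α * ρh < α * (1/α) := by
              exact mul_lt_mul_of_pos_left hρh1 (by linarith)
          _ = 1 := by field_simp
    · subst h1 h2; rw [hρh]; norm_num
  have hsin : 0 < Real.sin (π * (α * ρh)) :=
    Real.sin_pos_of_pos_of_lt_pi (mul_pos Real.pi_pos hc.1)
      (by nlinarith [Real.pi_pos, hc.2])
  -- the restricted measure
  set μ : Measure ℝ := φ.restrict (Set.Ioi 0) with hμ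
  have hμuniv : μ Set.univ = 1 := by
    rw [hμ, Measure.restrict_apply_univ]
    have : Set.Ioi (0:ℝ) = (Set.Iic 0)ᶜ := by ext x; simp
    rw [this, measure_compl measurableSet_Iic (by simp [hφ] : φ (Set.Iic 0) ≠ ⊤), hφ]
    simp
  have hlogmeas : AEStronglyMeasurable (fun u : ℝ => Real.log u) μ :=
    Real.measurable_log.aestronglyMeasurable
  have hLint : Integrable (fun u : ℝ => Real.log u) μ :=
    (integrable_norm_iff hlogmeas).mp (by simpa [Real.norm_eq_abs] using (show Integrable (fun u : ℝ => |Real.log u|) μ from hlog))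
  set L : ℝ := ∫ u, Real.log u ∂μ with hL
  -- derivative of the Fourier-type integral
  have hF : HasDerivAt (fun θ : ℝ => ∫ u, Complex.exp (Complex.I * (θ:ℂ) * (Real.log u : ℂ)) ∂μ)
      (Complex.I * (L:ℂ)) 0 := by
    have key := hasDerivAt_integral_of_dominated_loc_of_deriv_le
      (F := fun (θ : ℝ) (u : ℝ) => Complex.exp (Complex.I * (θ:ℂ) * (Real.log u : ℂ)))
      (F' := fun (θ : ℝ) (u : ℝ) =>
        Complex.exp (Complex.I * (θ:ℂ) * (Real.log u : ℂ)) * (Complex.I * (Real.log u : ℂ)))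
      (μ := μ) (x₀ := 0) (bound := fun u => |Real.log u|) (s := Metric.ball 0 1) (Metric.ball_mem_nhds 0 one_pos)
      ?_ ?_ ?_ ?_ ?_ ?_
    · have h2 : (∫ u, Complex.exp (Complex.I * ((0:ℝ):ℂ) * (Real.log u : ℂ)) *
          (Complex.I * (Real.log u : ℂ)) ∂μ) = Complex.I * (L:ℂ) := by
        simp only [Complex.ofReal_zero, mul_zero, zero_mul, Complex.exp_zero, one_mul]
        rw [integral_const_mul,
          show (∫ a, ((Real.log a : ℝ) : ℂ) ∂μ) = ((∫ a, Real.log a ∂μ : ℝ) : ℂ) from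
            integral_ofReal]
      rw [← h2]; exact key.2
    · filter_upwards with θ
      exact (Complex.measurable_exp.comp
        ((Complex.measurable_ofReal.comp Real.measurable_log).const_mul _)).aestronglyMeasurable
    · simp only [Complex.ofReal_zero, mul_zero, zero_mul, Complex.exp_zero]
      exact integrable_const 1
    · exact ((Complex.measurable_exp.comp
        ((Complex.measurable_ofReal.comp Real.measurable_log).const_mul _)).mul
        ((Complex.measurable_ofReal.comp Real.measurable_log).const_mul _)).aestronglyMeasurable
    · filter_upwards with u
      intro x _
      have h1 : ‖Complex.exp (Complex.I * (x:ℂ) * (Real.log u : ℂ))‖ = 1 := by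
        rw [Complex.norm_exp]
        simp [Complex.mul_re, Complex.mul_im]
      rw [norm_mul, h1, one_mul, norm_mul]
      simp [Complex.norm_real]
    · exact hlog
    · filter_upwards with u
      intro x _
      have h1 : HasDerivAt (fun x : ℝ => Complex.I * (x:ℂ) * (Real.log u : ℂ))
          (Complex.I * (Real.log u : ℂ)) x := by
        simpa using (((hasDerivAt_id x).ofReal_comp).const_mul Complex.I).mul_const
          ((Real.log u : ℂ))
      simpa using h1.cexp
  set c : ℝ := α * ρh with hcdef
  -- derivative of the sine term
  have hIθ : HasDerivAt (fun θ : ℝ => Complex.I * (θ:ℂ)) Complex.I 0 := by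
    simpa using ((hasDerivAt_id (0:ℝ)).ofReal_comp).const_mul Complex.I
  have hinner : HasDerivAt (fun θ : ℝ => (π:ℂ) * ((c:ℂ) - Complex.I * (θ:ℂ)))
      ((π:ℂ) * (-Complex.I)) 0 := by
    simpa using (hIθ.const_sub ((c:ℂ))).const_mul ((π:ℂ))
  have hsinD : HasDerivAt (fun θ : ℝ => Complex.sin ((π:ℂ) * ((c:ℂ) - Complex.I * (θ:ℂ))))
      (Complex.cos ((π:ℂ) * (c:ℂ)) * ((π:ℂ) * (-Complex.I))) 0 := by
    have h0 := HasDerivAt.scomp_of_eq (0:ℝ)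
      (Complex.hasDerivAt_sin ((π:ℂ) * ((c:ℂ) - Complex.I * ((0:ℝ):ℂ)))) hinner rfl
    simp only [Function.comp_def, Complex.ofReal_zero, mul_zero, sub_zero, smul_eq_mul] at h0
    convert h0 using 1
    · rfl
    · ring
  set B' : ℂ := Complex.cos ((π:ℂ)*(c:ℂ)) * ((π:ℂ) * (-Complex.I))
    - Complex.sin ((π:ℂ)*(c:ℂ)) * (Complex.I * (L:ℂ)) with hB'def
  have hB : HasDerivAt (fun θ : ℝ => Complex.sin ((π:ℂ) * ((c:ℂ) - Complex.I * (θ:ℂ)))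
      - Complex.sin ((π:ℂ) * (c:ℂ)) *
        ∫ u, Complex.exp (Complex.I*(θ:ℂ)*(Real.log u:ℂ)) ∂μ) B' 0 :=
    hsinD.sub (hF.const_mul _)
  -- the Gamma factor is differentiable
  have hGamma1 : DifferentiableAt ℝ (fun θ : ℝ => Complex.Gamma ((α:ℂ) - Complex.I * (θ:ℂ))) 0 := by
    have hin : HasDerivAt (fun θ : ℝ => (α:ℂ) - Complex.I * (θ:ℂ)) (-Complex.I) 0 :=
      hIθ.const_sub ((α:ℂ))
    have hg : DifferentiableAt ℂ Complex.Gamma ((α:ℂ) - Complex.I * ((0:ℝ):ℂ)) := by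
      apply Complex.differentiableAt_Gamma
      intro m h
      simp only [Complex.ofReal_zero, mul_zero, sub_zero] at h
      have h2 := congrArg Complex.re h
      simp only [Complex.ofReal_re, Complex.neg_re, Complex.natCast_re] at h2
      have : (0:ℝ) ≤ (m:ℝ) := Nat.cast_nonneg m
      linarith
    exact (hg.restrictScalars ℝ).comp 0 hin.differentiableAt
  have hGamma2 : DifferentiableAt ℝ (fun θ : ℝ => Complex.Gamma (1 + Complex.I * (θ:ℂ))) 0 := by
    have hin : HasDerivAt (fun θ : ℝ => (1:ℂ) + Complex.I * (θ:ℂ)) Complex.I 0 :=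
      hIθ.const_add 1
    have hg : DifferentiableAt ℂ Complex.Gamma ((1:ℂ) + Complex.I * ((0:ℝ):ℂ)) := by
      apply Complex.differentiableAt_Gamma
      intro m h
      simp only [Complex.ofReal_zero, mul_zero, add_zero] at h
      have h2 := congrArg Complex.re h
      simp only [Complex.one_re, Complex.neg_re, Complex.natCast_re] at h2
      have : (0:ℝ) ≤ (m:ℝ) := Nat.cast_nonneg m
      linarith
    exact (hg.restrictScalars ℝ).comp 0 hin.differentiableAt
  set A : ℝ → ℂ := fun θ : ℝ => Complex.Gamma ((α:ℂ) - Complex.I * (θ:ℂ)) *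
      Complex.Gamma (1 + Complex.I * (θ:ℂ)) / (π:ℂ) with hAdef
  have hA : DifferentiableAt ℝ A 0 := (hGamma1.mul hGamma2).div_const _
  have hA' : HasDerivAt A (deriv A 0) 0 := hA.hasDerivAt
  -- the product rule
  have hΨfun : Ψ = fun θ : ℝ => A θ * (Complex.sin ((π:ℂ) * ((c:ℂ) - Complex.I * (θ:ℂ)))
      - Complex.sin ((π:ℂ) * (c:ℂ)) *
        ∫ u, Complex.exp (Complex.I*(θ:ℂ)*(Real.log u:ℂ)) ∂μ) := funext hΨ
  have hD : HasDerivAt Ψ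
      (deriv A 0 * (Complex.sin ((π:ℂ) * ((c:ℂ) - Complex.I * ((0:ℝ):ℂ)))
        - Complex.sin ((π:ℂ) * (c:ℂ)) *
          ∫ u, Complex.exp (Complex.I*((0:ℝ):ℂ)*(Real.log u:ℂ)) ∂μ) + A 0 * B') 0 := by
    rw [hΨfun]; exact hA'.mul hB
  have hF0 : (∫ u, Complex.exp (Complex.I * ((0:ℝ):ℂ) * (Real.log u:ℂ)) ∂μ) = 1 := by
    simp [integral_const, Measure.real, hμuniv]
  have hB0 : (Complex.sin ((π:ℂ) * ((c:ℂ) - Complex.I * ((0:ℝ):ℂ)))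
      - Complex.sin ((π:ℂ) * (c:ℂ)) *
        ∫ u, Complex.exp (Complex.I*((0:ℝ):ℂ)*(Real.log u:ℂ)) ∂μ) = 0 := by
    rw [hF0]; norm_num
  rw [hB0, mul_zero, zero_add] at hD
  refine ⟨_, hD, ?_⟩
  have hA0 : A 0 = (Real.Gamma α : ℂ) / (π:ℂ) := by
    simp [hAdef, Complex.Gamma_one, Complex.Gamma_ofReal]
  rw [hA0]
  have hRHS : Real.Gamma α * (Real.sin (π * c) / π) *
      (π * Real.cos (π * c) / Real.sin (π * c) + L) =
      Real.Gamma α / π * (π * Real.cos (π * c) + Real.sin (π * c) * L) := by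
    field_simp
  rw [hRHS, hB'def]
  push_cast [Complex.ofReal_sin, Complex.ofReal_cos]
  linear_combination (-(((Real.Gamma α : ℂ))/(π:ℂ)) *
    ((π:ℂ) * Complex.cos ((π:ℂ)*(c:ℂ)) + Complex.sin ((π:ℂ)*(c:ℂ)) * (L:ℂ))) * Complex.I_sq
end

section
/- Assume ∫_{(0,∞)} |log u| φ(du) < ∞ and set L := −∫_{(0,∞)} log u · φ(du). Let a ∈ (0,1) be the unique number with π·cot(πa) = L. Then: (a) if α ≤ 1+a, then π·cot(παρ̂) < L if and only if ρ̂ > a/α; (b) if α > 1+a, then π·cot(παρ̂) < L holds for every admissible ρ̂. (By the derivative formula i·Ψ̄′(0) = Γ(α)·(sin(παρ̂)/π)·(π·cot(παρ̂) − L), the inequality π·cot(παρ̂) < L is equivalent to the resurrected process being continuously absorbed at 0 in finite time.) -/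
open MeasureTheory Set
open scoped Real

/-! Since `α ρ̂ ∈ (0,1)` and `cot` is strictly decreasing on `(0, π)`, the inequality
`π cot(π α ρ̂) < π cot(π a)` is equivalent to `a < α ρ̂`. Admissibility also gives
`α ρ̂ > α - 1`, so `a < α ρ̂` holds automatically once `α > 1 + a`. -/

namespace Real

theorem strictAntiOn_cot : StrictAntiOn cot (Ioo 0 π) := by
  intro x hx y hy hxy
  have hsin_x : 0 < sin x := sin_pos_of_pos_of_lt_pi hx.1 hx.2
  have hsin_y : 0 < sin y := sin_pos_of_pos_of_lt_pi hy.1 hy.2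
  have hsin_sub : 0 < sin (y - x) :=
    sin_pos_of_pos_of_lt_pi (by linarith) (by linarith [hy.2, hx.1])
  rw [cot_eq_cos_div_sin, cot_eq_cos_div_sin, div_lt_div_iff₀ hsin_y hsin_x]
  rw [sin_sub] at hsin_sub
  linarith

theorem pi_mul_cot_pi_mul_lt_iff {x y : ℝ} (hx : x ∈ Ioo 0 1) (hy : y ∈ Ioo 0 1) :
    π * cot (π * y) < π * cot (π * x) ↔ x < y := by
  have hmem : ∀ {t : ℝ}, t ∈ Ioo 0 1 → π * t ∈ Ioo 0 π := fun ht =>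
    ⟨mul_pos pi_pos ht.1, mul_lt_of_lt_one_right pi_pos ht.2⟩
  rw [mul_lt_mul_iff_right₀ pi_pos, strictAntiOn_cot.lt_iff_gt (hmem hy) (hmem hx),
    mul_lt_mul_iff_right₀ pi_pos]

end Real

theorem mul_mem_Ioo_sub_one_of_mem_Ioo_one_sub_inv {α ρ : ℝ} (hα : 0 < α)
    (hρ : ρ ∈ Ioo (1 - 1 / α) (1 / α)) :
    α * ρ ∈ Ioo (α - 1) 1 := by
  constructor
  · calc α - 1 = α * (1 - 1 / α) := by field_simp
      _ < α * ρ := mul_lt_mul_of_pos_left hρ.1 hα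
  · exact (lt_div_iff₀' hα).mp hρ.2

/-- Admissible pairs `(α, ρ)` of index and positivity parameter of a stable process. -/
def Admissible (α ρ : ℝ) : Prop :=
  (α ∈ Ioo 0 1 ∧ ρ ∈ Ioo 0 1) ∨ (α ∈ Ioo 1 2 ∧ ρ ∈ Ioo (1 - 1 / α) (1 / α)) ∨
    (α = 1 ∧ ρ = 1 / 2)

namespace Admissible

variable {α ρ : ℝ}

theorem pos (h : Admissible α ρ) : 0 < α := by
  rcases h with ⟨hα, -⟩ | ⟨hα, -⟩ | ⟨rfl, -⟩
  exacts [hα.1, by linarith [hα.1], one_pos]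

theorem mul_one_sub_mem_Ioo (h : Admissible α ρ) : α * (1 - ρ) ∈ Ioo 0 1 := by
  rcases h with ⟨hα, hρ⟩ | ⟨hα, hρ⟩ | ⟨rfl, rfl⟩
  · exact ⟨mul_pos hα.1 (by linarith [hρ.2]), by nlinarith [hα.2, hρ.1, hρ.2]⟩
  · have hαρ := mul_mem_Ioo_sub_one_of_mem_Ioo_one_sub_inv (by linarith [hα.1]) hρ
    constructor <;> linarith [hα.1, hαρ.1, hαρ.2]
  · norm_num

theorem sub_one_lt_mul_one_sub (h : Admissible α ρ) : α - 1 < α * (1 - ρ) := by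
  rcases h with ⟨hα, hρ⟩ | ⟨hα, hρ⟩ | ⟨rfl, rfl⟩
  · nlinarith [hα.1, hα.2, hρ.2]
  · linarith [(mul_mem_Ioo_sub_one_of_mem_Ioo_one_sub_inv (by linarith [hα.1]) hρ).2]
  · norm_num

end Admissible

theorem absorption_criterion_general
    (α ρ : ℝ)
    (hadm : (α ∈ Set.Ioo (0 : ℝ) 1 ∧ ρ ∈ Set.Ioo (0 : ℝ) 1) ∨
      (α ∈ Set.Ioo (1 : ℝ) 2 ∧ ρ ∈ Set.Ioo (1 - 1/α) (1/α)) ∨ (α = 1 ∧ ρ = 1/2))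
    (ρh : ℝ) (hρh : ρh = 1 - ρ)
    (L : ℝ)
    (a : ℝ) (ha : a ∈ Set.Ioo (0 : ℝ) 1)
    (hacot : π * (Real.cos (π * a) / Real.sin (π * a)) = L) :
    (α ≤ 1 + a →
      (π * (Real.cos (π * (α * ρh)) / Real.sin (π * (α * ρh))) < L ↔ a / α < ρh))
    ∧ (1 + a < α →
      π * (Real.cos (π * (α * ρh)) / Real.sin (π * (α * ρh))) < L) := by
  have hadm : Admissible α ρ := hadm
  subst hρh hacot
  simp only [← Real.cot_eq_cos_div_sin]
  have hcot_lt_iff := Real.pi_mul_cot_pi_mul_lt_iff ha hadm.mul_one_sub_mem_Ioo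
  exact ⟨fun _ => hcot_lt_iff.trans (div_lt_iff₀' hadm.pos).symm,
    fun _ => hcot_lt_iff.2 (by linarith [hadm.sub_one_lt_mul_one_sub])⟩

/-- With `L = -∫ log u φ(du)` and `a ∈ (0,1)` the unique solution of `π cot(π a) = L`:
(a) if `α ≤ 1 + a`, then `π cot(π α ρ̂) < L` iff `ρ̂ > a/α`;
(b) if `α > 1 + a`, then `π cot(π α ρ̂) < L` always holds. -/
theorem absorption_criterion
    (α ρ : ℝ)
    (hadm : (α ∈ Set.Ioo (0 : ℝ) 1 ∧ ρ ∈ Set.Ioo (0 : ℝ) 1) ∨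
      (α ∈ Set.Ioo (1 : ℝ) 2 ∧ ρ ∈ Set.Ioo (1 - 1/α) (1/α)) ∨ (α = 1 ∧ ρ = 1/2))
    (ρh : ℝ) (hρh : ρh = 1 - ρ)
    (φ : Measure ℝ) [IsProbabilityMeasure φ] (hφ : φ (Set.Iic 0) = 0)
    (hlog : IntegrableOn (fun u : ℝ => |Real.log u|) (Set.Ioi 0) φ)
    (L : ℝ) (hL : L = - ∫ u in Set.Ioi (0 : ℝ), Real.log u ∂φ)
    (a : ℝ) (ha : a ∈ Set.Ioo (0 : ℝ) 1)
    (hacot : π * (Real.cos (π * a) / Real.sin (π * a)) = L) :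
    (α ≤ 1 + a →
      (π * (Real.cos (π * (α * ρh)) / Real.sin (π * (α * ρh))) < L ↔ a / α < ρh))
    ∧ (1 + a < α →
      π * (Real.cos (π * (α * ρh)) / Real.sin (π * (α * ρh))) < L) :=
  absorption_criterion_general α ρ hadm ρh hρh L a ha hacot
end

section
/- Let μ and ν be Borel measures on (0,∞) such that for every x > 0 one has ∫_{(0,∞)} (1+xu)^{−1−α} μ(du) < ∞, ∫_{(0,∞)} (1+xu)^{−1−α} ν(du) < ∞, and ∫_{(0,∞)} (1+xu)^{−1−α} μ(du) = ∫_{(0,∞)} (1+xu)^{−1−α} ν(du). Then μ = ν. (This is the two-measure form of the statement: a signed Borel measure m on (0,∞) with ∫ (1+xu)^{−1−α} |m|(du) < ∞ and ∫ (1+xu)^{−1−α} m(du) = 0 for all x > 0 is the zero measure.) -/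
open MeasureTheory Set
open scoped ENNReal NNReal

section Helpers
variable {α : ℝ}

lemma bound_aux {a u : ℝ} (ha : 0 < a) (hu : 0 < u) (n : ℕ) (β : ℝ) :
    u ^ n * (1 + a * u) ^ (β - n) ≤ a⁻¹ ^ n * (1 + a * u) ^ β := by
  have hb : (0:ℝ) < 1 + a * u := by nlinarith
  have h1 : (1 + a*u) ^ (β - (n:ℝ)) = (1+a*u) ^ β * ((1+a*u) ^ n)⁻¹ := by
    rw [sub_eq_add_neg, Real.rpow_add hb, Real.rpow_neg hb.le, Real.rpow_natCast]
  have hdiv : u / (1 + a*u) ≤ a⁻¹ := by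
    rw [div_le_iff₀ hb]; rw [inv_eq_one_div]; rw [div_mul_eq_mul_div, le_div_iff₀ ha]
    nlinarith
  calc u ^ n * (1 + a*u) ^ (β - (n:ℝ))
      = (u / (1+a*u)) ^ n * (1+a*u) ^ β := by
        rw [h1, div_pow, div_eq_mul_inv]; ring
    _ ≤ a⁻¹ ^ n * (1+a*u) ^ β := by
        apply mul_le_mul_of_nonneg_right _ (Real.rpow_nonneg hb.le β)
        exact pow_le_pow_left₀ (by positivity) hdiv n

lemma meas_aux (x : ℝ) (n : ℕ) (c : ℝ) :
    Measurable (fun u : ℝ => u ^ n * (1 + x * u) ^ c) := by fun_prop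

lemma kernel_integrable (α : ℝ) (ρ : Measure ℝ) {x : ℝ}
    (hfin : ∫⁻ u in Set.Ioi (0:ℝ), ENNReal.ofReal ((1 + x * u) ^ (-1 - α)) ∂ρ < ⊤)
    (hx : 0 < x) :
    IntegrableOn (fun u : ℝ => (1 + x*u) ^ (-1 - α)) (Ioi 0) ρ := by
  constructor
  · exact ((meas_aux x 0 (-1-α)).aestronglyMeasurable).congr
      (by filter_upwards with u using by simp)
  · rw [hasFiniteIntegral_iff_norm]
    have h : ∀ᵐ u ∂ρ.restrict (Ioi 0),
        ENNReal.ofReal ‖(1 + x*u) ^ (-1-α)‖ = ENNReal.ofReal ((1 + x*u) ^ (-1-α)) := by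
      rw [ae_restrict_iff' measurableSet_Ioi]
      filter_upwards with u hu
      have : (0:ℝ) < 1 + x*u := by nlinarith [hu.out]
      rw [Real.norm_eq_abs, abs_of_nonneg (Real.rpow_nonneg this.le _)]
    rwa [lintegral_congr_ae h]

lemma integrable_aux (α : ℝ) (ρ : Measure ℝ) {x : ℝ}
    (hfin : ∫⁻ u in Set.Ioi (0:ℝ), ENNReal.ofReal ((1 + x * u) ^ (-1 - α)) ∂ρ < ⊤)
    (hx : 0 < x) (n : ℕ) :
    IntegrableOn (fun u : ℝ => u ^ n * (1 + x*u) ^ (-1 - α - n)) (Ioi 0) ρ := by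
  apply Integrable.mono' (((kernel_integrable α ρ hfin hx).const_mul (x⁻¹ ^ n)))
    ((meas_aux x n _).aestronglyMeasurable)
  rw [ae_restrict_iff' measurableSet_Ioi]
  filter_upwards with u hu
  have hu' : (0:ℝ) < u := hu
  have hb : (0:ℝ) < 1 + x*u := by nlinarith
  rw [Real.norm_eq_abs, abs_of_nonneg (by positivity)]
  exact bound_aux hx hu' n (-1-α)
end Helpers

lemma hasDeriv_aux (α : ℝ) (hα : 0 < α) (ρ : Measure ℝ)
    (hfin : ∀ x : ℝ, 0 < x →
      ∫⁻ u in Set.Ioi (0:ℝ), ENNReal.ofReal ((1 + x * u) ^ (-1 - α)) ∂ρ < ⊤)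
    (n : ℕ) {x₀ : ℝ} (hx₀ : 0 < x₀) :
    HasDerivAt (fun x => ∫ u in Ioi (0:ℝ), u ^ n * (1 + x*u) ^ (-1 - α - n) ∂ρ)
      ((-1 - α - n) * ∫ u in Ioi (0:ℝ), u ^ (n+1) * (1 + x₀*u) ^ (-1 - α - (n+1:ℕ)) ∂ρ) x₀ := by
  have hhalf : (0:ℝ) < x₀/2 := by linarith
  set F' : ℝ → ℝ → ℝ := fun x u => u ^ n * (u * (-1 - α - n) * (1 + x*u) ^ (-1 - α - n - 1))
    with hF'
  set bound : ℝ → ℝ := fun u =>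
    (1+α+n) * ((x₀/2)⁻¹ ^ (n+1) * (1 + (x₀/2)*u) ^ (-1-α)) with hbound
  have key := hasDerivAt_integral_of_dominated_loc_of_deriv_le (μ := ρ.restrict (Ioi 0))
    (F := fun x u => u ^ n * (1 + x*u) ^ (-1 - α - n)) (F' := F') (x₀ := x₀)
    (bound := bound) (Metric.ball_mem_nhds x₀ hhalf)
    (Filter.Eventually.of_forall fun x => (meas_aux x n _).aestronglyMeasurable)
    (integrable_aux α ρ (hfin x₀ hx₀) hx₀ n)
    (by apply Measurable.aestronglyMeasurable; fun_prop)
    ?_ ?_ ?_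
  · have := key.2
    refine this.congr_deriv ?_
    rw [← integral_const_mul]
    apply integral_congr_ae
    filter_upwards with u
    rw [hF', show (-1 - α - ((n+1:ℕ):ℝ)) = -1 - α - (n:ℝ) - 1 by push_cast; ring, pow_succ]
    ring
  · -- bound
    rw [ae_restrict_iff' measurableSet_Ioi]
    filter_upwards with u hu x hx
    have hu' : (0:ℝ) < u := hu
    rw [Metric.mem_ball, Real.dist_eq, abs_sub_lt_iff] at hx
    have hxpos : x₀/2 < x := by linarith [hx.2]
    have hb : (0:ℝ) < 1 + x*u := by nlinarith
    have hb2 : (0:ℝ) < 1 + (x₀/2)*u := by nlinarith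
    have hF'eq : ‖F' x u‖ = (1+α+n) * (u ^ (n+1) * (1 + x*u) ^ (-1 - α - ((n+1:ℕ):ℝ))) := by
      rw [hF', Real.norm_eq_abs, abs_mul, abs_mul, abs_mul]
      rw [abs_of_nonneg (pow_nonneg hu'.le n), abs_of_nonneg hu'.le,
        abs_of_nonneg (Real.rpow_nonneg hb.le _),
        show |(-1 - α - (n:ℝ))| = 1 + α + n by
          have hn : (0:ℝ) ≤ n := Nat.cast_nonneg n
          rw [abs_of_neg (by linarith)]; ring]
      rw [show (-1 - α - ((n+1:ℕ):ℝ)) = -1 - α - (n:ℝ) - 1 by push_cast; ring, pow_succ]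
      ring
    rw [hF'eq, hbound]
    apply mul_le_mul_of_nonneg_left _ (by positivity)
    calc u ^ (n+1) * (1 + x*u) ^ (-1 - α - ((n+1:ℕ):ℝ))
        ≤ u ^ (n+1) * (1 + (x₀/2)*u) ^ (-1 - α - ((n+1:ℕ):ℝ)) := by
          apply mul_le_mul_of_nonneg_left _ (pow_nonneg hu'.le _)
          apply Real.rpow_le_rpow_of_nonpos hb2 (by nlinarith)
          have : (0:ℝ) ≤ (n+1:ℕ) := by positivity
          linarith
      _ ≤ (x₀/2)⁻¹ ^ (n+1) * (1 + (x₀/2)*u) ^ (-1-α) := bound_aux hhalf hu' (n+1) (-1-α)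
  · -- bound integrable
    exact ((kernel_integrable α ρ (hfin _ hhalf) hhalf).const_mul _).const_mul _
  · -- differentiability
    rw [ae_restrict_iff' measurableSet_Ioi]
    filter_upwards with u hu x hx
    have hu' : (0:ℝ) < u := hu
    rw [Metric.mem_ball, Real.dist_eq, abs_sub_lt_iff] at hx
    have hb : (0:ℝ) < 1 + x*u := by nlinarith [hx.2]
    have h1 : HasDerivAt (fun x : ℝ => 1 + x*u) u x := by
      simpa using ((hasDerivAt_id x).mul_const u).const_add 1
    have h2 := h1.rpow_const (p := -1 - α - n) (Or.inl hb.ne')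
    simpa [hF'] using h2.const_mul (u ^ n)

lemma moments_eq (α : ℝ) (hα : 0 < α) (μ ν : Measure ℝ)
    (hμfin : ∀ x : ℝ, 0 < x →
      ∫⁻ u in Set.Ioi (0:ℝ), ENNReal.ofReal ((1 + x * u) ^ (-1 - α)) ∂μ < ⊤)
    (hνfin : ∀ x : ℝ, 0 < x →
      ∫⁻ u in Set.Ioi (0:ℝ), ENNReal.ofReal ((1 + x * u) ^ (-1 - α)) ∂ν < ⊤)
    (heq : ∀ x : ℝ, 0 < x →
      ∫⁻ u in Set.Ioi (0 : ℝ), ENNReal.ofReal ((1 + x * u) ^ (-1 - α)) ∂μ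
        = ∫⁻ u in Set.Ioi (0 : ℝ), ENNReal.ofReal ((1 + x * u) ^ (-1 - α)) ∂ν) :
    ∀ n : ℕ, ∀ x : ℝ, 0 < x →
      ∫ u in Ioi (0:ℝ), u ^ n * (1 + x*u) ^ (-1 - α - n) ∂μ
        = ∫ u in Ioi (0:ℝ), u ^ n * (1 + x*u) ^ (-1 - α - n) ∂ν := by
  intro n
  induction n with
  | zero =>
    intro x hx
    have base : ∀ ρ : Measure ℝ,
        ∫ u in Ioi (0:ℝ), u ^ 0 * (1 + x*u) ^ (-1 - α - (0:ℕ)) ∂ρ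
          = (∫⁻ u in Ioi (0:ℝ), ENNReal.ofReal ((1 + x*u) ^ (-1 - α)) ∂ρ).toReal := by
      intro ρ
      have h0 : (fun u : ℝ => u ^ 0 * (1 + x*u) ^ (-1 - α - (0:ℕ))) =
          fun u : ℝ => (1 + x*u) ^ (-1 - α) := by
        funext u; simp
      rw [h0, integral_eq_lintegral_of_nonneg_ae]
      · refine (ae_restrict_iff' measurableSet_Ioi).mpr ?_
        filter_upwards with u hu
        have : (0:ℝ) < 1 + x*u := by nlinarith [hu.out]
        exact Real.rpow_nonneg this.le _
      · exact (by fun_prop : Measurable fun u : ℝ => (1 + x*u) ^ (-1-α)).aestronglyMeasurable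
    rw [base μ, base ν, heq x hx]
  | succ n ih =>
    intro x hx
    have h1 := hasDeriv_aux α hα μ hμfin n hx
    have h2 := hasDeriv_aux α hα ν hνfin n hx
    have hcongr : (fun y => ∫ u in Ioi (0:ℝ), u ^ n * (1 + y*u) ^ (-1 - α - n) ∂μ)
        =ᶠ[nhds x] (fun y => ∫ u in Ioi (0:ℝ), u ^ n * (1 + y*u) ^ (-1 - α - n) ∂ν) := by
      filter_upwards [IsOpen.mem_nhds isOpen_Ioi (mem_Ioi.mpr hx)] with y hy
      exact ih y hy
    have h2' := h2.congr_of_eventuallyEq hcongr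
    have := h1.unique h2'
    have hc : (-1 - α - (n:ℝ)) ≠ 0 := by
      have hn : (0:ℝ) ≤ n := Nat.cast_nonneg n
      intro h; nlinarith [h]
    exact mul_left_cancel₀ hc this

lemma pow_integrable (ρ : Measure ℝ) [IsFiniteMeasure ρ]
    (hs : ∀ᵐ t ∂ρ, t ∈ Icc (0:ℝ) 1) (n : ℕ) :
    Integrable (fun t : ℝ => t ^ n) ρ := by
  apply Integrable.mono' (integrable_const (1:ℝ))
    ((by fun_prop : Measurable fun t : ℝ => t ^ n).aestronglyMeasurable)
  filter_upwards [hs] with t ht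
  rw [Real.norm_eq_abs, abs_pow, abs_of_nonneg ht.1]
  exact pow_le_one₀ ht.1 ht.2

lemma ext_of_moments (μ' ν' : Measure ℝ) [IsFiniteMeasure μ'] [IsFiniteMeasure ν']
    (hμs : ∀ᵐ t ∂μ', t ∈ Icc (0:ℝ) 1) (hνs : ∀ᵐ t ∂ν', t ∈ Icc (0:ℝ) 1)
    (hmom : ∀ n : ℕ, ∫ t, t ^ n ∂μ' = ∫ t, t ^ n ∂ν') : μ' = ν' := by
  have hpoly : ∀ p : Polynomial ℝ, ∫ t, p.eval t ∂μ' = ∫ t, p.eval t ∂ν' := by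
    intro p
    have hev : ∀ ρ : Measure ℝ, ∫ t, p.eval t ∂ρ =
        ∫ t, ∑ i ∈ Finset.range (p.natDegree + 1), p.coeff i * t ^ i ∂ρ := by
      intro ρ; congr 1; funext t; exact p.eval_eq_sum_range t
    rw [hev μ', hev ν',
      integral_finset_sum _ (fun i _ => (pow_integrable μ' hμs i).const_mul _),
      integral_finset_sum _ (fun i _ => (pow_integrable ν' hνs i).const_mul _)]
    refine Finset.sum_congr rfl fun i _ => ?_
    rw [integral_const_mul, integral_const_mul, hmom i]
  apply ext_of_forall_lintegral_eq_of_IsFiniteMeasure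
  intro f
  set g : ℝ → ℝ := fun t => (f t : ℝ) with hg
  have hgc : Continuous g := NNReal.continuous_coe.comp f.continuous
  obtain ⟨C, hC⟩ := f.bounded
  have hgint : ∀ ρ : Measure ℝ, [IsFiniteMeasure ρ] → Integrable g ρ := by
    intro ρ _
    apply Integrable.mono' (integrable_const ((f 0 : ℝ) + C)) hgc.aestronglyMeasurable
    filter_upwards with t
    have := hC t 0
    rw [NNReal.dist_eq] at this
    have h1 := abs_le.mp this
    rw [hg, Real.norm_eq_abs, abs_of_nonneg (f t).coe_nonneg]
    linarith [h1.2]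
  rw [lintegral_coe_eq_integral _ (hgint μ'), lintegral_coe_eq_integral _ (hgint ν')]
  congr 1
  -- ε-approximation
  have key : ∀ ε : ℝ, 0 < ε → |∫ t, g t ∂μ' - ∫ t, g t ∂ν'| ≤
      ε * ((μ' univ).toReal + (ν' univ).toReal) := by
    intro ε hε
    obtain ⟨p, hp⟩ := exists_polynomial_near_of_continuousOn 0 1 g hgc.continuousOn ε hε
    have hpint : ∀ ρ : Measure ℝ, [IsFiniteMeasure ρ] → (∀ᵐ t ∂ρ, t ∈ Icc (0:ℝ) 1) →
        Integrable (fun t => p.eval t) ρ := by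
      intro ρ _ hs
      obtain ⟨C, hC⟩ := isCompact_Icc.exists_bound_of_continuousOn
        (p.continuous_aeval.continuousOn (s := Icc (0:ℝ) 1))
      apply Integrable.mono' (integrable_const C) p.continuous_aeval.aestronglyMeasurable
      filter_upwards [hs] with t ht
      simpa using hC t ht
    have est : ∀ ρ : Measure ℝ, [IsFiniteMeasure ρ] → (∀ᵐ t ∂ρ, t ∈ Icc (0:ℝ) 1) →
        |∫ t, g t ∂ρ - ∫ t, p.eval t ∂ρ| ≤ ε * (ρ univ).toReal := by
      intro ρ _ hs
      rw [← integral_sub (hgint ρ) (hpint ρ hs)]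
      calc |∫ t, (g t - p.eval t) ∂ρ| ≤ ∫ t, |g t - p.eval t| ∂ρ := by
            simpa [Real.norm_eq_abs] using norm_integral_le_integral_norm (fun t => g t - p.eval t)
        _ ≤ ∫ _t, ε ∂ρ := by
            apply integral_mono_ae (((hgint ρ).sub (hpint ρ hs)).abs) (integrable_const ε)
            filter_upwards [hs] with t ht
            simp only [Pi.sub_apply]
            rw [abs_sub_comm]
            exact (hp t ht).le
        _ = ε * (ρ univ).toReal := by rw [integral_const, smul_eq_mul, measureReal_def]; ring
    calc |∫ t, g t ∂μ' - ∫ t, g t ∂ν'|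
        ≤ |∫ t, g t ∂μ' - ∫ t, p.eval t ∂μ'| + |∫ t, p.eval t ∂ν' - ∫ t, g t ∂ν'| := by
          rw [hpoly p]
          exact abs_sub_le _ _ _
      _ ≤ ε * (μ' univ).toReal + ε * (ν' univ).toReal := by
          refine add_le_add (est μ' hμs) ?_
          rw [abs_sub_comm]; exact est ν' hνs
      _ = ε * ((μ' univ).toReal + (ν' univ).toReal) := by ring
  have : |∫ t, g t ∂μ' - ∫ t, g t ∂ν'| ≤ 0 := by
    set M := (μ' univ).toReal + (ν' univ).toReal with hM
    have hM0 : 0 ≤ M := by positivity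
    refine le_of_forall_pos_le_add fun ε hε => ?_
    have := key (ε / (M + 1)) (by positivity)
    calc |∫ t, g t ∂μ' - ∫ t, g t ∂ν'| ≤ ε / (M + 1) * M := this
      _ ≤ ε := by
          rw [div_mul_eq_mul_div, div_le_iff₀ (by linarith)]
          nlinarith
      _ = 0 + ε := by ring
  have h0 : |∫ t, g t ∂μ' - ∫ t, g t ∂ν'| = 0 := le_antisymm this (abs_nonneg _)
  exact sub_eq_zero.mp (abs_eq_zero.mp h0)

lemma pushforward_moment (α : ℝ) (ρ : Measure ℝ) (n : ℕ) :
    ∫ t, t ^ n ∂(((ρ.restrict (Ioi 0)).withDensity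
        (fun u => (Real.toNNReal ((1+u) ^ (-1-α)) : ℝ≥0∞))).map (fun u : ℝ => u / (1 + |u|)))
      = ∫ u in Ioi (0:ℝ), u ^ n * (1+u) ^ (-1 - α - n) ∂ρ := by
  have hPc : Continuous fun u : ℝ => u / (1 + |u|) :=
    continuous_id.div (by continuity) (fun u => by positivity)
  have hdmeas : Measurable fun u : ℝ => Real.toNNReal ((1+u) ^ (-1-α)) := by
    apply Measurable.real_toNNReal; fun_prop
  rw [integral_map hPc.measurable.aemeasurable ((continuous_pow n).aestronglyMeasurable),
    integral_withDensity_eq_integral_smul hdmeas]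
  apply setIntegral_congr_fun measurableSet_Ioi
  intro u hu
  have hu' : (0:ℝ) < u := hu
  have hb : (0:ℝ) < 1 + u := by linarith
  have h1 : (1 + u) ^ (-1 - α - (n:ℝ)) = (1+u) ^ (-1-α) * ((1+u) ^ n)⁻¹ := by
    rw [sub_eq_add_neg, Real.rpow_add hb, Real.rpow_neg hb.le, Real.rpow_natCast]
  simp only [NNReal.smul_def, Real.coe_toNNReal _ (Real.rpow_nonneg hb.le _), smul_eq_mul,
    abs_of_pos hu', div_pow, h1, div_eq_mul_inv]
  ring


/-- Uniqueness: if two Borel measures on `(0,∞)` have the same (finite) integrals of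
`u ↦ (1+xu)^{-1-α}` for all `x > 0`, then they coincide. -/
theorem measure_determined_by_kernel
    (α : ℝ) (hα : α ∈ Set.Ioo (0 : ℝ) 2)
    (μ ν : Measure ℝ) (hμ0 : μ (Set.Iic 0) = 0) (hν0 : ν (Set.Iic 0) = 0)
    (hμfin : ∀ x : ℝ, 0 < x →
      ∫⁻ u in Set.Ioi (0 : ℝ), ENNReal.ofReal ((1 + x * u) ^ (-1 - α)) ∂μ < ⊤)
    (hνfin : ∀ x : ℝ, 0 < x →
      ∫⁻ u in Set.Ioi (0 : ℝ), ENNReal.ofReal ((1 + x * u) ^ (-1 - α)) ∂ν < ⊤)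
    (heq : ∀ x : ℝ, 0 < x →
      ∫⁻ u in Set.Ioi (0 : ℝ), ENNReal.ofReal ((1 + x * u) ^ (-1 - α)) ∂μ
        = ∫⁻ u in Set.Ioi (0 : ℝ), ENNReal.ofReal ((1 + x * u) ^ (-1 - α)) ∂ν) :
    μ = ν := by
  obtain ⟨hα0, -⟩ := hα
  have hdmeas : Measurable fun u : ℝ => (Real.toNNReal ((1+u) ^ (-1-α)) : ℝ≥0∞) := by
    apply Measurable.coe_nnreal_ennreal; apply Measurable.real_toNNReal; fun_prop
  set w : ℝ → ℝ≥0∞ := fun u => (Real.toNNReal ((1+u) ^ (-1-α)) : ℝ≥0∞) with hw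
  set P : ℝ → ℝ := fun u => u / (1 + |u|) with hP
  have hPc : Continuous P := continuous_id.div (by continuity) (fun u => by positivity)
  set Q : ℝ → ℝ := fun t => t / (1 - |t|) with hQ
  have hQm : Measurable Q := measurable_id.div (measurable_const.sub measurable_abs)
  have hQP : Q ∘ P = id := by
    funext u
    have h1 : (0:ℝ) < 1 + |u| := by positivity
    simp only [hP, hQ, Function.comp_apply, id_eq, abs_div, abs_of_pos h1]
    rw [show 1 - |u| / (1 + |u|) = 1 / (1+|u|) by field_simp; ring]
    field_simp
  -- weighted measures
  set μ' := (μ.restrict (Ioi 0)).withDensity w with hμ'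
  set ν' := (ν.restrict (Ioi 0)).withDensity w with hν'
  have mass : ∀ ρ : Measure ℝ, ((ρ.restrict (Ioi 0)).withDensity w) univ
      = ∫⁻ u in Ioi (0:ℝ), ENNReal.ofReal ((1 + 1 * u) ^ (-1 - α)) ∂ρ := by
    intro ρ
    rw [withDensity_apply _ MeasurableSet.univ, Measure.restrict_univ]
    apply lintegral_congr
    intro u
    simp [hw, ENNReal.ofReal, one_mul]
  haveI : IsFiniteMeasure μ' := ⟨by rw [hμ', mass μ]; exact hμfin 1 one_pos⟩
  haveI : IsFiniteMeasure ν' := ⟨by rw [hν', mass ν]; exact hνfin 1 one_pos⟩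
  -- pushforward measures
  set μt := μ'.map P with hμt
  set νt := ν'.map P with hνt
  haveI : IsFiniteMeasure μt := ⟨by
    rw [hμt, Measure.map_apply hPc.measurable MeasurableSet.univ]
    exact measure_lt_top μ' _⟩
  haveI : IsFiniteMeasure νt := ⟨by
    rw [hνt, Measure.map_apply hPc.measurable MeasurableSet.univ]
    exact measure_lt_top ν' _⟩
  -- supported in Icc 0 1
  have hcompl : ∀ ρ : Measure ℝ, ((ρ.restrict (Ioi 0)).withDensity w) ((Ioi (0:ℝ))ᶜ) = 0 := by
    intro ρ
    rw [withDensity_apply _ measurableSet_Ioi.compl]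
    apply setLIntegral_measure_zero
    rw [Measure.restrict_apply measurableSet_Ioi.compl, compl_inter_self]
    simp
  have hsub : P ⁻¹' (Icc (0:ℝ) 1)ᶜ ⊆ (Ioi (0:ℝ))ᶜ := by
    intro u hu
    simp only [mem_preimage, mem_compl_iff, mem_Icc, not_and_or] at hu
    intro hu'
    have hup : (0:ℝ) < u := hu'
    have h1 : (0:ℝ) < 1 + |u| := by positivity
    apply hu.elim
    · intro h; apply h; positivity
    · intro h; apply h
      rw [hP, div_le_one h1, abs_of_pos hup]; linarith
  have hmem : ∀ (ρ : Measure ℝ), ∀ᵐ t ∂(((ρ.restrict (Ioi 0)).withDensity w).map P),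
      t ∈ Icc (0:ℝ) 1 := by
    intro ρ
    rw [ae_iff]
    have hset : {t : ℝ | ¬ t ∈ Icc (0:ℝ) 1} = (Icc (0:ℝ) 1)ᶜ := rfl
    rw [hset, Measure.map_apply hPc.measurable measurableSet_Icc.compl]
    exact le_antisymm ((measure_mono hsub).trans (hcompl ρ).le) (zero_le)
  -- moments
  have hmom : ∀ n : ℕ, ∫ t, t ^ n ∂μt = ∫ t, t ^ n ∂νt := by
    intro n
    rw [hμt, hνt, hμ', hν', pushforward_moment α μ n, pushforward_moment α ν n]
    have := moments_eq α hα0 μ ν hμfin hνfin heq n 1 one_pos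
    simpa [one_mul] using this
  have htilde : μt = νt := ext_of_moments μt νt (hmem μ) (hmem ν) hmom
  -- recover μ' = ν'
  have hμν' : μ' = ν' := by
    have h := congrArg (Measure.map Q) htilde
    rwa [hμt, hνt, Measure.map_map hQm hPc.measurable, Measure.map_map hQm hPc.measurable,
      hQP, Measure.map_id, Measure.map_id] at h
  -- invert the density
  set winv : ℝ → ℝ≥0∞ := fun u => ENNReal.ofReal ((1+u) ^ (1+α)) with hwinv
  have hwinvm : Measurable winv := by
    apply Measurable.ennreal_ofReal; fun_prop
  have hinvert : ∀ ρ : Measure ℝ,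
      (((ρ.restrict (Ioi 0)).withDensity w).withDensity winv) = ρ.restrict (Ioi 0) := by
    intro ρ
    rw [← withDensity_mul _ hdmeas hwinvm]
    have hone : (w * winv) =ᵐ[ρ.restrict (Ioi 0)] 1 := by
      rw [Filter.EventuallyEq, ae_restrict_iff' measurableSet_Ioi]
      filter_upwards with u hu
      have hb : (0:ℝ) < 1 + u := by have : (0:ℝ) < u := hu; linarith
      simp only [Pi.mul_apply, Pi.one_apply, hw, hwinv]
      rw [show ((Real.toNNReal ((1+u) ^ (-1-α)) : ℝ≥0∞)) = ENNReal.ofReal ((1+u) ^ (-1-α)) from rfl,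
        ← ENNReal.ofReal_mul (Real.rpow_nonneg hb.le _), ← Real.rpow_add hb]
      norm_num
    rw [withDensity_congr_ae hone, withDensity_one]
  have hres : μ.restrict (Ioi 0) = ν.restrict (Ioi 0) := by
    rw [← hinvert μ, ← hinvert ν, ← hμ', ← hν', hμν']
  -- conclude
  have hfull : ∀ ρ : Measure ℝ, ρ (Set.Iic 0) = 0 → ρ.restrict (Ioi 0) = ρ := by
    intro ρ h0
    apply Measure.restrict_eq_self_of_ae_mem
    rw [ae_iff]
    have : {x : ℝ | ¬ x ∈ Ioi 0} = Iic 0 := by ext x; simp [not_lt]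
    rw [this]; exact h0
  rw [← hfull μ hμ0, ← hfull ν hν0, hres]
end

section
/- q(x,y) = q(y,x) for all x,y > 0 if and only if the pushforward of φ under the map t ↦ 1/t equals the measure A ↦ ∫_A t^{α−1} φ(dt) on the Borel sets of (0,∞) (that is, φ_* = t^{α−1}·φ, where φ_* denotes the image of φ under t ↦ 1/t). -/
open MeasureTheory Set ENNReal Metric

private lemma rpow_key {α x y t : ℝ} (hx : 0 < x) (hy : 0 < y) (ht : 0 < t) :
    (x + y / t) ^ (-1 - α) / t = t ^ α * (x * t + y) ^ (-1 - α) := by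
  have hxty : 0 < x * t + y := by positivity
  have h1 : x + y / t = (x * t + y) / t := by field_simp
  have h2 : t ^ (-1 - α) = (t * t ^ α)⁻¹ := by
    rw [show (-1 - α : ℝ) = -(1 + α) by ring, Real.rpow_neg ht.le,
      Real.rpow_add ht, Real.rpow_one]
  rw [h1, Real.div_rpow hxty.le ht.le, h2]
  have h3 : (0:ℝ) < t ^ α := Real.rpow_pos_of_pos ht α
  field_simp

private lemma Kk_bound {α x y t : ℝ} (hα : 0 < α) (hx : 0 < x) (hy : 0 < y) (ht : 0 < t) :
    t ^ α * (x * t + y) ^ (-1 - α) ≤ x ^ (-1 - α) + y ^ (-1 - α) := by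
  have he : (-1 - α : ℝ) ≤ 0 := by linarith
  have hxp : (0:ℝ) < x ^ (-1-α) := Real.rpow_pos_of_pos hx _
  have hyp : (0:ℝ) < y ^ (-1-α) := Real.rpow_pos_of_pos hy _
  rcases le_or_gt t 1 with h1 | h1
  · have hta : t ^ α ≤ 1 := Real.rpow_le_one ht.le h1 hα.le
    have hb : (x*t+y) ^ (-1-α) ≤ y ^ (-1-α) :=
      Real.rpow_le_rpow_of_nonpos hy (by nlinarith) he
    nlinarith [Real.rpow_pos_of_pos ht α,
      Real.rpow_pos_of_pos (show (0:ℝ) < x*t+y by positivity) (-1-α)]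
  · have hb : (x*t+y) ^ (-1-α) ≤ (x*t) ^ (-1-α) :=
      Real.rpow_le_rpow_of_nonpos (by positivity) (by nlinarith) he
    have hxt : (x*t) ^ (-1-α) = x ^ (-1-α) * t ^ (-1-α) :=
      Real.mul_rpow hx.le ht.le
    have ht1 : t ^ α * t ^ (-1-α) = t⁻¹ := by
      rw [← Real.rpow_add ht, show α + (-1 - α) = -1 by ring, Real.rpow_neg_one]
    have hti : t⁻¹ ≤ 1 := by
      rw [inv_le_one_iff₀]; right; linarith
    calc t ^ α * (x*t+y) ^ (-1-α) ≤ t ^ α * (x ^ (-1-α) * t ^ (-1-α)) := by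
          rw [hxt] at hb
          exact mul_le_mul_of_nonneg_left hb (Real.rpow_nonneg ht.le α)
      _ = x ^ (-1-α) * t⁻¹ := by rw [← ht1]; ring
      _ ≤ x ^ (-1-α) + y ^ (-1-α) := by nlinarith

private lemma A_ne_top {α x y : ℝ} {φ : Measure ℝ} [IsFiniteMeasure φ]
    (hα : 0 < α) (hx : 0 < x) (hy : 0 < y) :
    ∫⁻ t in Ioi (0:ℝ), ENNReal.ofReal (t ^ α * (x * t + y) ^ (-1 - α)) ∂φ ≠ ⊤ := by
  have hb : ∫⁻ t in Ioi (0:ℝ), ENNReal.ofReal (t ^ α * (x * t + y) ^ (-1 - α)) ∂φ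
      ≤ ∫⁻ _ in Ioi (0:ℝ), ENNReal.ofReal (x ^ (-1 - α) + y ^ (-1 - α)) ∂φ := by
    refine setLIntegral_mono (by fun_prop) (fun t ht => ?_)
    exact ENNReal.ofReal_le_ofReal (Kk_bound hα hx hy ht)
  refine ne_top_of_le_ne_top ?_ hb
  simp only [lintegral_const, Measure.restrict_apply MeasurableSet.univ, univ_inter]
  exact ENNReal.mul_ne_top ENNReal.ofReal_ne_top (measure_ne_top _ _)

private lemma int_eq_toReal {α x y : ℝ} {φ : Measure ℝ} (hx : 0 < x) (hy : 0 < y) :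
    ∫ t in Ioi (0:ℝ), (x + y / t) ^ (-1 - α) / t ∂φ
      = (∫⁻ t in Ioi (0:ℝ), ENNReal.ofReal (t ^ α * (x * t + y) ^ (-1 - α)) ∂φ).toReal := by
  rw [integral_eq_lintegral_of_nonneg_ae]
  · congr 1
    refine setLIntegral_congr_fun measurableSet_Ioi (fun t ht => ?_)
    rw [rpow_key hx hy ht]
  · filter_upwards [self_mem_ae_restrict (measurableSet_Ioi : MeasurableSet (Ioi (0:ℝ)))]
      with t ht
    have ht' : (0:ℝ) < t := ht
    have h1 : (0:ℝ) < x + y / t := by positivity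
    positivity
  · apply Measurable.aestronglyMeasurable
    fun_prop

private lemma lint_withDensity {α x y : ℝ} {φ : Measure ℝ} (hx : 0 < x) (hy : 0 < y) :
    ∫⁻ t in Ioi (0:ℝ), ENNReal.ofReal (t * (x * t + y) ^ (-1 - α))
        ∂(φ.withDensity (fun t => ENNReal.ofReal (t ^ (α - 1))))
      = ∫⁻ t in Ioi (0:ℝ), ENNReal.ofReal (t ^ α * (x * t + y) ^ (-1 - α)) ∂φ := by
  rw [restrict_withDensity measurableSet_Ioi,
    lintegral_withDensity_eq_lintegral_mul _ (by fun_prop) (by fun_prop)]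
  refine setLIntegral_congr_fun measurableSet_Ioi (fun t ht => ?_)
  have ht' : (0:ℝ) < t := ht
  simp only [Pi.mul_apply]
  rw [← ENNReal.ofReal_mul (Real.rpow_nonneg ht'.le _)]
  congr 1
  rw [show α = (α - 1) + 1 by ring, Real.rpow_add ht', Real.rpow_one]
  ring

private lemma lint_map {α x y : ℝ} {φ : Measure ℝ} (hφ : φ (Iic 0) = 0)
    (hx : 0 < x) (hy : 0 < y) :
    ∫⁻ t in Ioi (0:ℝ), ENNReal.ofReal (t * (x * t + y) ^ (-1 - α))
        ∂(Measure.map (fun t : ℝ => t⁻¹) φ)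
      = ∫⁻ t in Ioi (0:ℝ), ENNReal.ofReal (t ^ α * (y * t + x) ^ (-1 - α)) ∂φ := by
  have hae : ∀ᵐ t ∂φ, t ∈ Ioi (0:ℝ) := by
    rw [ae_iff]
    simpa [compl_setOf, Ioi, Iic] using hφ
  rw [← lintegral_indicator measurableSet_Ioi,
    lintegral_map (Measurable.indicator (by fun_prop) measurableSet_Ioi) measurable_inv,
    ← lintegral_indicator (μ := φ) measurableSet_Ioi]
  refine lintegral_congr_ae ?_
  filter_upwards [hae] with t ht
  have ht' : (0:ℝ) < t := ht
  rw [Set.indicator_of_mem ht, Set.indicator_of_mem (by exact inv_pos.mpr ht')]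
  congr 1
  have := rpow_key (α := α) hy hx ht'
  calc t⁻¹ * (x * t⁻¹ + y) ^ (-1 - α) = (y + x / t) ^ (-1 - α) / t := by
        rw [div_eq_mul_inv]; ring_nf
    _ = t ^ α * (y * t + x) ^ (-1 - α) := this

private noncomputable def Ff (α : ℝ) (n : ℕ) (s : ℝ) : ℝ → ℝ :=
  (Ioi (0:ℝ)).indicator (fun t => (t+1) ^ (1+α) * (t+s) ^ (-1-α-(n:ℝ)))

private lemma Ff_nonneg {α : ℝ} {n : ℕ} {s : ℝ} (hs : 0 < s) (t : ℝ) : 0 ≤ Ff α n s t := by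
  unfold Ff
  by_cases ht : t ∈ Ioi (0:ℝ)
  · rw [indicator_of_mem ht]
    have ht' : (0:ℝ) < t := ht
    have h1 : (0:ℝ) < t + 1 := by linarith
    have h2 : (0:ℝ) < t + s := by linarith
    positivity
  · rw [indicator_of_notMem ht]

private lemma Ff_meas {α : ℝ} {n : ℕ} {s : ℝ} : Measurable (Ff α n s) :=
  Measurable.indicator (by fun_prop) measurableSet_Ioi

private lemma Ff_le {α : ℝ} (hα : 0 < α) {n : ℕ} {s : ℝ} (hs : 0 < s) (t : ℝ) :
    Ff α n s t ≤ (max 1 s⁻¹) ^ (1+α) * s ^ (-(n:ℝ)) := by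
  have hC : (0:ℝ) < (max 1 s⁻¹) ^ (1+α) * s ^ (-(n:ℝ)) := by positivity
  unfold Ff
  by_cases ht : t ∈ Ioi (0:ℝ)
  swap
  · rw [indicator_of_notMem ht]; exact hC.le
  rw [indicator_of_mem ht]
  have ht' : (0:ℝ) < t := ht
  have hts : (0:ℝ) < t + s := by linarith
  have ht1 : (0:ℝ) < t + 1 := by linarith
  have e1 : (t+s) ^ (-1-α-(n:ℝ)) = (t+s) ^ (-(1+α)) * (t+s) ^ (-(n:ℝ)) := by
    rw [← Real.rpow_add hts]; ring_nf
  have e2 : (t+1) ^ (1+α) * (t+s) ^ (-(1+α)) = ((t+1)/(t+s)) ^ (1+α) := by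
    rw [Real.div_rpow ht1.le hts.le, Real.rpow_neg hts.le, div_eq_mul_inv]
  have h3 : (t+1)/(t+s) ≤ max 1 s⁻¹ := by
    rcases le_or_gt 1 s with h | h
    · refine le_max_of_le_left ?_
      rw [div_le_one hts]; linarith
    · refine le_max_of_le_right ?_
      rw [div_le_iff₀ hts, inv_mul_eq_div, le_div_iff₀ hs]
      nlinarith
  have h4 : ((t+1)/(t+s)) ^ (1+α) ≤ (max 1 s⁻¹) ^ (1+α) :=
    Real.rpow_le_rpow (by positivity) h3 (by linarith)
  have h5 : (t+s) ^ (-(n:ℝ)) ≤ s ^ (-(n:ℝ)) :=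
    Real.rpow_le_rpow_of_nonpos hs (by linarith) (by simp)
  calc (t+1) ^ (1+α) * (t+s) ^ (-1-α-(n:ℝ))
      = ((t+1)/(t+s)) ^ (1+α) * (t+s) ^ (-(n:ℝ)) := by rw [e1, ← e2]; ring
    _ ≤ (max 1 s⁻¹) ^ (1+α) * s ^ (-(n:ℝ)) := by
        apply mul_le_mul h4 h5 (by positivity) (by positivity)

private lemma Ff_integrable {α : ℝ} (hα : 0 < α) {n : ℕ} {s : ℝ} (hs : 0 < s)
    (μ : Measure ℝ) [IsFiniteMeasure μ] : Integrable (Ff α n s) μ := by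
  refine Integrable.mono' (integrable_const ((max 1 s⁻¹) ^ (1+α) * s ^ (-(n:ℝ))))
    Ff_meas.aestronglyMeasurable ?_
  filter_upwards with t
  rw [Real.norm_eq_abs, abs_of_nonneg (Ff_nonneg hs t)]
  exact Ff_le hα hs t

private lemma gg_hasDeriv {α : ℝ} (hα : 0 < α) {n : ℕ} {s : ℝ} (hs : 0 < s)
    (μ : Measure ℝ) [IsFiniteMeasure μ] (hμ : μ (Iic 0) = 0) :
    HasDerivAt (fun u => ∫ t, Ff α n u t ∂μ)
      ((-1-α-(n:ℝ)) * ∫ t, Ff α (n+1) s t ∂μ) s := by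
  have hae : ∀ᵐ t ∂μ, t ∈ Ioi (0:ℝ) := by
    rw [ae_iff]; simpa [compl_setOf, Ioi, Iic] using hμ
  have hball : ∀ u ∈ ball s (s/2), s/2 < u := by
    intro u hu
    rw [mem_ball, Real.dist_eq, abs_lt] at hu
    linarith [hu.1]
  have key := hasDerivAt_integral_of_dominated_loc_of_deriv_le
    (F := fun u t => Ff α n u t)
    (F' := fun u t => (-1-α-(n:ℝ)) * Ff α (n+1) u t)
    (bound := fun _ => (1+α+(n:ℝ)) * ((max 1 (s/2)⁻¹) ^ (1+α) * (s/2) ^ (-((n+1:ℕ):ℝ))))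
    (μ := μ) (x₀ := s) (ball_mem_nhds s (half_pos hs))
    (Filter.Eventually.of_forall fun u => Ff_meas.aestronglyMeasurable)
    (Ff_integrable hα hs μ)
    (Ff_meas.aestronglyMeasurable.const_mul _)
    ?_ (integrable_const _) ?_
  · have k2 := key.2
    rw [integral_const_mul] at k2
    exact k2
  · filter_upwards [hae] with t ht u hu
    have hu2 : 0 < u := lt_trans (half_pos hs) (hball u hu)
    rw [Real.norm_eq_abs, abs_mul, abs_of_nonneg (Ff_nonneg hu2 t)]
    have habs : |(-1-α-(n:ℝ))| = 1+α+(n:ℝ) := by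
      rw [abs_of_nonpos (by nlinarith [Nat.cast_nonneg (α := ℝ) n])]
      ring
    rw [habs]
    refine mul_le_mul_of_nonneg_left ?_ (by positivity)
    have hmono : Ff α (n+1) u t ≤ Ff α (n+1) (s/2) t := by
      unfold Ff
      by_cases h : t ∈ Ioi (0:ℝ)
      · rw [indicator_of_mem h, indicator_of_mem h]
        have ht' : (0:ℝ) < t := h
        refine mul_le_mul_of_nonneg_left ?_ (by positivity)
        refine Real.rpow_le_rpow_of_nonpos (by linarith) (by linarith [hball u hu]) ?_
        have : (0:ℝ) ≤ ((n+1:ℕ):ℝ) := by positivity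
        nlinarith
      · simp [indicator_of_notMem h]
    exact hmono.trans (Ff_le hα (half_pos hs) t)
  · filter_upwards [hae] with t ht u hu
    have ht' : (0:ℝ) < t := ht
    have hu2 : (0:ℝ) < u := lt_trans (half_pos hs) (hball u hu)
    have heq : ∀ v, Ff α n v t = (t+1) ^ (1+α) * (t+v) ^ (-1-α-(n:ℝ)) := fun v => by
      unfold Ff; rw [indicator_of_mem ht]
    have heq2 : Ff α (n+1) u t = (t+1) ^ (1+α) * (t+u) ^ (-1-α-((n:ℕ)+1:ℝ)) := by
      unfold Ff; rw [indicator_of_mem ht]; norm_num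
    simp only [heq]
    have hd : HasDerivAt (fun v => (t+v) ^ (-1-α-(n:ℝ)))
        (1 * (-1-α-(n:ℝ)) * (t+u) ^ (-1-α-(n:ℝ)-1)) u :=
      (HasDerivAt.rpow_const ((hasDerivAt_id u).const_add t)
        (Or.inl (by positivity)))
    have := hd.const_mul ((t+1) ^ (1+α))
    refine this.congr_deriv ?_
    rw [heq2]
    rw [show (-1-α-((n:ℕ)+1:ℝ)) = (-1-α-(n:ℝ)-1) by ring]
    ring

private lemma moments_eq_s11 {α : ℝ} (hα : 0 < α) (μ ν : Measure ℝ)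
    [IsFiniteMeasure μ] [IsFiniteMeasure ν] (hμ : μ (Iic 0) = 0) (hν : ν (Iic 0) = 0)
    (H : ∀ s : ℝ, 0 < s → ∫ t, Ff α 0 s t ∂μ = ∫ t, Ff α 0 s t ∂ν) :
    ∀ n : ℕ, ∀ s : ℝ, 0 < s → ∫ t, Ff α n s t ∂μ = ∫ t, Ff α n s t ∂ν := by
  intro n
  induction n with
  | zero => exact H
  | succ n ih =>
    intro s hs
    have hder1 := gg_hasDeriv (n := n) hα hs μ hμ
    have hder2 := gg_hasDeriv (n := n) hα hs ν hν
    have hee : (fun u => ∫ t, Ff α n u t ∂ν) =ᶠ[nhds s] (fun u => ∫ t, Ff α n u t ∂μ) := by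
      filter_upwards [Ioi_mem_nhds hs] with u hu
      exact (ih u hu).symm
    have hder2' : HasDerivAt (fun u => ∫ t, Ff α n u t ∂μ)
        ((-1-α-(n:ℝ)) * ∫ t, Ff α (n+1) s t ∂ν) s := hder2.congr_of_eventuallyEq hee.symm
    have huni := hder1.unique hder2'
    have hne : (-1-α-(n:ℝ)) ≠ 0 := by
      have : (0:ℝ) ≤ (n:ℝ) := Nat.cast_nonneg n
      intro h; nlinarith [h]
    exact mul_left_cancel₀ hne huni

private lemma cont_integrable {σ : Measure (Icc (0:ℝ) 1)} [IsFiniteMeasure σ]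
    (g : C(Icc (0:ℝ) 1, ℝ)) : Integrable g σ := by
  have := (BoundedContinuousFunction.mkOfCompact g).integrable σ
  exact this

private lemma moment_ext (σ τ : Measure (Icc (0:ℝ) 1))
    [IsFiniteMeasure σ] [IsFiniteMeasure τ]
    (h : ∀ n : ℕ, ∫ u, ((u : ℝ))^n ∂σ = ∫ u, ((u : ℝ))^n ∂τ) : σ = τ := by
  have hpoly : ∀ p : Polynomial ℝ, ∫ u, p.eval (u:ℝ) ∂σ = ∫ u, p.eval (u:ℝ) ∂τ := by
    intro p
    induction p using Polynomial.induction_on' with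
    | add p q hp hq =>
      have i1 : Integrable (fun u : Icc (0:ℝ) 1 => p.eval (u:ℝ)) σ :=
        cont_integrable ⟨_, (Polynomial.continuous p).comp continuous_subtype_val⟩
      have i2 : Integrable (fun u : Icc (0:ℝ) 1 => q.eval (u:ℝ)) σ :=
        cont_integrable ⟨_, (Polynomial.continuous q).comp continuous_subtype_val⟩
      have i3 : Integrable (fun u : Icc (0:ℝ) 1 => p.eval (u:ℝ)) τ :=
        cont_integrable ⟨_, (Polynomial.continuous p).comp continuous_subtype_val⟩
      have i4 : Integrable (fun u : Icc (0:ℝ) 1 => q.eval (u:ℝ)) τ :=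
        cont_integrable ⟨_, (Polynomial.continuous q).comp continuous_subtype_val⟩
      simp only [Polynomial.eval_add]
      rw [integral_add i1 i2, integral_add i3 i4, hp, hq]
    | monomial n a =>
      simp only [Polynomial.eval_monomial]
      rw [integral_const_mul, integral_const_mul, h n]
  have hlip : ∀ (ρ : Measure (Icc (0:ℝ) 1)) [IsFiniteMeasure ρ],
      Continuous (fun g : C(Icc (0:ℝ) 1, ℝ) => ∫ u, g u ∂ρ) := by
    intro ρ _
    refine LipschitzWith.continuous (K := (ρ univ).toNNReal) ?_
    refine LipschitzWith.of_dist_le_mul (fun g g' => ?_)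
    rw [dist_eq_norm, ← integral_sub (cont_integrable g) (cont_integrable g')]
    calc ‖∫ u, (g u - g' u) ∂ρ‖ ≤ dist g g' * (ρ univ).toReal := by
          refine norm_integral_le_of_norm_le_const ?_
          filter_upwards with u
          rw [← dist_eq_norm]
          exact ContinuousMap.dist_apply_le_dist u
      _ = ((ρ univ).toNNReal : ℝ) * dist g g' := by
          rw [ENNReal.coe_toNNReal_eq_toReal]; ring
  have hcont : ∀ g : C(Icc (0:ℝ) 1, ℝ), ∫ u, g u ∂σ = ∫ u, g u ∂τ := by
    intro g
    have hcl : IsClosed {g : C(Icc (0:ℝ) 1, ℝ) | ∫ u, g u ∂σ = ∫ u, g u ∂τ} :=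
      isClosed_eq (hlip σ) (hlip τ)
    have hsub : (polynomialFunctions (Icc (0:ℝ) 1) : Set C(Icc (0:ℝ) 1, ℝ))
        ⊆ {g : C(Icc (0:ℝ) 1, ℝ) | ∫ u, g u ∂σ = ∫ u, g u ∂τ} := by
      intro g hg
      rw [polynomialFunctions_coe] at hg
      obtain ⟨p, rfl⟩ := hg
      simpa using hpoly p
    have hmem : g ∈ closure (polynomialFunctions (Icc (0:ℝ) 1) : Set C(Icc (0:ℝ) 1, ℝ)) := by
      rw [← Subalgebra.topologicalClosure_coe, polynomialFunctions.topologicalClosure]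
      trivial
    exact closure_minimal hsub hcl hmem
  refine ext_of_forall_lintegral_eq_of_IsFiniteMeasure (fun f => ?_)
  have hfc : Continuous fun u : Icc (0:ℝ) 1 => (f u : ℝ) :=
    NNReal.continuous_coe.comp f.continuous
  rw [lintegral_coe_eq_integral f (cont_integrable ⟨_, hfc⟩),
    lintegral_coe_eq_integral f (cont_integrable ⟨_, hfc⟩)]
  congr 1
  exact hcont ⟨_, hfc⟩

private noncomputable def Psi : ℝ → Icc (0:ℝ) 1 := fun t => ⟨(1+|t|)⁻¹, by
  constructor
  · positivity
  · rw [inv_le_one_iff₀]; right; linarith [abs_nonneg t]⟩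

private lemma Psi_meas : Measurable Psi := by
  apply Continuous.measurable
  apply Continuous.subtype_mk
  have h : Continuous fun t : ℝ => 1 + |t| := by continuity
  exact h.inv₀ (fun t => by positivity)

private lemma measure_ext_core {α : ℝ} (μ ν : Measure ℝ)
    [IsFiniteMeasure μ] [IsFiniteMeasure ν] (hμ : μ (Iic 0) = 0) (hν : ν (Iic 0) = 0)
    (h : ∀ n : ℕ, ∫ t, Ff α n 1 t ∂μ = ∫ t, Ff α n 1 t ∂ν) : μ = ν := by
  have haeμ : ∀ᵐ t ∂μ, t ∈ Ioi (0:ℝ) := by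
    rw [ae_iff]; simpa [compl_setOf, Ioi, Iic] using hμ
  have haeν : ∀ᵐ t ∂ν, t ∈ Ioi (0:ℝ) := by
    rw [ae_iff]; simpa [compl_setOf, Ioi, Iic] using hν
  have hpt : ∀ n : ℕ, ∀ t ∈ Ioi (0:ℝ), Ff α n 1 t = ((Psi t : ℝ))^n := by
    intro n t ht
    have ht' : (0:ℝ) < t := ht
    have h1 : (0:ℝ) < t + 1 := by linarith
    unfold Ff Psi
    rw [indicator_of_mem ht]
    rw [← Real.rpow_add h1, show (1+α) + (-1-α-(n:ℝ)) = -(n:ℝ) by ring,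
      Real.rpow_neg h1.le, Real.rpow_natCast]
    simp only [abs_of_pos ht']
    rw [← inv_pow]
    congr 2
    ring
  haveI : IsFiniteMeasure (Measure.map Psi μ) := by
    constructor
    rw [Measure.map_apply Psi_meas MeasurableSet.univ]
    exact measure_lt_top μ _
  haveI : IsFiniteMeasure (Measure.map Psi ν) := by
    constructor
    rw [Measure.map_apply Psi_meas MeasurableSet.univ]
    exact measure_lt_top ν _
  have hmom : ∀ n : ℕ, ∫ u, ((u : ℝ))^n ∂(Measure.map Psi μ)
      = ∫ u, ((u : ℝ))^n ∂(Measure.map Psi ν) := by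
    intro n
    rw [integral_map (f := fun u : Icc (0:ℝ) 1 => (u:ℝ)^n) Psi_meas.aemeasurable
        ((continuous_subtype_val.pow n).aestronglyMeasurable),
      integral_map (f := fun u : Icc (0:ℝ) 1 => (u:ℝ)^n) Psi_meas.aemeasurable
        ((continuous_subtype_val.pow n).aestronglyMeasurable)]
    rw [← integral_congr_ae (haeμ.mono fun t ht => (hpt n t ht)),
      ← integral_congr_ae (haeν.mono fun t ht => (hpt n t ht))]
    exact h n
  have hσ := moment_ext _ _ hmom
  have hΦ : Measurable (fun u : Icc (0:ℝ) 1 => ((u:ℝ)⁻¹ - 1)) :=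
    (measurable_subtype_coe.inv).sub measurable_const
  have hrec : ∀ (ρ : Measure ℝ), ρ (Iic 0) = 0 →
      Measure.map (fun u : Icc (0:ℝ) 1 => ((u:ℝ)⁻¹ - 1)) (Measure.map Psi ρ) = ρ := by
    intro ρ hρ
    have haeρ : ∀ᵐ t ∂ρ, t ∈ Ioi (0:ℝ) := by
      rw [ae_iff]; simpa [compl_setOf, Ioi, Iic] using hρ
    rw [Measure.map_map hΦ Psi_meas]
    have hid : (fun u : Icc (0:ℝ) 1 => ((u:ℝ)⁻¹ - 1)) ∘ Psi =ᵐ[ρ] id := by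
      filter_upwards [haeρ] with t ht
      have ht' : (0:ℝ) < t := ht
      simp only [Function.comp_apply, Psi, id_eq, abs_of_pos ht', inv_inv]
      ring
    rw [Measure.map_congr hid, Measure.map_id]
  calc μ = Measure.map (fun u : Icc (0:ℝ) 1 => ((u:ℝ)⁻¹ - 1)) (Measure.map Psi μ) :=
        (hrec μ hμ).symm
    _ = Measure.map (fun u : Icc (0:ℝ) 1 => ((u:ℝ)⁻¹ - 1)) (Measure.map Psi ν) := by rw [hσ]
    _ = ν := hrec ν hν

/-- The resurrection kernel is symmetric, `q(x,y) = q(y,x)` for all `x,y > 0`, if and only if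
the pushforward of `φ` under `t ↦ 1/t` equals the measure `t^{α-1} φ(dt)`. -/
theorem q_symmetric_iff_phi
    (α c : ℝ) (hα : α ∈ Set.Ioo (0 : ℝ) 2) (hc : 0 < c)
    (φ : Measure ℝ) [IsProbabilityMeasure φ] (hφ : φ (Set.Iic 0) = 0)
    (q : ℝ → ℝ → ℝ)
    (hq : ∀ x y : ℝ, q x y = c * ∫ t in Set.Ioi (0 : ℝ), (x + y / t) ^ (-1 - α) / t ∂φ) :
    (∀ x y : ℝ, 0 < x → 0 < y → q x y = q y x)
      ↔ Measure.map (fun t : ℝ => t⁻¹) φ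
          = φ.withDensity (fun t => ENNReal.ofReal (t ^ (α - 1))) := by
  obtain ⟨hα0, -⟩ := hα
  have hqA : ∀ x y : ℝ, 0 < x → 0 < y → q x y
      = c * (∫⁻ t in Ioi (0:ℝ), ENNReal.ofReal (t ^ α * (x * t + y) ^ (-1 - α)) ∂φ).toReal :=
    fun x y hx hy => by rw [hq, int_eq_toReal hx hy]
  have hiff : (∀ x y : ℝ, 0 < x → 0 < y → q x y = q y x)
      ↔ (∀ x y : ℝ, 0 < x → 0 < y →
          (∫⁻ t in Ioi (0:ℝ), ENNReal.ofReal (t ^ α * (x * t + y) ^ (-1 - α)) ∂φ)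
            = ∫⁻ t in Ioi (0:ℝ), ENNReal.ofReal (t ^ α * (y * t + x) ^ (-1 - α)) ∂φ) := by
    constructor
    · intro hsym x y hx hy
      have h0 := hsym x y hx hy
      rw [hqA x y hx hy, hqA y x hy hx] at h0
      have h2 := mul_left_cancel₀ (ne_of_gt hc) h0
      exact (ENNReal.toReal_eq_toReal_iff' (A_ne_top hα0 hx hy) (A_ne_top hα0 hy hx)).mp h2
    · intro hA' x y hx hy
      rw [hqA x y hx hy, hqA y x hy hx, hA' x y hx hy]
  rw [hiff]
  have hIicν : (Measure.map (fun t : ℝ => t⁻¹) φ) (Iic 0) = 0 := by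
    rw [Measure.map_apply measurable_inv measurableSet_Iic]
    have : (fun t : ℝ => t⁻¹) ⁻¹' (Iic 0) = Iic 0 := by
      ext u; simp [inv_nonpos]
    rw [this, hφ]
  have hIicμm : (φ.withDensity (fun t => ENNReal.ofReal (t ^ (α - 1)))) (Iic 0) = 0 := by
    rw [withDensity_apply _ measurableSet_Iic, Measure.restrict_eq_zero.mpr hφ,
      lintegral_zero_measure]
  constructor
  · -- forward
    intro hsym
    set ν := Measure.map (fun t : ℝ => t⁻¹) φ with hν
    set μm := φ.withDensity (fun t => ENNReal.ofReal (t ^ (α - 1))) with hμm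
    have hsym' : ∀ s : ℝ, 0 < s →
        (∫⁻ t in Ioi (0:ℝ), ENNReal.ofReal (t * (1 * t + s) ^ (-1 - α)) ∂μm)
          = ∫⁻ t in Ioi (0:ℝ), ENNReal.ofReal (t * (1 * t + s) ^ (-1 - α)) ∂ν := by
      intro s hs
      rw [hμm, lint_withDensity one_pos hs, hν, lint_map hφ one_pos hs]
      exact hsym 1 s one_pos hs
    set w : ℝ → ℝ≥0∞ :=
      (Ioi (0:ℝ)).indicator (fun t => ENNReal.ofReal (t * (1 * t + 1) ^ (-1 - α))) with hw
    have hwmeas : Measurable w := Measurable.indicator (by fun_prop) measurableSet_Ioi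
    have hwFf : ∀ s : ℝ, 0 < s → ∀ t, w t * ENNReal.ofReal (Ff α 0 s t)
        = (Ioi (0:ℝ)).indicator
            (fun t => ENNReal.ofReal (t * (1 * t + s) ^ (-1 - α))) t := by
      intro s hs t
      by_cases ht : t ∈ Ioi (0:ℝ)
      · have ht' : (0:ℝ) < t := ht
        have h1 : (0:ℝ) < t + 1 := by linarith
        rw [hw]
        rw [indicator_of_mem ht, indicator_of_mem ht]
        unfold Ff
        rw [indicator_of_mem ht]
        rw [← ENNReal.ofReal_mul (by positivity)]
        congr 1
        rw [show ((0:ℕ):ℝ) = (0:ℝ) by norm_num]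
        have e0 : (1:ℝ) * t + 1 = t + 1 := by ring
        have e1 : (t+1) ^ (-1-α) * (t+1) ^ (1+α) = 1 := by
          rw [← Real.rpow_add h1, show (-1-α) + (1+α) = 0 by ring, Real.rpow_zero]
        calc t * ((1:ℝ) * t + 1) ^ (-1-α) * ((t+1) ^ (1+α) * (t+s) ^ (-1-α-0))
            = t * ((t+1) ^ (-1-α) * (t+1) ^ (1+α)) * (t+s) ^ (-1-α) := by
              rw [e0]; ring_nf
          _ = t * (1 * t + s) ^ (-1-α) := by
              have e2 : (1:ℝ) * t + s = t + s := by ring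
              rw [e1, e2]; ring
      · rw [hw, indicator_of_notMem ht, indicator_of_notMem ht, zero_mul]
    have hwuniv : ∀ (m : Measure ℝ), (m.withDensity w) univ
        = ∫⁻ t in Ioi (0:ℝ), ENNReal.ofReal (t * (1 * t + 1) ^ (-1 - α)) ∂m := by
      intro m
      rw [withDensity_apply _ MeasurableSet.univ, Measure.restrict_univ, hw,
        lintegral_indicator measurableSet_Ioi]
    haveI hfinμ : IsFiniteMeasure (μm.withDensity w) := by
      constructor
      rw [hwuniv μm, hμm, lint_withDensity one_pos one_pos]
      exact (A_ne_top hα0 one_pos one_pos).lt_top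
    haveI hfinν : IsFiniteMeasure (ν.withDensity w) := by
      constructor
      rw [hwuniv ν, hν, lint_map hφ one_pos one_pos]
      exact (A_ne_top hα0 one_pos one_pos).lt_top
    have hwIic : ∀ (m : Measure ℝ), (m.withDensity w) (Iic 0) = 0 := by
      intro m
      rw [withDensity_apply _ measurableSet_Iic]
      have hz : ∀ t ∈ Iic (0:ℝ), w t = 0 := by
        intro t ht
        rw [hw, indicator_of_notMem (by simpa using ht)]
      rw [setLIntegral_congr_fun measurableSet_Iic hz]
      simp
    have Hb : ∀ s : ℝ, 0 < s → ∫ t, Ff α 0 s t ∂(μm.withDensity w)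
        = ∫ t, Ff α 0 s t ∂(ν.withDensity w) := by
      intro s hs
      have e : ∀ (m : Measure ℝ), ∫ t, Ff α 0 s t ∂(m.withDensity w)
          = (∫⁻ t in Ioi (0:ℝ), ENNReal.ofReal (t * (1 * t + s) ^ (-1 - α)) ∂m).toReal := by
        intro m
        rw [integral_eq_lintegral_of_nonneg_ae (ae_of_all _ (Ff_nonneg hs))
          Ff_meas.aestronglyMeasurable]
        congr 1
        rw [lintegral_withDensity_eq_lintegral_mul _ hwmeas Ff_meas.ennreal_ofReal,
          ← lintegral_indicator measurableSet_Ioi]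
        exact lintegral_congr (fun t => hwFf s hs t)
      rw [e μm, e ν, hsym' s hs]
    have hmom := moments_eq_s11 hα0 _ _ (hwIic μm) (hwIic ν) Hb
    have hext := measure_ext_core _ _ (hwIic μm) (hwIic ν) (fun n => hmom n 1 one_pos)
    have hwne : ∀ᵐ t ∂μm, w t ≠ 0 := by
      have haeμm : ∀ᵐ t ∂μm, t ∈ Ioi (0:ℝ) := by
        rw [ae_iff]; simpa [compl_setOf, Ioi, Iic] using hIicμm
      filter_upwards [haeμm] with t ht
      have ht' : (0:ℝ) < t := ht
      rw [hw, indicator_of_mem ht]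
      exact (ENNReal.ofReal_pos.mpr (by positivity)).ne'
    have hwne' : ∀ᵐ t ∂ν, w t ≠ 0 := by
      have haeν : ∀ᵐ t ∂ν, t ∈ Ioi (0:ℝ) := by
        rw [ae_iff]; simpa [compl_setOf, Ioi, Iic] using hIicν
      filter_upwards [haeν] with t ht
      have ht' : (0:ℝ) < t := ht
      rw [hw, indicator_of_mem ht]
      exact (ENNReal.ofReal_pos.mpr (by positivity)).ne'
    have hwtop : ∀ (m : Measure ℝ), ∀ᵐ t ∂m, w t ≠ ⊤ := by
      intro m
      filter_upwards with t
      rw [hw]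
      by_cases ht : t ∈ Ioi (0:ℝ)
      · rw [indicator_of_mem ht]; exact ENNReal.ofReal_ne_top
      · rw [indicator_of_notMem ht]; exact ENNReal.zero_ne_top
    have recμ := withDensity_inv_same hwmeas hwne (hwtop μm)
    have recν := withDensity_inv_same hwmeas hwne' (hwtop ν)
    calc ν = (ν.withDensity w).withDensity (fun x => (w x)⁻¹) := recν.symm
      _ = (μm.withDensity w).withDensity (fun x => (w x)⁻¹) := by rw [hext]
      _ = μm := recμ
  · -- backward
    intro heq x y hx hy
    have h1 := lint_withDensity (φ := φ) (α := α) hx hy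
    have h2 := lint_map (φ := φ) (α := α) hφ hx hy
    rw [← heq] at h1
    exact h1.symm.trans h2
end

section
/- Let φ : (0,∞) → [0,∞) satisfy ∫₀^∞ φ(t) dt = 1. Then φ(t⁻¹) = t^{1+α} · φ(t) for all t > 0 if and only if there exists a function f : [2,∞) → [0,∞) such that φ(t) = f(t + t⁻¹)/(1+t)^{1+α} for all t > 0. -/
open MeasureTheory Set

/-- A probability density `φ` on `(0,∞)` satisfies `φ(t⁻¹) = t^{1+α} φ(t)` for all `t > 0`
iff `φ(t) = f(t + t⁻¹)/(1+t)^{1+α}` for some `f : [2,∞) → [0,∞)`. -/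
theorem phi_symmetric_characterization
    (α : ℝ) (hα : α ∈ Set.Ioo (0 : ℝ) 2)
    (φ : ℝ → ℝ) (hφnn : ∀ t : ℝ, 0 < t → 0 ≤ φ t)
    (hnorm : ∫ t in Set.Ioi (0 : ℝ), φ t = 1) :
    (∀ t : ℝ, 0 < t → φ t⁻¹ = t ^ (1 + α) * φ t)
      ↔ ∃ f : ℝ → ℝ, (∀ s : ℝ, 2 ≤ s → 0 ≤ f s) ∧
          ∀ t : ℝ, 0 < t → φ t = f (t + t⁻¹) / (1 + t) ^ (1 + α) := by
  constructor
  · intro h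
    refine ⟨fun s => φ ((s + Real.sqrt (s ^ 2 - 4)) / 2) *
        (1 + (s + Real.sqrt (s ^ 2 - 4)) / 2) ^ (1 + α), ?_, ?_⟩
    · intro s hs
      have ht : (1 : ℝ) ≤ (s + Real.sqrt (s ^ 2 - 4)) / 2 := by
        have := Real.sqrt_nonneg (s ^ 2 - 4); linarith
      exact mul_nonneg (hφnn _ (lt_of_lt_of_le one_pos ht))
        (Real.rpow_nonneg (by linarith) _)
    · intro t ht
      have htne : t ≠ 0 := ht.ne'
      have hsq : (t + t⁻¹) ^ 2 - 4 = (t - t⁻¹) ^ 2 := by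
        field_simp; ring
      have hsqrt : Real.sqrt ((t + t⁻¹) ^ 2 - 4) = |t - t⁻¹| := by
        rw [hsq, Real.sqrt_sq_eq_abs]
      have hpos : (0 : ℝ) < (1 + t) ^ (1 + α) :=
        Real.rpow_pos_of_pos (by linarith) _
      rcases le_or_gt 1 t with h1 | h1
      · have hinv : t⁻¹ ≤ t := le_trans (inv_le_one_of_one_le₀ h1) h1
        have habs : |t - t⁻¹| = t - t⁻¹ := abs_of_nonneg (by linarith)
        have harg : (t + t⁻¹ + Real.sqrt ((t + t⁻¹) ^ 2 - 4)) / 2 = t := by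
          rw [hsqrt, habs]; ring
        simp only [harg]
        rw [mul_div_assoc, div_self hpos.ne', mul_one]
      · have hinv : t ≤ t⁻¹ := by nlinarith [mul_inv_cancel₀ htne]
        have habs : |t - t⁻¹| = t⁻¹ - t := by rw [abs_of_nonpos (by linarith : t - t⁻¹ ≤ 0)]; ring
        have harg : (t + t⁻¹ + Real.sqrt ((t + t⁻¹) ^ 2 - 4)) / 2 = t⁻¹ := by
          rw [hsqrt, habs]; ring
        simp only [harg]
        rw [h t ht]
        have hkey : t ^ (1 + α) * (1 + t⁻¹) ^ (1 + α) = (1 + t) ^ (1 + α) := by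
          rw [← Real.mul_rpow ht.le (by positivity)]
          congr 1
          field_simp; ring
        rw [mul_comm (t ^ (1 + α)) (φ t), mul_assoc, hkey, mul_div_assoc,
          div_self hpos.ne', mul_one]
  · rintro ⟨f, hf, hφ⟩ t ht
    have htinv : (0 : ℝ) < t⁻¹ := inv_pos.2 ht
    rw [hφ t⁻¹ htinv, hφ t ht, inv_inv, add_comm t⁻¹ t]
    have h1 : (1 + t⁻¹) = (1 + t) / t := by field_simp; ring
    have h2 : (1 + t⁻¹) ^ (1 + α) = (1 + t) ^ (1 + α) / t ^ (1 + α) := by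
      rw [h1, Real.div_rpow (by linarith) ht.le]
    rw [h2]
    have hpos : (0 : ℝ) < (1 + t) ^ (1 + α) := Real.rpow_pos_of_pos (by linarith) _
    have hpos' : (0 : ℝ) < t ^ (1 + α) := Real.rpow_pos_of_pos ht _
    field_simp
end

section
/- Assume that the pushforward of φ under the map t ↦ 1/t equals the measure A ↦ ∫_A t^{α−1} φ(dt) (the symmetry condition on the resurrection kernel), and that ∫_{(0,∞)} |log u| φ(du) < ∞. Then ∫_{(0,∞)} log u · φ(du) = ∫_{(1,∞)} (log u)·(1 − u^{α−1}) φ(du). Consequently, setting E := Γ(α)·(sin(παρ̂)/π)·( π·cot(παρ̂) + ∫_{(0,∞)} log u φ(du) ): (i) if α = 1 and ρ̂ = 1/2, then E = 0; (ii) if in addition φ((1,∞)) > 0, then E < 0 whenever α > 1 and ρ̂ ∈ [1/(2α), 1/α), and E > 0 whenever α < 1 and ρ̂ ∈ (0, 1/(2α)]. -/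
open MeasureTheory Set
open scoped Real NNReal ENNReal

/-- Under the symmetry condition on `φ`, `∫ log u φ(du) = ∫_{(1,∞)} log u (1 - u^{α-1}) φ(du)`,
and consequently the sign of `E = Γ(α) (sin(παρ̂)/π)(π cot(παρ̂) + ∫ log u φ(du))` is
determined as stated. -/
theorem symmetric_kernel_sign_of_mean
    (α ρ : ℝ)
    (hadm : (α ∈ Set.Ioo (0 : ℝ) 1 ∧ ρ ∈ Set.Ioo (0 : ℝ) 1) ∨
      (α ∈ Set.Ioo (1 : ℝ) 2 ∧ ρ ∈ Set.Ioo (1 - 1/α) (1/α)) ∨ (α = 1 ∧ ρ = 1/2))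
    (ρh : ℝ) (hρh : ρh = 1 - ρ)
    (φ : Measure ℝ) [IsProbabilityMeasure φ] (hφ0 : φ (Set.Iic 0) = 0)
    (hsym : Measure.map (fun t : ℝ => t⁻¹) φ
      = φ.withDensity (fun t => ENNReal.ofReal (t ^ (α - 1))))
    (hlog : IntegrableOn (fun u : ℝ => |Real.log u|) (Set.Ioi 0) φ)
    (E : ℝ)
    (hE : E = Real.Gamma α * (Real.sin (π * (α * ρh)) / π) *
      (π * Real.cos (π * (α * ρh)) / Real.sin (π * (α * ρh)) +
        ∫ u in Set.Ioi (0 : ℝ), Real.log u ∂φ)) :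
    (∫ u in Set.Ioi (0 : ℝ), Real.log u ∂φ
        = ∫ u in Set.Ioi (1 : ℝ), Real.log u * (1 - u ^ (α - 1)) ∂φ)
    ∧ (α = 1 → ρh = 1/2 → E = 0)
    ∧ (0 < φ (Set.Ioi 1) →
        ((1 < α → ρh ∈ Set.Ico (1 / (2 * α)) (1 / α) → E < 0)
          ∧ (α < 1 → ρh ∈ Set.Ioc 0 (1 / (2 * α)) → 0 < E))) := by
    -- φ lives on (0, ∞)
  have hae : ∀ᵐ t ∂φ, t ∈ Set.Ioi (0:ℝ) := by
    rw [ae_iff]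
    have h : {t : ℝ | ¬ t ∈ Set.Ioi (0:ℝ)} = Set.Iic 0 := by ext t; simp
    rw [h]; exact hφ0
  have hres : φ.restrict (Set.Ioi 0) = φ := Measure.restrict_eq_self_of_ae_mem hae
  -- integrability of log
  have hlogInt : Integrable Real.log φ := by
    rw [IntegrableOn, hres] at hlog
    refine ⟨Real.measurable_log.aestronglyMeasurable, ?_⟩
    simpa [HasFiniteIntegral, Real.norm_eq_abs] using hlog.2
  -- the density as an ℝ≥0-valued function
  set f : ℝ → ℝ≥0 := fun t => Real.toNNReal (t ^ (α - 1)) with hf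
  have fmeas : Measurable f := (measurable_id.pow measurable_const).real_toNNReal
  have hsym' : Measure.map (fun t : ℝ => t⁻¹) φ = φ.withDensity (fun t => (f t : ℝ≥0∞)) := hsym
  set g : ℝ → ℝ := (Set.Ioi (1:ℝ)).indicator Real.log with hg
  have gmeas : Measurable g := Real.measurable_log.indicator measurableSet_Ioi
  -- change of variables
  have h1 : ∫ t, g t⁻¹ ∂φ = ∫ t, (f t : ℝ) * g t ∂φ := by
    calc ∫ t, g t⁻¹ ∂φ = ∫ t, g t ∂(Measure.map (fun t : ℝ => t⁻¹) φ) :=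
          (integral_map measurable_inv.aemeasurable gmeas.aestronglyMeasurable).symm
      _ = ∫ t, f t • g t ∂φ := by
          rw [hsym']; exact integral_withDensity_eq_integral_smul fmeas g
      _ = ∫ t, (f t : ℝ) * g t ∂φ := by simp [NNReal.smul_def, smul_eq_mul]
  -- pointwise identification of the left-hand side, a.e.
  have hL : ∀ᵐ t ∂φ, g t⁻¹ = - (Set.Ioo (0:ℝ) 1).indicator Real.log t := by
    filter_upwards [hae] with t ht
    rcases lt_or_ge t 1 with h | h
    · have h1t : (1:ℝ) < t⁻¹ := (one_lt_inv₀ ht).mpr h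
      rw [hg, Set.indicator_of_mem (by simpa using h1t),
        Set.indicator_of_mem (by exact ⟨ht, h⟩), Real.log_inv]
    · have h1t : ¬ ((1:ℝ) < t⁻¹) := by
        simp only [not_lt]
        exact inv_le_one_of_one_le₀ h
      rw [hg, Set.indicator_of_notMem (by simpa using h1t),
        Set.indicator_of_notMem (by simp [Set.mem_Ioo, not_and_or]; intro _; exact h)]
      simp
  -- pointwise identification of the right-hand side, everywhere
  have hR : ∀ t : ℝ, (f t : ℝ) * g t
      = (Set.Ioi (1:ℝ)).indicator (fun u => u ^ (α - 1) * Real.log u) t := by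
    intro t
    by_cases h : t ∈ Set.Ioi (1:ℝ)
    · have ht0 : (0:ℝ) < t := lt_trans one_pos h
      rw [hg, Set.indicator_of_mem h, Set.indicator_of_mem h, hf]
      rw [Real.coe_toNNReal _ (Real.rpow_pos_of_pos ht0 _).le]
    · rw [hg, Set.indicator_of_notMem h, Set.indicator_of_notMem h, mul_zero]
  -- integrability of the pieces
  have hI1 : Integrable ((Set.Ioo (0:ℝ) 1).indicator Real.log) φ :=
    hlogInt.indicator measurableSet_Ioo
  have hI2 : Integrable ((Set.Ioi (1:ℝ)).indicator Real.log) φ :=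
    hlogInt.indicator measurableSet_Ioi
  have hI3 : Integrable ((Set.Ioi (1:ℝ)).indicator (fun u => u ^ (α - 1) * Real.log u)) φ := by
    have hmg : Integrable g (Measure.map (fun t : ℝ => t⁻¹) φ) := by
      rw [integrable_map_measure gmeas.aestronglyMeasurable measurable_inv.aemeasurable]
      exact (hI1.neg).congr (by filter_upwards [hL] with t ht; exact ht.symm)
    rw [hsym', integrable_withDensity_iff_integrable_smul fmeas] at hmg
    exact hmg.congr (Filter.Eventually.of_forall fun t => by
      simpa [NNReal.smul_def, smul_eq_mul] using hR t)
  -- the key transfer identity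
  have hkey : ∫ t, (Set.Ioo (0:ℝ) 1).indicator Real.log t ∂φ
      = - ∫ t, (Set.Ioi (1:ℝ)).indicator (fun u => u ^ (α - 1) * Real.log u) t ∂φ := by
    have e1 : ∫ t, g t⁻¹ ∂φ = - ∫ t, (Set.Ioo (0:ℝ) 1).indicator Real.log t ∂φ := by
      rw [← integral_neg]; exact integral_congr_ae hL
    have e2 : ∫ t, (f t : ℝ) * g t ∂φ
        = ∫ t, (Set.Ioi (1:ℝ)).indicator (fun u => u ^ (α - 1) * Real.log u) t ∂φ :=
      integral_congr_ae (Filter.Eventually.of_forall hR)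
    rw [e1, e2] at h1
    linarith
  -- the main identity
  have hindeq : ∀ t : ℝ, (Set.Ioi (1:ℝ)).indicator Real.log t
      - (Set.Ioi (1:ℝ)).indicator (fun u => u ^ (α - 1) * Real.log u) t
      = (Set.Ioi (1:ℝ)).indicator (fun u => Real.log u * (1 - u ^ (α - 1))) t := by
    intro t
    by_cases h : t ∈ Set.Ioi (1:ℝ)
    · simp only [Set.indicator_of_mem h]; ring
    · simp [Set.indicator_of_notMem h]
  have hmain : ∫ u in Set.Ioi (0:ℝ), Real.log u ∂φ
      = ∫ u in Set.Ioi (1:ℝ), Real.log u * (1 - u ^ (α - 1)) ∂φ := by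
    rw [hres]
    calc ∫ u, Real.log u ∂φ
        = ∫ u, ((Set.Ioo (0:ℝ) 1).indicator Real.log u
            + (Set.Ioi (1:ℝ)).indicator Real.log u) ∂φ := by
          refine integral_congr_ae ?_
          filter_upwards [hae] with t ht
          rcases lt_trichotomy t 1 with h | h | h
          · rw [Set.indicator_of_mem (Set.mem_Ioo.mpr ⟨ht, h⟩), Set.indicator_of_notMem (by simpa using h.le)]
            ring
          · subst h
            simp
          · rw [Set.indicator_of_notMem (fun hmem => absurd hmem.2 (not_lt.mpr h.le)),
              Set.indicator_of_mem (Set.mem_Ioi.mpr h)]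
            ring
      _ = (∫ u, (Set.Ioo (0:ℝ) 1).indicator Real.log u ∂φ)
            + ∫ u, (Set.Ioi (1:ℝ)).indicator Real.log u ∂φ := integral_add hI1 hI2
      _ = ∫ u, ((Set.Ioi (1:ℝ)).indicator Real.log u
            - (Set.Ioi (1:ℝ)).indicator (fun u => u ^ (α - 1) * Real.log u) u) ∂φ := by
          rw [hkey, integral_sub hI2 hI3]; ring
      _ = ∫ u, (Set.Ioi (1:ℝ)).indicator (fun u => Real.log u * (1 - u ^ (α - 1))) u ∂φ :=
          integral_congr_ae (Filter.Eventually.of_forall hindeq)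
      _ = ∫ u in Set.Ioi (1:ℝ), Real.log u * (1 - u ^ (α - 1)) ∂φ :=
          integral_indicator measurableSet_Ioi
  -- integrability on (1, ∞) of the combined integrand
  have hIF : IntegrableOn (fun u => Real.log u * (1 - u ^ (α - 1))) (Set.Ioi 1) φ := by
    exact (integrable_indicator_iff measurableSet_Ioi).mp
      ((hI2.sub hI3).congr (Filter.Eventually.of_forall hindeq))
  refine ⟨hmain, ?_, ?_⟩
  · -- α = 1, ρh = 1/2
    intro hα hρ
    subst hα; subst hρ
    have hI0 : ∫ u in Set.Ioi (1:ℝ), Real.log u * (1 - u ^ ((1:ℝ) - 1)) ∂φ = 0 := by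
      have : ∀ u : ℝ, Real.log u * (1 - u ^ ((1:ℝ) - 1)) = 0 := by
        intro u; rw [sub_self, Real.rpow_zero]; ring
      simp [this]
    have hx : π * ((1:ℝ) * (1/2)) = π / 2 := by ring
    rw [hE, hmain, hI0, hx, Real.cos_pi_div_two]
    ring
  · -- strict sign
    intro hμ
    constructor
    · -- α > 1
      intro hα hρmem
      obtain ⟨hρ1, hρ2⟩ := hρmem
      have hα0 : (0:ℝ) < α := by linarith
      -- the integral is negative
      have hFneg : ∀ u ∈ Set.Ioi (1:ℝ), Real.log u * (1 - u ^ (α - 1)) < 0 := by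
        intro u hu
        have hlogpos : 0 < Real.log u := Real.log_pos hu
        have hrp : 1 < u ^ (α - 1) :=
          (Real.one_lt_rpow_iff_of_pos (lt_trans one_pos hu)).mpr (Or.inl ⟨hu, by linarith⟩)
        nlinarith
      have hneg : ∫ u in Set.Ioi (1:ℝ), Real.log u * (1 - u ^ (α - 1)) ∂φ < 0 := by
        have hpos : 0 < ∫ u in Set.Ioi (1:ℝ), -(Real.log u * (1 - u ^ (α - 1))) ∂φ := by
          refine (setIntegral_pos_iff_support_of_nonneg_ae ?_ hIF.neg).2 ?_
          · refine (ae_restrict_iff' measurableSet_Ioi).2 (Filter.Eventually.of_forall ?_)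
            intro u hu; exact (neg_pos.2 (hFneg u hu)).le
          · refine lt_of_lt_of_le hμ (measure_mono ?_)
            intro u hu
            exact ⟨by simp only [Function.mem_support]; exact (neg_pos.2 (hFneg u hu)).ne', hu⟩
        rw [integral_neg] at hpos
        linarith
      -- trig bounds
      have hx1 : π / 2 ≤ π * (α * ρh) := by
        have : (1:ℝ) / 2 ≤ α * ρh := by
          have := mul_le_mul_of_nonneg_left hρ1 hα0.le
          calc (1:ℝ)/2 = α * (1 / (2 * α)) := by field_simp
            _ ≤ α * ρh := this
        nlinarith [Real.pi_pos]
      have hx2 : π * (α * ρh) < π := by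
        have : α * ρh < 1 := by
          have := mul_lt_mul_of_pos_left hρ2 hα0
          calc α * ρh < α * (1/α) := this
            _ = 1 := by field_simp
        nlinarith [Real.pi_pos]
      have hsin : 0 < Real.sin (π * (α * ρh)) :=
        Real.sin_pos_of_pos_of_lt_pi (by nlinarith [Real.pi_pos]) hx2
      have hcos : Real.cos (π * (α * ρh)) ≤ 0 :=
        Real.cos_nonpos_of_pi_div_two_le_of_le hx1 (by nlinarith [Real.pi_pos])
      have hterm : π * Real.cos (π * (α * ρh)) / Real.sin (π * (α * ρh)) ≤ 0 := by
        apply div_nonpos_of_nonpos_of_nonneg _ hsin.le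
        nlinarith [Real.pi_pos]
      have hΓ : 0 < Real.Gamma α := Real.Gamma_pos_of_pos hα0
      have hfac : 0 < Real.Gamma α * (Real.sin (π * (α * ρh)) / π) :=
        mul_pos hΓ (div_pos hsin Real.pi_pos)
      rw [hE, hmain]
      exact mul_neg_of_pos_of_neg hfac (by linarith)
    · -- α < 1
      intro hα hρmem
      obtain ⟨hρ1, hρ2⟩ := hρmem
      have hα0 : (0:ℝ) < α := by
        rcases hadm with ⟨h, _⟩ | ⟨⟨h, _⟩, _⟩ | ⟨h, _⟩
        · exact h.1
        · linarith
        · linarith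
      have hFpos : ∀ u ∈ Set.Ioi (1:ℝ), 0 < Real.log u * (1 - u ^ (α - 1)) := by
        intro u hu
        have hlogpos : 0 < Real.log u := Real.log_pos hu
        have hrp : u ^ (α - 1) < 1 :=
          Real.rpow_lt_one_of_one_lt_of_neg hu (by linarith)
        nlinarith
      have hpos : 0 < ∫ u in Set.Ioi (1:ℝ), Real.log u * (1 - u ^ (α - 1)) ∂φ := by
        refine (setIntegral_pos_iff_support_of_nonneg_ae ?_ hIF).2 ?_
        · refine (ae_restrict_iff' measurableSet_Ioi).2 (Filter.Eventually.of_forall ?_)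
          intro u hu; exact (hFpos u hu).le
        · refine lt_of_lt_of_le hμ (measure_mono ?_)
          intro u hu
          exact ⟨by simp only [Function.mem_support]; exact (hFpos u hu).ne', hu⟩
      have hx1 : 0 < π * (α * ρh) := by
        have : 0 < α * ρh := mul_pos hα0 hρ1
        nlinarith [Real.pi_pos]
      have hx2 : π * (α * ρh) ≤ π / 2 := by
        have : α * ρh ≤ 1/2 := by
          have := mul_le_mul_of_nonneg_left hρ2 hα0.le
          calc α * ρh ≤ α * (1 / (2 * α)) := this
            _ = 1/2 := by field_simp
        nlinarith [Real.pi_pos]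
      have hsin : 0 < Real.sin (π * (α * ρh)) :=
        Real.sin_pos_of_pos_of_lt_pi hx1 (by nlinarith [Real.pi_pos])
      have hcos : 0 ≤ Real.cos (π * (α * ρh)) :=
        Real.cos_nonneg_of_mem_Icc ⟨by nlinarith [Real.pi_pos], hx2⟩
      have hterm : 0 ≤ π * Real.cos (π * (α * ρh)) / Real.sin (π * (α * ρh)) := by
        apply div_nonneg _ hsin.le
        nlinarith [Real.pi_pos]
      have hΓ : 0 < Real.Gamma α := Real.Gamma_pos_of_pos hα0
      have hfac : 0 < Real.Gamma α * (Real.sin (π * (α * ρh)) / π) :=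
        mul_pos hΓ (div_pos hsin Real.pi_pos)
      rw [hE, hmain]
      exact mul_pos hfac (by linarith)
end

section
/- There exists a constant C ≥ 1 (depending only on α, c, φ) such that for all x,y with 0 < x ≤ y ≤ 5x: C⁻¹ x^{−1−α} ≤ q(x,y) ≤ C x^{−1−α} and C⁻¹ x^{−1−α} ≤ q(y,x) ≤ C x^{−1−α}. -/
/-!
With `p = -1 - α ≤ -1`, the integrand `(a + b/t)^p φ(t)/t` of `q(a, b)` is at most `x^p φ(t)`
as soon as `a, b ≥ x`: for `t ≥ 1` drop `b/t` and the factor `1/t`; for `t ≤ 1` drop `a`, and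
`(x/t)^p / t = x^p t^α ≤ x^p`. If moreover `a + b ≤ 6x`, then on `[1, 2]` the integrand is at
least `(6x)^p φ(t)/2`, and `φ` has positive mass there. Both `(x, y)` and `(y, x)` qualify.
-/

open MeasureTheory Set

section ResurrectionKernel

variable {φ : ℝ → ℝ} {p a b x t : ℝ}

lemma rpow_add_div_div_le_rpow (hp : p ≤ -1) (hx : 0 < x) (hxa : x ≤ a) (hxb : x ≤ b)
    (ht : 0 < t) : (a + b / t) ^ p / t ≤ x ^ p := by
  have ha : 0 < a := hx.trans_le hxa
  have hbt : x / t ≤ b / t := by gcongr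
  have hbt0 : 0 < b / t := (div_pos hx ht).trans_le hbt
  rcases le_total 1 t with h1t | ht1
  · calc (a + b / t) ^ p / t ≤ (a + b / t) ^ p := div_le_self (by positivity) h1t
      _ ≤ x ^ p := Real.rpow_le_rpow_of_nonpos hx (by linarith) (by linarith)
  · have hxt : (a + b / t) ^ p ≤ (x / t) ^ p :=
      Real.rpow_le_rpow_of_nonpos (by positivity) (by linarith) (by linarith)
    calc (a + b / t) ^ p / t ≤ (x / t) ^ p / t := by gcongr
      _ = x ^ p * t ^ (-1 - p) := by
          rw [Real.div_rpow hx.le ht.le, Real.rpow_sub ht, Real.rpow_neg_one]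
          field_simp
      _ ≤ x ^ p :=
          mul_le_of_le_one_right (by positivity) (Real.rpow_le_one ht.le ht1 (by linarith))

lemma rpow_add_div_le_div (hp : p ≤ 0) (ha : 0 < a) (hb : 0 ≤ b) (ht : t ∈ Icc (1 : ℝ) 2) :
    (a + b) ^ p / 2 ≤ (a + b / t) ^ p / t := by
  have ht0 : 0 < t := by linarith [ht.1]
  have hab : a + b / t ≤ a + b := by gcongr; exact div_le_self hb ht.1
  exact div_le_div₀ (by positivity) (Real.rpow_le_rpow_of_nonpos (by positivity) hab hp)
    ht0 ht.2

lemma integrableOn_rpow_add_div_mul_div (hφ : IntegrableOn φ (Ioi 0))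
    (hφ0 : ∀ t, 0 < t → 0 ≤ φ t) (hp : p ≤ -1) (ha : 0 < a) (hb : 0 < b) :
    IntegrableOn (fun t ↦ (a + b / t) ^ p * φ t / t) (Ioi 0) := by
  refine Integrable.mono' (hφ.const_mul (min a b ^ p)) ?_ ?_
  · have := hφ.aemeasurable
    exact AEMeasurable.aestronglyMeasurable (by fun_prop)
  · refine (ae_restrict_iff' measurableSet_Ioi).2 (.of_forall fun t (ht : 0 < t) ↦ ?_)
    rw [Real.norm_of_nonneg (by have := hφ0 t ht; positivity), mul_div_right_comm]
    exact mul_le_mul_of_nonneg_right (rpow_add_div_div_le_rpow hp (lt_min ha hb)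
      (min_le_left _ _) (min_le_right _ _) ht) (hφ0 t ht)

lemma setIntegral_rpow_add_div_mul_div_le (hφ : IntegrableOn φ (Ioi 0))
    (hφ0 : ∀ t, 0 < t → 0 ≤ φ t) (hp : p ≤ -1) (hx : 0 < x) (hxa : x ≤ a)
    (hxb : x ≤ b) :
    ∫ t in Ioi 0, (a + b / t) ^ p * φ t / t ≤ x ^ p * ∫ t in Ioi 0, φ t := by
  rw [← integral_const_mul]
  refine setIntegral_mono_on (integrableOn_rpow_add_div_mul_div hφ hφ0 hp
    (hx.trans_le hxa) (hx.trans_le hxb)) (hφ.const_mul _) measurableSet_Ioi fun t ht ↦ ?_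
  rw [mul_div_right_comm]
  exact mul_le_mul_of_nonneg_right (rpow_add_div_div_le_rpow hp hx hxa hxb ht) (hφ0 t ht)

lemma le_setIntegral_rpow_add_div_mul_div (hφ : IntegrableOn φ (Ioi 0))
    (hφ0 : ∀ t, 0 < t → 0 ≤ φ t) (hp : p ≤ -1) (ha : 0 < a) (hb : 0 < b) :
    (a + b) ^ p / 2 * ∫ t in Icc 1 2, φ t ≤ ∫ t in Ioi 0, (a + b / t) ^ p * φ t / t := by
  have hint := integrableOn_rpow_add_div_mul_div hφ hφ0 hp ha hb
  have hsub : Icc (1 : ℝ) 2 ⊆ Ioi 0 := fun t ht ↦ one_pos.trans_le ht.1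
  rw [← integral_const_mul]
  calc ∫ t in Icc 1 2, (a + b) ^ p / 2 * φ t
      ≤ ∫ t in Icc 1 2, (a + b / t) ^ p * φ t / t := by
        refine setIntegral_mono_on ((hφ.mono_set hsub).const_mul _) (hint.mono_set hsub)
          measurableSet_Icc fun t ht ↦ ?_
        rw [mul_div_right_comm]
        exact mul_le_mul_of_nonneg_right (rpow_add_div_le_div (by linarith) ha hb.le ht)
          (hφ0 t (hsub ht))
    _ ≤ ∫ t in Ioi 0, (a + b / t) ^ p * φ t / t := by
        refine setIntegral_mono_set hint ?_ hsub.eventuallyLE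
        refine (ae_restrict_iff' measurableSet_Ioi).2 (.of_forall fun t (ht : 0 < t) ↦ ?_)
        have := hφ0 t ht
        positivity

lemma setIntegral_rpow_add_div_mul_div_mem_Icc (hφ : IntegrableOn φ (Ioi 0))
    (hφ0 : ∀ t, 0 < t → 0 ≤ φ t) (hp : p ≤ -1) (hnorm : ∫ t in Ioi 0, φ t = 1)
    (hx : 0 < x) (hxa : x ≤ a) (hxb : x ≤ b) (hab : a + b ≤ 6 * x) :
    ∫ t in Ioi 0, (a + b / t) ^ p * φ t / t ∈
      Icc (6 ^ p / 2 * (∫ t in Icc 1 2, φ t) * x ^ p) (x ^ p) := by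
  have ha : 0 < a := hx.trans_le hxa
  have hb : 0 < b := hx.trans_le hxb
  have hm : 0 ≤ ∫ t in Icc 1 2, φ t :=
    setIntegral_nonneg measurableSet_Icc fun t ht ↦ hφ0 t (one_pos.trans_le ht.1)
  refine ⟨le_trans ?_ (le_setIntegral_rpow_add_div_mul_div hφ hφ0 hp ha hb), ?_⟩
  · calc 6 ^ p / 2 * (∫ t in Icc 1 2, φ t) * x ^ p
        = (6 * x) ^ p / 2 * ∫ t in Icc 1 2, φ t := by
          rw [Real.mul_rpow (by norm_num) hx.le]; ring
      _ ≤ (a + b) ^ p / 2 * ∫ t in Icc 1 2, φ t := by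
          gcongr ?_ / 2 * _
          exact Real.rpow_le_rpow_of_nonpos (by positivity) hab (hp.trans (by norm_num))
  · simpa [hnorm] using setIntegral_rpow_add_div_mul_div_le hφ hφ0 hp hx hxa hxb

end ResurrectionKernel

lemma setIntegral_pos_of_forall_pos {X : Type*} [MeasurableSpace X] {μ : Measure X}
    {f : X → ℝ} {s : Set X} (hs : MeasurableSet s) (hμs : μ s ≠ 0)
    (hf : IntegrableOn f s μ) (hpos : ∀ x ∈ s, 0 < f x) : 0 < ∫ x in s, f x ∂μ := by
  rw [setIntegral_pos_iff_support_of_nonneg_ae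
      (ae_restrict_of_forall_mem hs fun x hx ↦ (hpos x hx).le) hf,
    inter_eq_right.2 fun x hx ↦ Function.mem_support.2 (hpos x hx).ne']
  exact pos_iff_ne_zero.2 hμs

lemma exists_one_le_inv_le_and_le {l u : ℝ} (hl : 0 < l) :
    ∃ C : ℝ, 1 ≤ C ∧ C⁻¹ ≤ l ∧ u ≤ C :=
  ⟨max (max 1 u) l⁻¹, (le_max_left _ _).trans (le_max_left _ _),
    inv_le_of_inv_le₀ hl (le_max_right _ _), (le_max_right _ _).trans (le_max_left _ _)⟩

/-- Two-sided estimate of the resurrection kernel on the near-diagonal region `x ≤ y ≤ 5x`: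
`q(x,y) ≍ q(y,x) ≍ x^{-1-α}`. -/
theorem q_estimates_near_diagonal
    (α c : ℝ) (hα : α ∈ Set.Ioo (0 : ℝ) 2) (hc : 0 < c)
    (φ : ℝ → ℝ) (hφpos : ∀ t : ℝ, 0 < t → 0 < φ t)
    (hnorm : ∫ t in Set.Ioi (0 : ℝ), φ t = 1)
    (q : ℝ → ℝ → ℝ)
    (hq : ∀ x y : ℝ, q x y
      = c * ∫ t in Set.Ioi (0 : ℝ), (x + y / t) ^ (-1 - α) * φ t / t) :
    ∃ C : ℝ, 1 ≤ C ∧ ∀ x y : ℝ, 0 < x → x ≤ y → y ≤ 5 * x →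
      (C⁻¹ * x ^ (-1 - α) ≤ q x y ∧ q x y ≤ C * x ^ (-1 - α)
        ∧ C⁻¹ * x ^ (-1 - α) ≤ q y x ∧ q y x ≤ C * x ^ (-1 - α)) := by
  have hp : -1 - α ≤ -1 := by linarith [hα.1]
  have hφ : IntegrableOn φ (Ioi 0) := Integrable.of_integral_ne_zero (by simp [hnorm])
  have hφ0 t ht : 0 ≤ φ t := (hφpos t ht).le
  have hm : 0 < ∫ t in Icc 1 2, φ t := setIntegral_pos_of_forall_pos measurableSet_Icc (by simp)
    (hφ.mono_set fun t ht ↦ one_pos.trans_le ht.1) fun t ht ↦ hφpos t (one_pos.trans_le ht.1)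
  obtain ⟨C, hC1, hCl, hCu⟩ := exists_one_le_inv_le_and_le (u := c)
    (by positivity : 0 < c * (6 ^ (-1 - α) / 2 * ∫ t in Icc 1 2, φ t))
  have bounds a b x (hx : 0 < x) (hxa : x ≤ a) (hxb : x ≤ b) (hab : a + b ≤ 6 * x) :
      C⁻¹ * x ^ (-1 - α) ≤ c * ∫ t in Ioi 0, (a + b / t) ^ (-1 - α) * φ t / t ∧
        c * ∫ t in Ioi 0, (a + b / t) ^ (-1 - α) * φ t / t ≤ C * x ^ (-1 - α) := by
    obtain ⟨hlow, hup⟩ :=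
      setIntegral_rpow_add_div_mul_div_mem_Icc hφ hφ0 hp hnorm hx hxa hxb hab
    constructor
    · calc C⁻¹ * x ^ (-1 - α)
          ≤ c * (6 ^ (-1 - α) / 2 * ∫ t in Icc 1 2, φ t) * x ^ (-1 - α) := by gcongr
        _ ≤ _ := by rw [mul_assoc]; gcongr
    · calc _ ≤ c * x ^ (-1 - α) := by gcongr
        _ ≤ C * x ^ (-1 - α) := by gcongr
  refine ⟨C, hC1, fun x y hx hxy hy ↦ ?_⟩
  rw [hq, hq]
  obtain ⟨hxy_low, hxy_up⟩ := bounds x y x hx le_rfl hxy (by linarith)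
  obtain ⟨hyx_low, hyx_up⟩ := bounds y x x hx hxy le_rfl (by linarith)
  exact ⟨hxy_low, hxy_up, hyx_low, hyx_up⟩
end
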